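/- arXiv:0912.3946 — 10 statements merged into one kernel-verified Lean document; each statement's English description precedes it below -/
import Mathlib

section
/- Let (𝒢,m) be a weighted graph, let ν > 1 be a real number, and let C > 0. Then the discrete L¹ Sobolev inequality of order ν holds with constant C, namely (∑_{i∈𝒱} |f(i)|^{ν/(ν−1)} m(i))^{(ν−1)/ν} ≤ C ∑_{{i,j}∈ℰ} |f(i)−f(j)| m(i,j) for every f : 𝒱 → ℝ with ∑_{i∈𝒱} |f(i)| m(i) < ∞, if and only if the isoperimetric inequality of order ν holds with the same constant, namely m(Ω)^{(ν−1)/ν} ≤ C m(∂Ω) for every subset Ω ⊆ 𝒱 with m(Ω) < ∞. -/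
open ENNReal

/-- The function `{i,j} ↦ |f(i) - f(j)|` on unordered pairs, valued in `ℝ≥0∞`. -/
noncomputable def edgeAbsDiff {V : Type*} (f : V → ℝ) : Sym2 V → ℝ≥0∞ :=
  Sym2.lift ⟨fun i j => ENNReal.ofReal |f i - f j|, fun i j => by simp only []; rw [abs_sub_comm]⟩

open MeasureTheory Set

-- L1: tsum over subtype equality
lemma tsum_sub_eq {γ : Type*} {A B : Set γ} (hAB : A ⊆ B) (h : γ → ℝ≥0∞)
    (hsupp : ∀ x ∈ B, x ∉ A → h x = 0) : ∑' x : B, h x = ∑' x : A, h x := by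
  rw [tsum_subtype, tsum_subtype]
  congr 1; ext x
  by_cases hx : x ∈ A
  · rw [Set.indicator_of_mem hx, Set.indicator_of_mem (hAB hx)]
  · rw [Set.indicator_of_notMem hx]
    by_cases hxB : x ∈ B
    · rw [Set.indicator_of_mem hxB]; exact hsupp x hxB hx
    · rw [Set.indicator_of_notMem hxB]

lemma tsum_sub_mono {γ : Type*} {A B : Set γ} (hAB : A ⊆ B) (h : γ → ℝ≥0∞) :
    ∑' x : A, h x ≤ ∑' x : B, h x := by
  rw [tsum_subtype, tsum_subtype]
  exact Summable.tsum_le_tsum (fun x => Set.indicator_le_indicator_of_subset hAB (fun _ => zero_le) x)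
    ENNReal.summable ENNReal.summable

-- Hölder for weighted tsums
lemma tsum_holder {ι : Type*} [Countable ι] (w f g : ι → ℝ≥0∞) {p q : ℝ}
    (hpq : Real.HolderConjugate p q) :
    ∑' i, f i * g i * w i ≤ (∑' i, f i ^ p * w i) ^ (1/p) * (∑' i, g i ^ q * w i) ^ (1/q) := by
  letI : MeasurableSpace ι := ⊤
  haveI : MeasurableSingletonClass ι := ⟨fun _ => trivial⟩
  set μ : Measure ι := Measure.sum (fun i => w i • Measure.dirac i) with hμdef
  have hμ : ∀ h : ι → ℝ≥0∞, ∫⁻ i, h i ∂μ = ∑' i, h i * w i := by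
    intro h
    rw [hμdef, lintegral_sum_measure]
    congr 1; ext i
    rw [lintegral_smul_measure, lintegral_dirac, smul_eq_mul, mul_comm]
  have := ENNReal.lintegral_mul_le_Lp_mul_Lq μ hpq
    (measurable_from_top (f := f)).aemeasurable (measurable_from_top (f := g)).aemeasurable
  rw [hμ, hμ, hμ] at this
  exact le_trans (le_of_eq (by simp [Pi.mul_apply])) this

-- x^p = x * x^(p-1)
lemma rpow_split (x : ℝ≥0∞) {p : ℝ} (hp : 1 < p) : x ^ p = x * x ^ (p-1) := by
  rcases eq_or_ne x 0 with rfl | hx0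
  · rw [ENNReal.zero_rpow_of_pos (by linarith), ENNReal.zero_rpow_of_pos (by linarith), zero_mul]
  rcases eq_or_ne x ⊤ with rfl | hxt
  · rw [ENNReal.top_rpow_of_pos (by linarith), ENNReal.top_rpow_of_pos (by linarith),
      ENNReal.top_mul_top]
  · rw [show p = 1 + (p-1) by ring, ENNReal.rpow_add _ _ hx0 hxt, ENNReal.rpow_one]
    ring_nf

lemma mink_core {ι : Type*} [Countable ι] (w : ι → ℝ≥0∞) (hw : ∀ i, w i ≠ ⊤)
    (H : ι → ℝ → ℝ≥0∞) (hH : ∀ i, Measurable (H i)) {p q : ℝ}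
    (hpq : Real.HolderConjugate p q) :
    (∑' i, (∫⁻ t in Set.Ioi (0:ℝ), H i t) ^ p * w i) ^ (1/p)
      ≤ ∫⁻ t in Set.Ioi (0:ℝ), (∑' i, H i t ^ p * w i) ^ (1/p) := by
  set Φ : ι → ℝ≥0∞ := fun i => ∫⁻ t in Set.Ioi (0:ℝ), H i t with hΦ
  set B : ℝ≥0∞ := ∫⁻ t in Set.Ioi (0:ℝ), (∑' i, H i t ^ p * w i) ^ (1/p) with hB
  have hp1 : 1 < p := hpq.lt
  have hp0 : 0 < p := by linarith
  have hinvp : 0 < 1/p := by positivity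
  -- single-term bound : (Φ i ^ p * w i) ^ (1/p) ≤ B
  have hsingle : ∀ i, (Φ i ^ p * w i) ^ (1/p) ≤ B := by
    intro i
    have h1 : (Φ i ^ p * w i) ^ (1/p) = Φ i * (w i) ^ (1/p) := by
      rw [ENNReal.mul_rpow_of_nonneg _ _ (le_of_lt hinvp), ← ENNReal.rpow_mul,
        mul_one_div_cancel (ne_of_gt hp0), ENNReal.rpow_one]
    rw [h1, hΦ, ← lintegral_mul_const' _ _ (by
      exact ENNReal.rpow_ne_top_of_nonneg (le_of_lt hinvp) (hw i))]
    apply lintegral_mono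
    intro t
    calc H i t * w i ^ (1/p) = (H i t ^ p * w i) ^ (1/p) := by
          rw [ENNReal.mul_rpow_of_nonneg _ _ (le_of_lt hinvp), ← ENNReal.rpow_mul,
            mul_one_div_cancel (ne_of_gt hp0), ENNReal.rpow_one]
      _ ≤ (∑' j, H j t ^ p * w j) ^ (1/p) := by
          apply ENNReal.rpow_le_rpow _ (le_of_lt hinvp)
          exact ENNReal.le_tsum i
  -- core step with finiteness
  have hcore : ∀ Ψ : ι → ℝ≥0∞, (∀ i, Ψ i ≤ Φ i) → (∑' i, Ψ i ^ p * w i) ≠ ⊤ →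
      (∑' i, Ψ i ^ p * w i) ^ (1/p) ≤ B := by
    intro Ψ hΨ hA
    set A : ℝ≥0∞ := ∑' i, Ψ i ^ p * w i with hAdef
    rcases eq_or_ne A 0 with h0 | h0
    · rw [h0, ENNReal.zero_rpow_of_pos hinvp]; exact zero_le
    have hkey : A ≤ B * A ^ (1/q) := by
      have step1 : A ≤ ∑' i, ∫⁻ t in Set.Ioi (0:ℝ), H i t * (Ψ i ^ (p-1) * w i) := by
        rw [hAdef]
        apply Summable.tsum_le_tsum _ ENNReal.summable ENNReal.summable
        intro i
        have hc : Ψ i ^ (p-1) * w i ≠ ⊤ := by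
          rcases eq_or_ne (Ψ i) ⊤ with ht | ht
          · rcases eq_or_ne (w i) 0 with h0' | h0'
            · rw [ht, h0', mul_zero]; exact ENNReal.zero_ne_top
            · exfalso; apply hA
              have hle := ENNReal.le_tsum (f := fun i => Ψ i ^ p * w i) i
              rw [ht, ENNReal.top_rpow_of_pos hp0, ENNReal.top_mul h0'] at hle
              exact top_le_iff.mp hle
          · exact ENNReal.mul_ne_top (ENNReal.rpow_ne_top_of_nonneg (by linarith) ht) (hw i)
        rw [lintegral_mul_const' _ _ hc]
        calc Ψ i ^ p * w i = Ψ i * (Ψ i ^ (p-1) * w i) := by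
              rw [← mul_assoc, ← rpow_split _ hp1]
          _ ≤ Φ i * (Ψ i ^ (p-1) * w i) := by
              exact mul_le_mul_left (hΨ i) _
      have step2 : (∑' i, ∫⁻ t in Set.Ioi (0:ℝ), H i t * (Ψ i ^ (p-1) * w i))
          = ∫⁻ t in Set.Ioi (0:ℝ), ∑' i, H i t * (Ψ i ^ (p-1) * w i) := by
        rw [lintegral_tsum]
        intro i
        exact ((hH i).mul_const _).aemeasurable
      have step3 : ∫⁻ t in Set.Ioi (0:ℝ), ∑' i, H i t * (Ψ i ^ (p-1) * w i)
          ≤ ∫⁻ t in Set.Ioi (0:ℝ), (∑' i, H i t ^ p * w i) ^ (1/p) * A ^ (1/q) := by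
        apply lintegral_mono
        intro t
        calc ∑' i, H i t * (Ψ i ^ (p-1) * w i) = ∑' i, H i t * Ψ i ^ (p-1) * w i :=
              tsum_congr fun i => by ring
          _ ≤ (∑' i, H i t ^ p * w i) ^ (1/p) * (∑' i, (Ψ i ^ (p-1)) ^ q * w i) ^ (1/q) :=
              tsum_holder w _ _ hpq
          _ = (∑' i, H i t ^ p * w i) ^ (1/p) * A ^ (1/q) := by
              rw [hAdef]
              congr 2
              exact tsum_congr fun i => by
                rw [← ENNReal.rpow_mul, hpq.sub_one_mul_conj]
      have step4 : ∫⁻ t in Set.Ioi (0:ℝ), (∑' i, H i t ^ p * w i) ^ (1/p) * A ^ (1/q)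
          = B * A ^ (1/q) := by
        rw [hB, lintegral_mul_const' _ _ (ENNReal.rpow_ne_top_of_nonneg hpq.symm.one_div_nonneg hA)]
      calc A ≤ _ := step1
        _ = _ := step2
        _ ≤ _ := step3
        _ = _ := step4
    -- cancel
    have hAq : A ^ (1/q) ≠ 0 := by
      simp only [ne_eq, ENNReal.rpow_eq_zero_iff]
      push_neg
      constructor
      · intro h; exact absurd h h0
      · intro h; exact absurd h hA
    have hAq' : A ^ (1/q) ≠ ⊤ := ENNReal.rpow_ne_top_of_nonneg hpq.symm.one_div_nonneg hA
    have : A ^ (1/p) * A ^ (1/q) ≤ B * A ^ (1/q) := by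
      rw [← ENNReal.rpow_add _ _ h0 hA, one_div, one_div, hpq.inv_add_inv_eq_one,
        ENNReal.rpow_one]
      simpa [one_div] using hkey
    exact (ENNReal.mul_le_mul_iff_left hAq hAq').mp this
  by_cases hfin : ∀ i, Φ i ^ p * w i ≠ ⊤
  · have hBp : ∀ s : Finset ι, (∑ i ∈ s, Φ i ^ p * w i) ≤ B ^ p := by
      intro s
      have hXs : (∑ i ∈ s, Φ i ^ p * w i) ≠ ⊤ := by
        rw [← lt_top_iff_ne_top]
        exact ENNReal.sum_lt_top.mpr (fun i _ => lt_top_iff_ne_top.mpr (hfin i))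
      classical
      set Ψ : ι → ℝ≥0∞ := fun i => if i ∈ s then Φ i else 0 with hΨdef
      have htsum : ∑' i, Ψ i ^ p * w i = ∑ i ∈ s, Φ i ^ p * w i := by
        rw [tsum_eq_sum (s := s) (by
          intro i hi
          simp only [hΨdef, if_neg hi, ENNReal.zero_rpow_of_pos hp0, zero_mul])]
        exact Finset.sum_congr rfl fun i hi => by simp [hΨdef, if_pos hi]
      have := hcore Ψ (fun i => by
        by_cases hi : i ∈ s <;> simp [hΨdef, hi]) (htsum ▸ hXs)
      rw [htsum] at this
      calc (∑ i ∈ s, Φ i ^ p * w i)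
          = ((∑ i ∈ s, Φ i ^ p * w i) ^ (1/p)) ^ p := by
            rw [← ENNReal.rpow_mul, one_div, inv_mul_cancel₀ (ne_of_gt hp0),
              ENNReal.rpow_one]
        _ ≤ B ^ p := ENNReal.rpow_le_rpow this (le_of_lt hp0)
    have hfull : (∑' i, Φ i ^ p * w i) ≤ B ^ p := by
      rw [ENNReal.tsum_eq_iSup_sum]
      exact iSup_le hBp
    calc (∑' i, Φ i ^ p * w i) ^ (1/p) ≤ (B ^ p) ^ (1/p) :=
          ENNReal.rpow_le_rpow hfull (le_of_lt hinvp)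
      _ = B := by
          rw [← ENNReal.rpow_mul, mul_one_div_cancel (ne_of_gt hp0), ENNReal.rpow_one]
  · push_neg at hfin
    obtain ⟨i, hi⟩ := hfin
    have : (⊤ : ℝ≥0∞) ≤ B := by
      have := hsingle i
      rw [hi, ENNReal.top_rpow_of_pos hinvp] at this
      exact this
    exact le_trans le_top this



/-- For a weighted graph `(𝒢,m)`, `ν > 1` and `C > 0`, the discrete `L¹` Sobolev
inequality of order `ν` with constant `C` holds for all `f` with `∑ |f(i)| m(i) < ∞`
iff the isoperimetric inequality of order `ν` with constant `C` holds for all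
`Ω ⊆ 𝒱` with `m(Ω) < ∞`.  All sums are taken in `ℝ≥0∞`. -/
theorem stmt0 {V : Type*} (E : Set (Sym2 V)) (hE : ∀ e ∈ E, ¬ e.IsDiag)
    (m : V → ℝ≥0∞) (mE : Sym2 V → ℝ≥0∞)
    (hm : ∀ i, 0 < m i) (hm' : ∀ i, m i < ⊤)
    (hmE : ∀ e ∈ E, 0 < mE e) (hmE' : ∀ e ∈ E, mE e < ⊤)
    (ν : ℝ) (hν : 1 < ν) (C : ℝ) (hC : 0 < C) :
    (∀ f : V → ℝ, (∑' i, ENNReal.ofReal |f i| * m i) < ⊤ →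
        (∑' i, ENNReal.ofReal (|f i| ^ (ν / (ν - 1))) * m i) ^ ((ν - 1) / ν)
          ≤ ENNReal.ofReal C * ∑' e : E, edgeAbsDiff f e * mE e)
      ↔
    (∀ Ω : Set V, (∑' i : Ω, m i) < ⊤ →
        (∑' i : Ω, m i) ^ ((ν - 1) / ν)
          ≤ ENNReal.ofReal C *
              ∑' e : {e : Sym2 V | e ∈ E ∧ (∃ i ∈ e, i ∈ Ω) ∧ ∃ j ∈ e, j ∉ Ω}, mE e) := by
  have hν0 : (0:ℝ) < ν := by linarith
  have hν1 : (0:ℝ) < ν - 1 := by linarith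
  set p : ℝ := ν / (ν - 1) with hpdef
  have hp1 : 1 < p := (one_lt_div hν1).mpr (by linarith)
  have hp0 : 0 < p := by linarith
  have hexp : (ν - 1) / ν = 1 / p := by
    rw [hpdef]; field_simp
  have hpq : p.HolderConjugate ν := Real.holderConjugate_iff.mpr ⟨hp1, by rw [hpdef]; field_simp; ring⟩
  constructor
  · -- Sobolev → isoperimetric
    intro hS Ω hΩ
    classical
    set f : V → ℝ := Ω.indicator (fun _ => 1) with hfdef
    have hind : ∀ i, ENNReal.ofReal |f i| * m i = Ω.indicator m i := by
      intro i
      by_cases hi : i ∈ Ω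
      · simp [hfdef, Set.indicator_of_mem hi]
      · simp [hfdef, Set.indicator_of_notMem hi]
    have h1 : (∑' i, ENNReal.ofReal |f i| * m i) = ∑' i : Ω, m i := by
      rw [tsum_subtype]
      exact tsum_congr hind
    have h2 : (∑' i, ENNReal.ofReal (|f i| ^ p) * m i) = ∑' i : Ω, m i := by
      rw [tsum_subtype]
      refine tsum_congr fun i => ?_
      by_cases hi : i ∈ Ω
      · simp [hfdef, Set.indicator_of_mem hi]
      · simp [hfdef, Set.indicator_of_notMem hi, Real.zero_rpow (ne_of_gt hp0)]
    set BΩ : Set (Sym2 V) := {e | e ∈ E ∧ (∃ i ∈ e, i ∈ Ω) ∧ ∃ j ∈ e, j ∉ Ω} with hBΩ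
    have h3 : (∑' e : E, edgeAbsDiff f e * mE e) = ∑' e : BΩ, mE e := by
      have hBsub : BΩ ⊆ E := fun e he => he.1
      have hptw : ∀ e ∈ E, edgeAbsDiff f e * mE e = BΩ.indicator mE e := by
        intro e heE
        induction e using Sym2.ind with
        | _ x y =>
          have hmem : s(x,y) ∈ BΩ ↔ (x ∈ Ω ∨ y ∈ Ω) ∧ (x ∉ Ω ∨ y ∉ Ω) := by
            simp [hBΩ, heE, Sym2.mem_iff]
          have hedge : edgeAbsDiff f s(x,y) = ENNReal.ofReal |f x - f y| := rfl
          by_cases hx : x ∈ Ω <;> by_cases hy : y ∈ Ω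
          · rw [Set.indicator_of_notMem (by simp [hmem, hx, hy])]
            rw [hedge]; simp [hfdef, Set.indicator_of_mem hx, Set.indicator_of_mem hy]
          · rw [Set.indicator_of_mem (hmem.mpr ⟨Or.inl hx, Or.inr hy⟩), hedge]
            simp [hfdef, Set.indicator_of_mem hx, Set.indicator_of_notMem hy]
          · rw [Set.indicator_of_mem (hmem.mpr ⟨Or.inr hy, Or.inl hx⟩), hedge]
            simp [hfdef, Set.indicator_of_notMem hx, Set.indicator_of_mem hy]
          · rw [Set.indicator_of_notMem (by simp [hmem, hx, hy])]
            rw [hedge]; simp [hfdef, Set.indicator_of_notMem hx, Set.indicator_of_notMem hy]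
      calc (∑' e : E, edgeAbsDiff f e * mE e) = ∑' e : E, BΩ.indicator mE e :=
            tsum_congr fun e => hptw e e.2
        _ = ∑' e : BΩ, BΩ.indicator mE e := by
            refine tsum_sub_eq hBsub _ fun e heE heB => Set.indicator_of_notMem heB _
        _ = ∑' e : BΩ, mE e := tsum_congr fun e => Set.indicator_of_mem e.2 _
    have := hS f (h1 ▸ hΩ)
    rw [h2, h3] at this
    exact this
  · -- isoperimetric → Sobolev
    intro hIso f hf
    classical
    by_cases hT : (∑' e : E, edgeAbsDiff f e * mE e) = ⊤
    · rw [hT, ENNReal.mul_top (ne_of_gt (ENNReal.ofReal_pos.mpr hC))]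
      exact le_top
    set g : V → ℝ := fun x => |f x| with hgdef
    have hg0 : ∀ x, 0 ≤ g x := fun x => abs_nonneg _
    -- countable support
    set S : Set V := {x | f x ≠ 0} with hSdef
    have hSc : S.Countable := by
      refine (Summable.countable_support_ennreal hf.ne).mono ?_
      intro x hx
      simp only [Function.mem_support, ne_eq, mul_eq_zero, not_or] at *
      refine ⟨?_, ne_of_gt (hm x)⟩
      simpa [hSdef, ENNReal.ofReal_eq_zero, abs_nonneg, not_le, abs_pos] using hx
    haveI : Countable ↥S := hSc.to_subtype
    -- countable crossing edges
    set E₀ : Set (Sym2 V) := {e | e ∈ E ∧ edgeAbsDiff f e * mE e ≠ 0} with hE₀def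
    have hE₀sub : E₀ ⊆ E := fun e he => he.1
    have hE₀c : E₀.Countable := by
      have hc := Summable.countable_support_ennreal (f := fun e : E => edgeAbsDiff f e * mE e) hT
      refine ((hc.image Subtype.val)).mono ?_
      rintro e ⟨heE, hne⟩
      exact ⟨⟨e, heE⟩, hne, rfl⟩
    haveI : Countable ↥E₀ := hE₀c.to_subtype
    -- the layer functions
    set H : ↥S → ℝ → ℝ≥0∞ := fun i => (Set.Ioo (0:ℝ) (g i.1)).indicator (fun _ => 1) with hHdef
    have hH : ∀ i, Measurable (H i) := fun i => measurable_const.indicator measurableSet_Ioo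
    have hΦ : ∀ i : ↥S, (∫⁻ t in Set.Ioi (0:ℝ), H i t) = ENNReal.ofReal (g i.1) := by
      intro i
      rw [hHdef, lintegral_indicator measurableSet_Ioo,
        setLIntegral_one, Measure.restrict_apply measurableSet_Ioo,
        Set.inter_eq_self_of_subset_left Set.Ioo_subset_Ioi_self,
        Real.volume_Ioo, sub_zero]
    -- left side rewriting
    have hL : (∑' i, ENNReal.ofReal (|f i| ^ p) * m i)
        = ∑' i : ↥S, (∫⁻ t in Set.Ioi (0:ℝ), H i t) ^ p * m i.1 := by
      rw [← tsum_subtype_eq_of_support_subset (s := S) (by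
        intro x hx
        simp only [Function.mem_support, ne_eq, mul_eq_zero, not_or] at hx
        obtain ⟨hx1, -⟩ := hx
        simp only [hSdef, Set.mem_setOf_eq]
        intro hfx
        exact hx1 (by simp [hfx, Real.zero_rpow (ne_of_gt hp0)]))]
      refine tsum_congr fun i => ?_
      rw [hΦ i, ← ENNReal.ofReal_rpow_of_nonneg (hg0 i.1) (le_of_lt hp0)]
    -- crossing function per edge
    set cross : Sym2 V → ℝ → ℝ≥0∞ := fun (e : Sym2 V) (t : ℝ) =>
      if (∃ i ∈ e, t < g i) ∧ (∃ j ∈ e, ¬ t < g j) then mE e else 0 with hcrossdef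
    have hcrossMeas : ∀ e : Sym2 V, MeasurableSet {t : ℝ | (∃ i ∈ e, t < g i) ∧ (∃ j ∈ e, ¬ t < g j)} := by
      intro e
      induction e using Sym2.ind with
      | _ x y =>
        have : {t : ℝ | (∃ i ∈ s(x,y), t < g i) ∧ (∃ j ∈ s(x,y), ¬ t < g j)}
            = (Set.Iio (g x) ∪ Set.Iio (g y)) ∩ ((Set.Iio (g x))ᶜ ∪ (Set.Iio (g y))ᶜ) := by
          ext t
          simp only [Set.mem_setOf_eq, Sym2.mem_iff, Set.mem_inter_iff, Set.mem_union,
            Set.mem_compl_iff, Set.mem_Iio]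
          aesop
        rw [this]
        exact ((measurableSet_Iio.union measurableSet_Iio).inter
          ((measurableSet_Iio.compl).union (measurableSet_Iio.compl)))
    -- the pointwise isoperimetric bound inside the integral
    have hptw : ∀ t ∈ Set.Ioi (0:ℝ),
        (∑' i : ↥S, H i t ^ p * m i.1) ^ (1/p)
          ≤ ENNReal.ofReal C * ∑' e : ↥E₀, cross e t := by
      intro t ht
      simp only [Set.mem_Ioi] at ht
      set Ω : Set V := {x | t < g x} with hΩdef
      have hΩS : Ω ⊆ S := by
        intro x hx
        simp only [hΩdef, Set.mem_setOf_eq] at hx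
        simp only [hSdef, Set.mem_setOf_eq]
        intro hfx
        rw [hgdef] at hx
        simp [hfx] at hx
        linarith
      have hmΩeq : (∑' i : ↥S, H i t ^ p * m i.1) = ∑' x : Ω, m x := by
        have : ∀ i : ↥S, H i t ^ p * m i.1 = Ω.indicator m i.1 := by
          intro i
          by_cases hi : i.1 ∈ Ω
          · have htlt : t < g i.1 := hi
            rw [Set.indicator_of_mem hi, hHdef]
            simp only []
            rw [Set.indicator_of_mem (Set.mem_Ioo.mpr ⟨ht, htlt⟩), ENNReal.one_rpow, one_mul]
          · have htge : ¬ t < g i.1 := hi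
            rw [Set.indicator_of_notMem hi, hHdef]
            simp only []
            rw [Set.indicator_of_notMem (by simp [Set.mem_Ioo]; intro _; exact le_of_not_gt htge),
              ENNReal.zero_rpow_of_pos hp0, zero_mul]
        rw [tsum_congr this, tsum_sub_eq hΩS (Ω.indicator m)
          (fun x _ hx => Set.indicator_of_notMem hx _)]
        exact tsum_congr fun x => Set.indicator_of_mem x.2 _
      -- Markov: finiteness
      have hfin : (∑' x : Ω, m x) < ⊤ := by
        by_contra hcon
        push_neg at hcon
        have htop : (∑' x : Ω, m x) = ⊤ := top_le_iff.mp hcon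
        have hmark : ENNReal.ofReal t * ∑' x : Ω, m x ≤ ∑' i, ENNReal.ofReal |f i| * m i := by
          rw [tsum_subtype, ← ENNReal.tsum_mul_left]
          refine Summable.tsum_le_tsum (fun x => ?_) ENNReal.summable ENNReal.summable
          by_cases hx : x ∈ Ω
          · rw [Set.indicator_of_mem hx]
            have : t ≤ |f x| := le_of_lt hx
            exact mul_le_mul_left (ENNReal.ofReal_le_ofReal this) _
          · rw [Set.indicator_of_notMem hx, mul_zero]
            exact zero_le
        rw [htop, ENNReal.mul_top (ne_of_gt (ENNReal.ofReal_pos.mpr ht))] at hmark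
        exact absurd hf (by simp [top_le_iff.mp hmark])
      have hiso := hIso Ω hfin
      rw [hexp] at hiso
      set BΩ : Set (Sym2 V) := {e | e ∈ E ∧ (∃ i ∈ e, i ∈ Ω) ∧ ∃ j ∈ e, j ∉ Ω} with hBΩdef
      have hBΩE₀ : BΩ ⊆ E₀ := by
        rintro e ⟨heE, hein, heout⟩
        refine ⟨heE, ?_⟩
        induction e using Sym2.ind with
        | _ x y =>
          simp only [Sym2.mem_iff] at hein heout
          obtain ⟨a, ha, haΩ⟩ := hein
          obtain ⟨b, hb, hbΩ⟩ := heout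
          have hfxy : f x ≠ f y := by
            intro hcon
            have hgxy : g x = g y := by rw [hgdef]; simp [hcon]
            have haΩ' : t < g a := haΩ
            have hbΩ' : ¬ t < g b := hbΩ
            have hax : t < g x := by
              rcases ha with rfl | rfl
              · exact haΩ'
              · rw [hgxy]; exact haΩ'
            have hbx : ¬ t < g x := by
              rcases hb with rfl | rfl
              · exact hbΩ'
              · rw [hgxy]; exact hbΩ'
            exact hbx hax
          have : edgeAbsDiff f s(x,y) = ENNReal.ofReal |f x - f y| := rfl
          rw [this]
          simp only [ne_eq, mul_eq_zero, not_or]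
          constructor
          · simp only [ENNReal.ofReal_eq_zero, not_le, abs_pos]
            exact sub_ne_zero_of_ne hfxy
          · exact ne_of_gt (hmE _ heE)
      have hbd : (∑' e : ↥BΩ, mE e) ≤ ∑' e : ↥E₀, cross e t := by
        have heq : (∑' e : ↥BΩ, mE e) = ∑' e : ↥E₀, BΩ.indicator mE e := by
          rw [tsum_sub_eq hBΩE₀ (BΩ.indicator mE) (fun e _ he => Set.indicator_of_notMem he _)]
          exact (tsum_congr fun e => (Set.indicator_of_mem e.2 _).symm)
        rw [heq]
        refine Summable.tsum_le_tsum (fun e => ?_) ENNReal.summable ENNReal.summable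
        by_cases he : e.1 ∈ BΩ
        · rw [Set.indicator_of_mem he, hcrossdef]
          simp only []
          rw [if_pos ⟨he.2.1, he.2.2⟩]
        · rw [Set.indicator_of_notMem he]
          exact zero_le
      rw [hmΩeq]
      calc (∑' x : Ω, m x) ^ (1/p) ≤ ENNReal.ofReal C * ∑' e : ↥BΩ, mE e := hiso
        _ ≤ ENNReal.ofReal C * ∑' e : ↥E₀, cross e t := mul_le_mul_right hbd _
    -- per-edge integral bound
    have hedge : ∀ e : ↥E₀, (∫⁻ t in Set.Ioi (0:ℝ), cross e.1 t)
        ≤ edgeAbsDiff f e.1 * mE e.1 := by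
      rintro ⟨e, heE₀⟩
      induction e using Sym2.ind with
      | _ x y =>
        have hrw : (fun t => cross s(x,y) t) =
            ({t : ℝ | (∃ i ∈ s(x,y), t < g i) ∧ (∃ j ∈ s(x,y), ¬ t < g j)}).indicator
              (fun _ => mE s(x,y)) := by
          ext t
          rw [hcrossdef]
          simp only [Set.indicator_apply, Set.mem_setOf_eq]
        rw [hrw, lintegral_indicator (hcrossMeas s(x,y)), setLIntegral_const,
          Measure.restrict_apply (hcrossMeas s(x,y))]
        have hsub : {t : ℝ | (∃ i ∈ s(x,y), t < g i) ∧ (∃ j ∈ s(x,y), ¬ t < g j)} ∩ Set.Ioi 0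
            ⊆ Set.Ico (min (g x) (g y)) (max (g x) (g y)) := by
          rintro t ⟨⟨⟨a, ha, halt⟩, ⟨b, hb, hble⟩⟩, -⟩
          simp only [Sym2.mem_iff] at ha hb
          constructor
          · rcases hb with rfl | rfl
            · exact le_trans (min_le_left _ _) (le_of_not_gt hble)
            · exact le_trans (min_le_right _ _) (le_of_not_gt hble)
          · rcases ha with rfl | rfl
            · exact lt_of_lt_of_le halt (le_max_left _ _)
            · exact lt_of_lt_of_le halt (le_max_right _ _)
        calc mE s(x,y) * volume ({t : ℝ | (∃ i ∈ s(x,y), t < g i) ∧ (∃ j ∈ s(x,y), ¬ t < g j)}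
              ∩ Set.Ioi 0)
            ≤ mE s(x,y) * volume (Set.Ico (min (g x) (g y)) (max (g x) (g y))) :=
              mul_le_mul_right (measure_mono hsub) _
          _ ≤ edgeAbsDiff f s(x,y) * mE s(x,y) := by
              rw [Real.volume_Ico, mul_comm]
              refine mul_le_mul_left ?_ _
              have h1 : max (g x) (g y) - min (g x) (g y) = |g x - g y| := by
                rw [max_sub_min_eq_abs]
                try exact abs_sub_comm _ _
              rw [h1]
              have : edgeAbsDiff f s(x,y) = ENNReal.ofReal |f x - f y| := rfl
              rw [this]
              exact ENNReal.ofReal_le_ofReal (by rw [hgdef]; exact abs_abs_sub_abs_le_abs_sub _ _)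
    -- assemble
    rw [hexp, hL]
    calc (∑' i : ↥S, (∫⁻ t in Set.Ioi (0:ℝ), H i t) ^ p * m i.1) ^ (1/p)
        ≤ ∫⁻ t in Set.Ioi (0:ℝ), (∑' i : ↥S, H i t ^ p * m i.1) ^ (1/p) :=
          mink_core (fun i : ↥S => m i.1) (fun i => (hm' i.1).ne) H hH hpq
      _ ≤ ∫⁻ t in Set.Ioi (0:ℝ), ENNReal.ofReal C * ∑' e : ↥E₀, cross e t := by
          refine lintegral_mono_ae ?_
          filter_upwards [ae_restrict_mem measurableSet_Ioi] with t ht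
          exact hptw t ht
      _ = ENNReal.ofReal C * ∑' e : ↥E₀, ∫⁻ t in Set.Ioi (0:ℝ), cross e.1 t := by
          rw [lintegral_const_mul' _ _ ENNReal.ofReal_ne_top, lintegral_tsum]
          intro e
          have hrw : (fun t => cross e.1 t)
              = ({t : ℝ | (∃ i ∈ e.1, t < g i) ∧ (∃ j ∈ e.1, ¬ t < g j)}).indicator
                (fun _ => mE e.1) := by
            ext t
            rw [hcrossdef]
            simp only [Set.indicator_apply, Set.mem_setOf_eq]
          have : Measurable (cross e.1) := by
            rw [show cross e.1 = fun t => cross e.1 t from rfl, hrw]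
            exact measurable_const.indicator (hcrossMeas e.1)
          exact this.aemeasurable
      _ ≤ ENNReal.ofReal C * ∑' e : ↥E₀, edgeAbsDiff f e.1 * mE e.1 := by
          refine mul_le_mul_right (Summable.tsum_le_tsum hedge ENNReal.summable ENNReal.summable) _
      _ ≤ ENNReal.ofReal C * ∑' e : E, edgeAbsDiff f e * mE e := by
          exact mul_le_mul_right
            (tsum_sub_mono hE₀sub (fun e => edgeAbsDiff f e * mE e)) _
end

section
/- Let (X,d) be a metric space, let μ be a Borel measure on X, let o ∈ X, and let n > 0, ε ∈ (0,1], C₁ > 0, C_o > 0, c > 0 be constants. Assume: (i) μ(B(x,2r)) ≤ C₁ μ(B(x,r)) for every x ∈ X and every r with 0 < r ≤ (ε/2) d(o,x) (volume doubling for remote balls); (ii) μ(B(o,r)) ≤ C_o rⁿ for every r > 0; (iii) μ(B(x,r)) ≥ c rⁿ for every x ∈ X and r > 0. Then μ satisfies the volume doubling condition: for every x ∈ X and every r > 0, μ(B(x,2r)) ≤ C_D μ(B(x,r)), where one may take C_D = max(C₁, (8/3)ⁿ C_o/c, (16/ε)ⁿ C_o/c). -/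
open MeasureTheory Metric

/-- If a Borel measure on a metric space satisfies volume doubling for remote balls
(balls `B(x,r)` with `r ≤ (ε/2) d(o,x)`), an upper volume bound `μ(B(o,r)) ≤ C_o rⁿ`
on anchored balls and a uniform lower volume bound `μ(B(x,r)) ≥ c rⁿ`, then it satisfies
the volume doubling condition for all balls with constant
`C_D = max(C₁, (8/3)ⁿ C_o/c, (16/ε)ⁿ C_o/c)`. -/
theorem stmt3 {X : Type*} [MetricSpace X] [MeasurableSpace X] [BorelSpace X]
    (μ : Measure X) (o : X) (n ε C₁ Co c : ℝ)
    (hn : 0 < n) (hε : ε ∈ Set.Ioc (0 : ℝ) 1) (hC₁ : 0 < C₁) (hCo : 0 < Co) (hc : 0 < c)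
    (hremote : ∀ x : X, ∀ r : ℝ, 0 < r → r ≤ ε / 2 * dist o x →
      μ (ball x (2 * r)) ≤ ENNReal.ofReal C₁ * μ (ball x r))
    (hanch : ∀ r : ℝ, 0 < r → μ (ball o r) ≤ ENNReal.ofReal (Co * r ^ n))
    (hlow : ∀ x : X, ∀ r : ℝ, 0 < r → ENNReal.ofReal (c * r ^ n) ≤ μ (ball x r)) :
    ∀ x : X, ∀ r : ℝ, 0 < r →
      μ (ball x (2 * r))
        ≤ ENNReal.ofReal (max C₁ (max ((8 / 3) ^ n * Co / c) ((16 / ε) ^ n * Co / c)))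
            * μ (ball x r) := by

  intro x r hr
  obtain ⟨hε0, hε1⟩ := hε
  set M := max C₁ (max ((8 / 3) ^ n * Co / c) ((16 / ε) ^ n * Co / c)) with hM
  by_cases hcase : r ≤ ε / 2 * dist o x
  · calc μ (ball x (2 * r)) ≤ ENNReal.ofReal C₁ * μ (ball x r) := hremote x r hr hcase
      _ ≤ ENNReal.ofReal M * μ (ball x r) := by
          gcongr
          exact le_max_left _ _
  · push_neg at hcase
    have hdo : dist o x < 2 / ε * r := by
      rw [div_mul_eq_mul_div, lt_div_iff₀ hε0]
      nlinarith [hcase, dist_nonneg (x := o) (y := x)]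
    have hsub : ball x (2 * r) ⊆ ball o (4 / ε * r) := by
      intro y hy
      simp only [mem_ball] at hy ⊢
      have h1 : dist y o ≤ dist y x + dist x o := dist_triangle y x o
      have h3 : 2 * r ≤ 2 / ε * r := by
        have h5 : (2:ℝ) ≤ 2 / ε := by
          rw [le_div_iff₀ hε0]; nlinarith
        nlinarith
      have h4 : 4 / ε * r = 2 / ε * r + 2 / ε * r := by ring
      have := dist_comm x o
      linarith [hy, hdo]
    have hR : (0:ℝ) < 4 / ε * r := by positivity
    have key : μ (ball x (2 * r)) ≤ ENNReal.ofReal (Co * (4 / ε * r) ^ n) :=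
      le_trans (measure_mono hsub) (hanch _ hR)
    have hpow : Co * (4 / ε * r) ^ n ≤ ((16 / ε) ^ n * Co / c) * (c * r ^ n) := by
      have hbase : (4:ℝ) / ε * r ≤ 16 / ε * r := by
        apply mul_le_mul_of_nonneg_right _ hr.le
        gcongr
        norm_num
      have h1 : (4 / ε * r) ^ n ≤ (16 / ε * r) ^ n :=
        Real.rpow_le_rpow (by positivity) hbase hn.le
      have h2 : (16 / ε * r) ^ n = (16 / ε) ^ n * r ^ n :=
        Real.mul_rpow (by positivity) hr.le
      have h3 : ((16 / ε) ^ n * Co / c) * (c * r ^ n) = Co * ((16 / ε) ^ n * r ^ n) := by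
        field_simp
      rw [h3, ← h2]
      exact mul_le_mul_of_nonneg_left h1 hCo.le
    calc μ (ball x (2 * r)) ≤ ENNReal.ofReal (Co * (4 / ε * r) ^ n) := key
      _ ≤ ENNReal.ofReal (((16 / ε) ^ n * Co / c) * (c * r ^ n)) :=
          ENNReal.ofReal_le_ofReal hpow
      _ = ENNReal.ofReal ((16 / ε) ^ n * Co / c) * ENNReal.ofReal (c * r ^ n) :=
          ENNReal.ofReal_mul (by positivity)
      _ ≤ ENNReal.ofReal M * μ (ball x r) := by
          apply mul_le_mul'
          · exact ENNReal.ofReal_le_ofReal (le_trans (le_max_right _ _) (le_max_right _ _))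
          · exact hlow x r hr
end

section
/- Fix κ > 1, a real number n > 0, and a, b > 0. Consider the weighted graph with vertex set ℕ, edges {i, i+1} for all i ∈ ℕ, vertex weights m(0) = a and m(i) = b κ^{n(i−1)} for i ≥ 1, and edge weights m(i,i+1) = max(m(i), m(i+1)). Then for every finite nonempty subset Ω ⊆ ℕ one has m(Ω) ≤ C m(∂Ω), where C = a/b + 1/(κⁿ − 1). -/
/-- The weighted graph on `ℕ` with edges `{i,i+1}`, vertex weights `m(0) = a`,
`m(i) = b κ^{n(i-1)}` for `i ≥ 1`, and edge weights `m(i,i+1) = max(m(i), m(i+1))`,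
satisfies the isoperimetric inequality `m(Ω) ≤ C m(∂Ω)` for every finite nonempty
`Ω ⊆ ℕ`, with `C = a/b + 1/(κⁿ - 1)`. -/
theorem stmt4 (κ n a b : ℝ) (hκ : 1 < κ) (hn : 0 < n) (ha : 0 < a) (hb : 0 < b)
    (m : ℕ → ℝ) (hm0 : m 0 = a)
    (hmi : ∀ i : ℕ, 1 ≤ i → m i = b * κ ^ (n * ((i : ℝ) - 1))) :
    ∀ Ω : Finset ℕ, Ω.Nonempty →
      (∑ i ∈ Ω, m i)
        ≤ (a / b + 1 / (κ ^ n - 1)) *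
            ∑' e : {i : ℕ | (i ∈ Ω ∧ i + 1 ∉ Ω) ∨ (i ∉ Ω ∧ i + 1 ∈ Ω)},
              max (m (e : ℕ)) (m ((e : ℕ) + 1)) := by
  intro Ω hΩ
  have hκ0 : (0:ℝ) < κ := lt_trans one_pos hκ
  set r : ℝ := κ ^ n with hr_def
  have hr1 : 1 < r := by
    rw [hr_def]
    exact (Real.one_lt_rpow_iff hκ0.le).mpr (Or.inl ⟨hκ, hn⟩)
  have hr0 : (0:ℝ) < r := lt_trans one_pos hr1
  have hr1' : (0:ℝ) < r - 1 := by linarith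
  have hmpos : ∀ i, 0 < m i := by
    intro i
    cases i with
    | zero => rw [hm0]; exact ha
    | succ k =>
      rw [hmi _ (Nat.succ_le_succ (Nat.zero_le k))]
      positivity
  have key : ∀ i : ℕ, m (i+1) = b * r ^ i := by
    intro i
    rw [hmi _ (Nat.succ_le_succ (Nat.zero_le i))]
    congr 1
    rw [hr_def, ← Real.rpow_natCast (κ ^ n) i, ← Real.rpow_mul hκ0.le]
    congr 1
    push_cast
    ring
  set N := Ω.max' hΩ with hN
  have hNmem : N ∈ Ω := Ω.max'_mem hΩ
  have hNle : ∀ i ∈ Ω, i ≤ N := fun i hi => Ω.le_max' i hi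
  -- bound the vertex sum
  have hsub : Ω ⊆ Finset.range (N+1) := by
    intro i hi
    simp only [Finset.mem_range, Nat.lt_succ_iff]
    exact hNle i hi
  have h1 : ∑ i ∈ Ω, m i ≤ ∑ i ∈ Finset.range (N+1), m i :=
    Finset.sum_le_sum_of_subset_of_nonneg hsub (fun i _ _ => (hmpos i).le)
  have h2 : ∑ i ∈ Finset.range (N+1), m i = a + b * ∑ i ∈ Finset.range N, r ^ i := by
    rw [Finset.sum_range_succ', hm0, Finset.mul_sum]
    simp only [key]
    ring
  have hgeom : ∑ i ∈ Finset.range N, r ^ i = (r ^ N - 1) / (r - 1) :=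
    geom_sum_eq (ne_of_gt hr1) N
  have hrN : (1:ℝ) ≤ r ^ N := one_le_pow₀ hr1.le
  have h3 : a + b * ((r ^ N - 1) / (r - 1)) ≤ (a / b + 1 / (r - 1)) * (b * r ^ N) := by
    have expand : (a / b + 1 / (r - 1)) * (b * r ^ N)
        = a * r ^ N + b * r ^ N / (r - 1) := by
      field_simp
    rw [expand]
    have hA : a ≤ a * r ^ N := by nlinarith
    have hB : b * ((r ^ N - 1) / (r - 1)) ≤ b * r ^ N / (r - 1) := by
      rw [← mul_div_assoc]
      gcongr
      nlinarith
    linarith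
  -- the boundary edge at N
  have hS : ({i : ℕ | (i ∈ Ω ∧ i + 1 ∉ Ω) ∨ (i ∉ Ω ∧ i + 1 ∈ Ω)} : Set ℕ).Finite := by
    apply Set.Finite.subset (Set.finite_Iic N)
    intro i hi
    simp only [Set.mem_Iic]
    rcases hi with ⟨h, _⟩ | ⟨_, h⟩
    · exact hNle i h
    · exact Nat.le_of_succ_le (hNle _ h)
  haveI : Finite ({i : ℕ | (i ∈ Ω ∧ i + 1 ∉ Ω) ∨ (i ∉ Ω ∧ i + 1 ∈ Ω)} : Set ℕ) :=
    hS.to_subtype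
  have hsumm : Summable
      (fun e : {i : ℕ | (i ∈ Ω ∧ i + 1 ∉ Ω) ∨ (i ∉ Ω ∧ i + 1 ∈ Ω)} =>
        max (m (e : ℕ)) (m ((e : ℕ) + 1))) := Summable.of_finite
  have hN1 : N + 1 ∉ Ω := fun h => by have := hNle _ h; omega
  have htsum : max (m N) (m (N + 1)) ≤
      ∑' e : {i : ℕ | (i ∈ Ω ∧ i + 1 ∉ Ω) ∨ (i ∉ Ω ∧ i + 1 ∈ Ω)},
        max (m (e : ℕ)) (m ((e : ℕ) + 1)) := by
    exact Summable.le_tsum hsumm ⟨N, Or.inl ⟨hNmem, hN1⟩⟩ (fun j _ => le_max_of_le_left (hmpos _).le)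
  have hedge : b * r ^ N ≤ max (m N) (m (N + 1)) := by
    rw [← key N]
    exact le_max_right _ _
  have hC : 0 < a / b + 1 / (r - 1) := by positivity
  calc ∑ i ∈ Ω, m i ≤ a + b * ((r ^ N - 1) / (r - 1)) := by
        rw [← hgeom, ← h2]; exact h1
    _ ≤ (a / b + 1 / (r - 1)) * (b * r ^ N) := h3
    _ ≤ (a / b + 1 / (r - 1)) *
          ∑' e : {i : ℕ | (i ∈ Ω ∧ i + 1 ∉ Ω) ∨ (i ∉ Ω ∧ i + 1 ∈ Ω)},
            max (m (e : ℕ)) (m ((e : ℕ) + 1)) :=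
        mul_le_mul_of_nonneg_left (le_trans hedge htsum) hC.le
end

section
/- Fix κ > 1, a real number n > 0, a, b > 0, and an integer N ≥ 1. Consider the weighted path graph with vertex set 𝒱 = {0, 1, …, N}, edges {i, i+1} for 0 ≤ i ≤ N−1, vertex weights m(0) = a and m(i) = b κ^{n(i−1)} for i ≥ 1, and edge weights m(i,i+1) = max(m(i), m(i+1)). Then for every subset U ⊆ 𝒱 with U ≠ ∅, U ≠ 𝒱 and m(U) ≤ (1/2) m(𝒱), one has m(U) ≤ C m(∂U), where C = a/b + 1/(κⁿ − 1). -/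
open Finset

private lemma stmt5_sum_bound (q a b : ℝ) (hq : 1 < q) (ha : 0 < a) (hb : 0 < b)
    (N : ℕ) (m : Fin (N + 1) → ℝ)
    (hm : ∀ i : Fin (N + 1), m i = if (i : ℕ) = 0 then a else b * q ^ ((i : ℕ) - 1))
    (S : Finset (Fin (N + 1))) (j : ℕ) (hS : ∀ i ∈ S, (i : ℕ) ≤ j) :
    ∑ i ∈ S, m i ≤ (a / b + 1 / (q - 1)) * (b * q ^ j) := by
  have hq0 : 0 < q := lt_trans one_pos hq
  have hq1 : 0 < q - 1 := by linarith
  set g : ℕ → ℝ := fun k => if k = 0 then a else b * q ^ (k - 1) with hg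
  have hgnn : ∀ k, 0 ≤ g k := by
    intro k
    simp only [hg]
    split_ifs <;> positivity
  have h1 : ∑ i ∈ S, m i = ∑ k ∈ S.image Fin.val, g k := by
    rw [Finset.sum_image (by intro x _ y _ h; exact Fin.ext h)]
    exact Finset.sum_congr rfl fun i _ => hm i
  have hsub : S.image Fin.val ⊆ Finset.range (j + 1) := by
    intro k hk
    rw [Finset.mem_image] at hk
    obtain ⟨i, hi, rfl⟩ := hk
    exact Finset.mem_range.mpr (Nat.lt_succ_of_le (hS i hi))
  have h2 : ∑ k ∈ S.image Fin.val, g k ≤ ∑ k ∈ Finset.range (j + 1), g k :=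
    Finset.sum_le_sum_of_subset_of_nonneg hsub (fun k _ _ => hgnn k)
  have h3 : ∑ k ∈ Finset.range (j + 1), g k = (∑ k ∈ Finset.range j, b * q ^ k) + a := by
    rw [Finset.sum_range_succ']
    simp [hg]
  have h4 : ∑ k ∈ Finset.range j, b * q ^ k = b * ((q ^ j - 1) / (q - 1)) := by
    rw [← Finset.mul_sum, geom_sum_eq (ne_of_gt hq)]
  have hqj : (1 : ℝ) ≤ q ^ j := one_le_pow₀ (le_of_lt hq)
  have h5 : b * ((q ^ j - 1) / (q - 1)) + a ≤ (a / b + 1 / (q - 1)) * (b * q ^ j) := by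
    have hexp : (a / b + 1 / (q - 1)) * (b * q ^ j) = a * q ^ j + b * q ^ j / (q - 1) := by
      field_simp
    rw [hexp]
    have hA : a ≤ a * q ^ j := le_mul_of_one_le_right (le_of_lt ha) hqj
    have hB : b * ((q ^ j - 1) / (q - 1)) ≤ b * q ^ j / (q - 1) := by
      rw [mul_div_assoc]
      gcongr
      linarith
    linarith
  calc ∑ i ∈ S, m i = ∑ k ∈ S.image Fin.val, g k := h1
    _ ≤ ∑ k ∈ Finset.range (j + 1), g k := h2
    _ = b * ((q ^ j - 1) / (q - 1)) + a := by rw [h3, h4]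
    _ ≤ _ := h5

private lemma stmt5_key (q a b : ℝ) (hq : 1 < q) (ha : 0 < a) (hb : 0 < b)
    (N : ℕ) (m : Fin (N + 1) → ℝ)
    (hm : ∀ i : Fin (N + 1), m i = if (i : ℕ) = 0 then a else b * q ^ ((i : ℕ) - 1))
    (S : Finset (Fin (N + 1))) (hS : S.Nonempty) (hlast : Fin.last N ∉ S) :
    ∃ e : Fin N, e.castSucc ∈ S ∧ e.succ ∉ S ∧
      ∑ i ∈ S, m i ≤ (a / b + 1 / (q - 1)) * m e.succ := by
  have hT : (S.image Fin.val).Nonempty := hS.image _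
  set j := (S.image Fin.val).max' hT with hj
  have hjmem : j ∈ S.image Fin.val := Finset.max'_mem _ _
  rw [Finset.mem_image] at hjmem
  obtain ⟨i0, hi0S, hi0⟩ := hjmem
  have hub : ∀ i ∈ S, (i : ℕ) ≤ j := fun i hi =>
    Finset.le_max' _ _ (Finset.mem_image_of_mem _ hi)
  have hjN : j < N := by
    rcases lt_or_eq_of_le (Nat.lt_succ_iff.mp (hi0.symm ▸ i0.isLt)) with h | h
    · exact h
    · exfalso; apply hlast
      have : i0 = Fin.last N := Fin.ext (by simp [hi0, h])
      exact this ▸ hi0S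
  refine ⟨⟨j, hjN⟩, ?_, ?_, ?_⟩
  · have : i0 = Fin.castSucc ⟨j, hjN⟩ := Fin.ext (by simp [hi0])
    exact this ▸ hi0S
  · intro hmem
    have := hub _ hmem
    simp [Fin.val_succ] at this
  · have hmsucc : m (Fin.succ (⟨j, hjN⟩ : Fin N)) = b * q ^ j := by
      rw [hm]
      simp [Fin.val_succ]
    rw [hmsucc]
    exact stmt5_sum_bound q a b hq ha hb N m hm S j hub

/-- The weighted path graph on `{0,…,N}` with edges `{i,i+1}`, vertex weights `m(0) = a`,
`m(i) = b κ^{n(i-1)}` for `i ≥ 1`, and edge weights `max(m(i), m(i+1))`, satisfies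
`m(U) ≤ C m(∂U)` for every `U` with `∅ ≠ U ≠ 𝒱` and `m(U) ≤ (1/2)m(𝒱)`, where
`C = a/b + 1/(κⁿ - 1)`. -/
theorem stmt5 (κ n a b : ℝ) (hκ : 1 < κ) (hn : 0 < n) (ha : 0 < a) (hb : 0 < b)
    (N : ℕ) (hN : 1 ≤ N)
    (m : Fin (N + 1) → ℝ) (hm0 : m 0 = a)
    (hmi : ∀ i : Fin (N + 1), 1 ≤ (i : ℕ) → m i = b * κ ^ (n * (((i : ℕ) : ℝ) - 1))) :
    ∀ U : Finset (Fin (N + 1)), U.Nonempty → U ≠ Finset.univ →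
      (∑ i ∈ U, m i) ≤ (1 / 2) * ∑ i : Fin (N + 1), m i →
      (∑ i ∈ U, m i)
        ≤ (a / b + 1 / (κ ^ n - 1)) *
            ∑ i ∈ Finset.univ.filter
                (fun i : Fin N => ¬ ((i.castSucc ∈ U) ↔ (i.succ ∈ U))),
              max (m i.castSucc) (m i.succ) := by
  intro U hUne hUuniv hUhalf
  have hκ0 : (0 : ℝ) < κ := lt_trans one_pos hκ
  set q : ℝ := κ ^ n with hqdef
  have hq : 1 < q :=
    (Real.one_lt_rpow_iff_of_pos hκ0).mpr (Or.inl ⟨hκ, hn⟩)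
  have hq0 : (0 : ℝ) < q := lt_trans one_pos hq
  have hm : ∀ i : Fin (N + 1), m i = if (i : ℕ) = 0 then a else b * q ^ ((i : ℕ) - 1) := by
    intro i
    by_cases h : (i : ℕ) = 0
    · have : i = 0 := Fin.ext (by simp [h])
      simp [h, this, hm0]
    · have h1 : 1 ≤ (i : ℕ) := Nat.one_le_iff_ne_zero.mpr h
      rw [hmi i h1, if_neg h]
      congr 1
      have hcast : (((i : ℕ) : ℝ) - 1) = (((i : ℕ) - 1 : ℕ) : ℝ) := by
        rw [Nat.cast_sub h1]; norm_num
      rw [hcast, ← Real.rpow_natCast q ((i : ℕ) - 1), hqdef,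
        ← Real.rpow_mul (le_of_lt hκ0)]
  have hmpos : ∀ i, 0 < m i := by
    intro i
    rw [hm]
    split_ifs <;> positivity
  have hC : 0 ≤ a / b + 1 / (q - 1) := by
    have : 0 < q - 1 := by linarith
    positivity
  -- the key: get a boundary edge e with the sum bound
  have hmain : ∃ e : Fin N, ¬ ((e.castSucc ∈ U) ↔ (e.succ ∈ U)) ∧
      ∑ i ∈ U, m i ≤ (a / b + 1 / (q - 1)) * max (m e.castSucc) (m e.succ) := by
    by_cases hlast : Fin.last N ∈ U
    · -- use the complement
      have hcne : Uᶜ.Nonempty := by rwa [Finset.nonempty_iff_ne_empty, ne_eq, Finset.compl_eq_empty_iff]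
      have hsum : ∑ i ∈ U, m i ≤ ∑ i ∈ Uᶜ, m i := by
        have := Finset.sum_add_sum_compl U m
        linarith
      obtain ⟨e, he1, he2, he3⟩ := stmt5_key q a b hq ha hb N m hm Uᶜ hcne
        (by simpa using hlast)
      refine ⟨e, ?_, ?_⟩
      · simp only [Finset.mem_compl] at he1 he2
        push_neg at he2
        tauto
      · calc ∑ i ∈ U, m i ≤ ∑ i ∈ Uᶜ, m i := hsum
          _ ≤ (a / b + 1 / (q - 1)) * m e.succ := he3
          _ ≤ (a / b + 1 / (q - 1)) * max (m e.castSucc) (m e.succ) := by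
              gcongr
              exact le_max_right _ _
    · obtain ⟨e, he1, he2, he3⟩ := stmt5_key q a b hq ha hb N m hm U hUne hlast
      refine ⟨e, by tauto, ?_⟩
      calc ∑ i ∈ U, m i ≤ (a / b + 1 / (q - 1)) * m e.succ := he3
        _ ≤ (a / b + 1 / (q - 1)) * max (m e.castSucc) (m e.succ) := by
            gcongr
            exact le_max_right _ _
  obtain ⟨e, heb, hebound⟩ := hmain
  have hemem : e ∈ Finset.univ.filter
      (fun i : Fin N => ¬ ((i.castSucc ∈ U) ↔ (i.succ ∈ U))) := by
    simp [heb]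
  have hfinal : max (m e.castSucc) (m e.succ) ≤
      ∑ i ∈ Finset.univ.filter
          (fun i : Fin N => ¬ ((i.castSucc ∈ U) ↔ (i.succ ∈ U))),
        max (m i.castSucc) (m i.succ) :=
    Finset.single_le_sum (f := fun i : Fin N => max (m i.castSucc) (m i.succ))
      (fun i _ => le_max_of_le_left (le_of_lt (hmpos _))) hemem
  calc ∑ i ∈ U, m i ≤ (a / b + 1 / (q - 1)) * max (m e.castSucc) (m e.succ) := hebound
    _ ≤ _ := by gcongr
end

section
/- Let n ≥ 1 be an integer, let μ be a Borel measure on ℝⁿ which is finite and positive on every open ball, fix a base point o ∈ ℝⁿ and constants ε ∈ (0,1], δ₀ ∈ (0,1], C_P > 0. Call an open ball B(x,r) remote if r ≤ (ε/2)‖x − o‖ and anchored if its center is o. Assume that for every remote ball and every anchored ball B(x,r), and every smooth function f : ℝⁿ → ℝ, one has ∫_{B(x,δ₀ r)} |f − f_{B(x,δ₀ r)}|² dμ ≤ C_P r² ∫_{B(x,r)} ‖∇f‖² dμ. Then, with δ = ε δ₀² / 8, for every x ∈ ℝⁿ, every r > 0 and every smooth f : ℝⁿ → ℝ, ∫_{B(x,δ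 r)} |f − f_{B(x,δ r)}|² dμ ≤ C_P r² ∫_{B(x,r)} ‖∇f‖² dμ. -/
open MeasureTheory Metric

/-- The `μ`-mean value of `f` over a set `U`. -/
noncomputable def meanVal {α : Type*} [MeasurableSpace α] (μ : Measure α)
    (U : Set α) (f : α → ℝ) : ℝ :=
  (∫ x in U, f x ∂μ) / (μ U).toReal


lemma integrableOn_ball_of_continuous {n : ℕ} {μ : Measure (EuclideanSpace ℝ (Fin n))}
    {g : EuclideanSpace ℝ (Fin n) → ℝ} (hg : Continuous g)
    (x : EuclideanSpace ℝ (Fin n)) (r : ℝ) (hμ : μ (ball x r) ≠ ⊤) :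
    IntegrableOn g (ball x r) μ := by
  obtain ⟨M, hM⟩ := (isCompact_closedBall x r).exists_bound_of_continuousOn hg.continuousOn
  refine Integrable.mono' (g := fun _ => M) (integrableOn_const hμ)
    hg.aestronglyMeasurable.restrict ?_
  filter_upwards [self_mem_ae_restrict measurableSet_ball] with y hy
  exact hM y (ball_subset_closedBall hy)

lemma mean_sq_le {α : Type*} [MeasurableSpace α] (μ : Measure α) {U : Set α}
    (hμ0 : (μ U).toReal ≠ 0) {f : α → ℝ}
    (hf : IntegrableOn f U μ) (hf2 : IntegrableOn (fun y => f y ^ 2) U μ)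
    (hμU : μ U ≠ ⊤) (c : ℝ) :
    ∫ y in U, (f y - meanVal μ U f) ^ 2 ∂μ ≤ ∫ y in U, (f y - c) ^ 2 ∂μ := by
  set m := meanVal μ U f with hm
  have hmean : ∫ y in U, f y ∂μ = m * (μ U).toReal := by
    rw [hm, meanVal]; field_simp
  have hconst : ∀ a : ℝ, IntegrableOn (fun _ => a) U μ :=
    fun a => integrableOn_const hμU
  have hint : ∀ a : ℝ, IntegrableOn (fun y => (f y - a) ^ 2) U μ := by
    intro a
    have : (fun y => (f y - a) ^ 2) = fun y => (f y ^ 2 - (2 * a) * f y) + a ^ 2 := by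
      ext y; ring
    rw [this]
    exact ((hf2.sub (hf.const_mul _)).add (hconst _))
  have hI2 : IntegrableOn
      (fun y => 2 * (m - c) * f y + ((m - c) ^ 2 - 2 * (m - c) * m)) U μ :=
    (hf.const_mul _).add (hconst _)
  have expand : ∫ y in U, (f y - c) ^ 2 ∂μ
      = ∫ y in U, (f y - m) ^ 2 ∂μ + (m - c) ^ 2 * (μ U).toReal := by
    have h1 : (fun y => (f y - c) ^ 2)
        = fun y => ((f y - m) ^ 2 + (2 * (m - c) * f y + ((m - c) ^ 2 - 2 * (m - c) * m))) := by
      ext y; ring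
    rw [h1, integral_add (hint m) hI2,
      integral_add (hf.const_mul _) (hconst _), integral_const_mul, hmean,
      setIntegral_const, smul_eq_mul, measureReal_def]
    ring
  rw [expand]
  nlinarith [sq_nonneg (m - c), ENNReal.toReal_nonneg (a := μ U)]

lemma poincare_transfer {n : ℕ} {μ : Measure (EuclideanSpace ℝ (Fin n))}
    {x x' : EuclideanSpace ℝ (Fin n)} {s r r' δ₀ CP : ℝ}
    (hμs0 : 0 < μ (ball x s)) (hμs : μ (ball x s) ≠ ⊤)
    (hr'0 : 0 < r') (hr' : r' ≤ r) (hCP : 0 ≤ CP)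
    (hsub1 : ball x s ⊆ ball x' (δ₀ * r')) (hsub2 : ball x' r' ⊆ ball x r)
    {f : EuclideanSpace ℝ (Fin n) → ℝ} (hf : Continuous f)
    (hH : (∫⁻ y in ball x' (δ₀ * r'),
            ENNReal.ofReal ((f y - meanVal μ (ball x' (δ₀ * r')) f) ^ 2) ∂μ)
          ≤ ENNReal.ofReal (CP * r' ^ 2) *
              ∫⁻ y in ball x' r', ENNReal.ofReal (‖fderiv ℝ f y‖ ^ 2) ∂μ) :
    (∫⁻ y in ball x s, ENNReal.ofReal ((f y - meanVal μ (ball x s) f) ^ 2) ∂μ)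
      ≤ ENNReal.ofReal (CP * r ^ 2) *
          ∫⁻ y in ball x r, ENNReal.ofReal (‖fderiv ℝ f y‖ ^ 2) ∂μ := by
  set c := meanVal μ (ball x' (δ₀ * r')) f with hc
  set m := meanVal μ (ball x s) f with hm
  have hfI := integrableOn_ball_of_continuous hf x s hμs
  have hf2I := integrableOn_ball_of_continuous (hf.pow 2) x s hμs
  have hIm : IntegrableOn (fun y => (f y - m) ^ 2) (ball x s) μ :=
    integrableOn_ball_of_continuous ((hf.sub continuous_const).pow 2) x s hμs
  have hIc : IntegrableOn (fun y => (f y - c) ^ 2) (ball x s) μ :=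
    integrableOn_ball_of_continuous ((hf.sub continuous_const).pow 2) x s hμs
  have hpos : ∀ a : ℝ, (0 : EuclideanSpace ℝ (Fin n) → ℝ) ≤ᵐ[μ.restrict (ball x s)] fun y => (f y - a) ^ 2 :=
    fun a => Filter.Eventually.of_forall fun y => by simpa using sq_nonneg (f y - a)
  have e1 : (∫⁻ y in ball x s, ENNReal.ofReal ((f y - m) ^ 2) ∂μ)
      = ENNReal.ofReal (∫ y in ball x s, (f y - m) ^ 2 ∂μ) :=
    (ofReal_integral_eq_lintegral_ofReal hIm (hpos m)).symm
  have e2 : ENNReal.ofReal (∫ y in ball x s, (f y - c) ^ 2 ∂μ)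
      = ∫⁻ y in ball x s, ENNReal.ofReal ((f y - c) ^ 2) ∂μ :=
    ofReal_integral_eq_lintegral_ofReal hIc (hpos c)
  have hμ0 : (μ (ball x s)).toReal ≠ 0 := ENNReal.toReal_ne_zero.mpr ⟨hμs0.ne', hμs⟩
  calc (∫⁻ y in ball x s, ENNReal.ofReal ((f y - m) ^ 2) ∂μ)
      = ENNReal.ofReal (∫ y in ball x s, (f y - m) ^ 2 ∂μ) := e1
    _ ≤ ENNReal.ofReal (∫ y in ball x s, (f y - c) ^ 2 ∂μ) :=
        ENNReal.ofReal_le_ofReal (mean_sq_le μ hμ0 hfI hf2I hμs c)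
    _ = ∫⁻ y in ball x s, ENNReal.ofReal ((f y - c) ^ 2) ∂μ := e2
    _ ≤ ∫⁻ y in ball x' (δ₀ * r'), ENNReal.ofReal ((f y - c) ^ 2) ∂μ :=
        lintegral_mono_set hsub1
    _ ≤ ENNReal.ofReal (CP * r' ^ 2) *
          ∫⁻ y in ball x' r', ENNReal.ofReal (‖fderiv ℝ f y‖ ^ 2) ∂μ := hH
    _ ≤ ENNReal.ofReal (CP * r ^ 2) *
          ∫⁻ y in ball x r, ENNReal.ofReal (‖fderiv ℝ f y‖ ^ 2) ∂μ := by
        refine mul_le_mul' (ENNReal.ofReal_le_ofReal ?_) (lintegral_mono_set hsub2)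
        have h2 : r' ^ 2 ≤ r ^ 2 := by nlinarith
        nlinarith [mul_le_mul_of_nonneg_left h2 hCP]


/-- If the Poincaré inequality with parameter `δ₀` and constant `C_P` holds for all remote
balls (`r ≤ (ε/2)‖x-o‖`) and all anchored balls (center `o`), then the Poincaré inequality
holds for every ball with parameter `δ = εδ₀²/8` and the same constant `C_P`. -/
theorem stmt6 (n : ℕ) (hn : 1 ≤ n) (μ : Measure (EuclideanSpace ℝ (Fin n)))
    (hball : ∀ (x : EuclideanSpace ℝ (Fin n)) (r : ℝ), 0 < r →
      0 < μ (ball x r) ∧ μ (ball x r) < ⊤)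
    (o : EuclideanSpace ℝ (Fin n)) (ε δ₀ CP : ℝ)
    (hε : ε ∈ Set.Ioc (0 : ℝ) 1) (hδ₀ : δ₀ ∈ Set.Ioc (0 : ℝ) 1) (hCP : 0 < CP)
    (H : ∀ (x : EuclideanSpace ℝ (Fin n)) (r : ℝ), 0 < r →
      (r ≤ ε / 2 * ‖x - o‖ ∨ x = o) →
      ∀ f : EuclideanSpace ℝ (Fin n) → ℝ, ContDiff ℝ (⊤ : ℕ∞) f →
        (∫⁻ y in ball x (δ₀ * r),
            ENNReal.ofReal ((f y - meanVal μ (ball x (δ₀ * r)) f) ^ 2) ∂μ)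
          ≤ ENNReal.ofReal (CP * r ^ 2) *
              ∫⁻ y in ball x r, ENNReal.ofReal (‖fderiv ℝ f y‖ ^ 2) ∂μ) :
    ∀ (x : EuclideanSpace ℝ (Fin n)) (r : ℝ), 0 < r →
      ∀ f : EuclideanSpace ℝ (Fin n) → ℝ, ContDiff ℝ (⊤ : ℕ∞) f →
        (∫⁻ y in ball x (ε * δ₀ ^ 2 / 8 * r),
            ENNReal.ofReal ((f y - meanVal μ (ball x (ε * δ₀ ^ 2 / 8 * r)) f) ^ 2) ∂μ)
          ≤ ENNReal.ofReal (CP * r ^ 2) *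
              ∫⁻ y in ball x r, ENNReal.ofReal (‖fderiv ℝ f y‖ ^ 2) ∂μ := by
  obtain ⟨hε0, hε1⟩ := hε
  obtain ⟨hδ0, hδ1⟩ := hδ₀
  intro x r hr f hf
  have hcont : Continuous f := hf.continuous
  set s : ℝ := ε * δ₀ ^ 2 / 8 * r with hs_def
  have hs : 0 < s := by positivity
  obtain ⟨hμs0, hμs⟩ := hball x s hs
  have hnorm : ‖x - o‖ = dist x o := (dist_eq_norm x o).symm
  by_cases hd : δ₀ * r / 4 ≤ dist x o
  · -- remote case
    have hd0 : 0 < dist x o := lt_of_lt_of_le (by positivity) hd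
    rcases le_total r (ε / 2 * dist x o) with hmin | hmin
    · -- r' = r
      refine poincare_transfer hμs0 hμs.ne hr le_rfl hCP.le
        (ball_subset_ball ?_) (ball_subset_ball le_rfl) hcont
        (H x r hr (Or.inl (by rw [hnorm]; exact hmin)) f hf)
      rw [hs_def]
      nlinarith [mul_le_mul_of_nonneg_right hε1 (mul_nonneg (mul_nonneg hδ0.le hδ0.le) hr.le),
        mul_le_mul_of_nonneg_right hδ1 (mul_nonneg hδ0.le hr.le)]
    · -- r' = ε/2 * dist x o
      have hr'0 : 0 < ε / 2 * dist x o := by positivity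
      refine poincare_transfer hμs0 hμs.ne hr'0 hmin hCP.le
        (ball_subset_ball ?_) (ball_subset_ball hmin) hcont
        (H x (ε / 2 * dist x o) hr'0 (Or.inl (by rw [hnorm])) f hf)
      rw [hs_def]
      nlinarith [mul_le_mul_of_nonneg_left hd (by positivity : (0:ℝ) ≤ δ₀ * ε / 2)]
  · -- anchored case
    push_neg at hd
    have hr2 : (0 : ℝ) < r / 2 := by positivity
    have hs4 : s ≤ δ₀ * r / 4 := by
      rw [hs_def]
      nlinarith [mul_le_mul_of_nonneg_right hε1 (mul_nonneg (mul_nonneg hδ0.le hδ0.le) hr.le),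
        mul_le_mul_of_nonneg_right hδ1 (mul_nonneg hδ0.le hr.le)]
    refine poincare_transfer hμs0 hμs.ne hr2 (by linarith) hCP.le
      ?_ ?_ hcont (H o (r / 2) hr2 (Or.inr rfl) f hf)
    · intro y hy
      rw [mem_ball] at hy ⊢
      have h1 : dist y o ≤ dist y x + dist x o := dist_triangle y x o
      nlinarith
    · intro y hy
      rw [mem_ball] at hy ⊢
      have h1 : dist y x ≤ dist y o + dist o x := dist_triangle y o x
      rw [dist_comm o x] at h1
      nlinarith
end

section
/- Let n ≥ 1 be an integer, let β, γ ∈ ℝ with β + γ < 2 − n, and let K > 0. Let u, v : ℝⁿ → ℝ be twice continuously differentiable functions such that for all x ∈ ℝⁿ and j = 0, 1, 2: ‖∇^j u(x)‖ ≤ K (1 + ‖x‖)^{β − j} and ‖∇^j v(x)‖ ≤ K (1 + ‖x‖)^{γ − j} (where ∇⁰u = u, ∇¹u is the gradient and ∇²u the Hessian). Then the functions u·Δv and v·Δu are Lebesgue integrable on ℝⁿ and ∫_{ℝⁿ} u Δv dx = ∫_{ℝⁿ} v Δu dx. -/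
open MeasureTheory
open MeasureTheory Measure Module Topology Filter

/-- The Euclidean (analyst's) Laplacian: the trace of the second derivative. -/
noncomputable def eucLap {n : ℕ} (f : EuclideanSpace ℝ (Fin n) → ℝ)
    (x : EuclideanSpace ℝ (Fin n)) : ℝ :=
  ∑ i : Fin n, iteratedFDeriv ℝ 2 f x
    ![EuclideanSpace.single i (1 : ℝ), EuclideanSpace.single i (1 : ℝ)]

section myHelpers

lemma myAux1 {E : Type*} [NormedAddCommGroup E] [NormedSpace ℝ E] [MeasurableSpace E]
    {μ : Measure E} [SigmaFinite μ] {h h' : E × ℝ → ℝ}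
    (hi : Integrable h' (μ.prod volume))
    (hd : ∀ x, HasLineDerivAt ℝ h (h' x) x (0, 1))
    (h0b : ∀ x : E, Tendsto (fun t => h (x, t)) atBot (𝓝 0))
    (h0t : ∀ x : E, Tendsto (fun t => h (x, t)) atTop (𝓝 0)) :
    ∫ x, h' x ∂(μ.prod volume) = 0 := by
  rw [integral_prod _ hi]
  have A : ∀ᵐ x ∂μ, ∫ t, h' (x, t) = 0 := by
    filter_upwards [hi.prod_right_ae] with x hx
    have hder : ∀ t, HasDerivAt (fun t => h (x, t)) (h' (x, t)) t := by
      intro t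
      convert (hd (x, t)).scomp_of_eq t ((hasDerivAt_id t).add (hasDerivAt_const t (-t)))
        (by simp)
      · rfl
      · rfl
      · simp
      · simp
    rw [integral_of_hasDerivAt_of_tendsto hder hx (h0b x) (h0t x)]
    simp
  rw [integral_congr_ae A, integral_zero]

lemma myAux2 {E : Type*} [NormedAddCommGroup E] [NormedSpace ℝ E] [MeasurableSpace E]
    [BorelSpace E] [FiniteDimensional ℝ E]
    {μ : Measure (E × ℝ)} [IsAddHaarMeasure μ] {h h' : E × ℝ → ℝ}
    (hi : Integrable h' μ)
    (hd : ∀ x, HasLineDerivAt ℝ h (h' x) x (0, 1))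
    (h0b : ∀ x : E, Tendsto (fun t => h (x, t)) atBot (𝓝 0))
    (h0t : ∀ x : E, Tendsto (fun t => h (x, t)) atTop (𝓝 0)) :
    ∫ x, h' x ∂μ = 0 := by
  let ν : Measure E := addHaar
  have A : ν.prod volume = (addHaarScalarFactor (ν.prod volume) μ) • μ :=
    isAddLeftInvariant_eq_smul _ _
  have Hi : Integrable h' (ν.prod volume) := by rw [A]; exact hi.smul_measure_nnreal
  rw [isAddLeftInvariant_eq_smul μ (ν.prod volume)]
  simp [integral_smul_nnreal_measure, myAux1 Hi hd h0b h0t]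

/-- If a `C¹` scalar function tends to zero at infinity and its directional derivative in
direction `v` is integrable, then the integral of that directional derivative vanishes. -/
lemma myDivZero {E : Type*} [NormedAddCommGroup E] [NormedSpace ℝ E] [MeasurableSpace E]
    [BorelSpace E] [FiniteDimensional ℝ E] {μ : Measure E} [IsAddHaarMeasure μ]
    {h : E → ℝ} {h' : E → E →L[ℝ] ℝ} (v : E)
    (hd : ∀ x, HasFDerivAt h (h' x) x)
    (hi : Integrable (fun x => h' x v) μ)
    (h0 : Tendsto h (cocompact E) (𝓝 0)) :
    ∫ x, h' x v ∂μ = 0 := by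
  rcases eq_or_ne v 0 with rfl | hv
  · simp
  have : Nontrivial E := nontrivial_iff.2 ⟨v, 0, hv⟩
  let n := finrank ℝ E
  let E' := Fin (n - 1) → ℝ
  obtain ⟨L, hL⟩ : ∃ L : E ≃L[ℝ] (E' × ℝ), L v = (0, 1) := by
    have hrk : finrank ℝ (E' × ℝ) = n := by simpa [E'] using Nat.sub_add_cancel finrank_pos
    have L₀ : E ≃L[ℝ] (E' × ℝ) := (ContinuousLinearEquiv.ofFinrankEq hrk).symm
    obtain ⟨M, hM⟩ : ∃ M : (E' × ℝ) ≃L[ℝ] (E' × ℝ), M (L₀ v) = (0, 1) := by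
      apply SeparatingDual.exists_continuousLinearEquiv_apply_eq
      · simpa using hv
      · simp
    exact ⟨L₀.trans M, by simp [hM]⟩
  let ν := Measure.map L μ
  have L_emb : MeasurableEmbedding L := L.toHomeomorph.measurableEmbedding
  suffices H : ∫ y, h' (L.symm y) v ∂ν = 0 by
    have hμ : μ = Measure.map L.symm ν := by
      simp [ν, Measure.map_map L.symm.continuous.measurable L.continuous.measurable]
    have hemb : IsClosedEmbedding (L.symm : (E' × ℝ) → E) :=
      L.symm.toHomeomorph.isClosedEmbedding
    rw [hμ, hemb.integral_map]
    exact H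
  have hccL : Tendsto (L.symm : (E' × ℝ) → E) (cocompact (E' × ℝ)) (cocompact E) :=
    L.symm.toHomeomorph.isClosedEmbedding.tendsto_cocompact
  have hlineAux : ∀ x : E', ∀ l : Filter ℝ, l ≤ cocompact ℝ →
      Tendsto (fun t => h (L.symm (x, t))) l (𝓝 0) := by
    intro x l hl
    have hiso : Isometry (fun t : ℝ => (x, t)) := by
      apply Isometry.of_dist_eq
      intro a b
      simp [Prod.dist_eq, dist_nonneg]
    have hcc : Tendsto (fun t : ℝ => (x, t)) (cocompact ℝ) (cocompact (E' × ℝ)) :=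
      hiso.isClosedEmbedding.tendsto_cocompact
    exact (h0.comp (hccL.comp (hcc.mono_left hl)))
  apply myAux2 (h := fun y => h (L.symm y))
  · have : Integrable ((fun y => h' (L.symm y) v) ∘ L) μ := by
      simpa [Function.comp_def] using hi
    exact (L_emb.integrable_map_iff).2 this
  · intro y
    have h1 : HasFDerivAt (fun y => h (L.symm y)) ((h' (L.symm y)).comp
        (L.symm : (E' × ℝ) →L[ℝ] E)) y := (hd (L.symm y)).comp y L.symm.hasFDerivAt
    have h2 := h1.hasLineDerivAt (0, 1)
    have h3 : L.symm (0, 1) = v := by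
      rw [← hL]; exact L.symm_apply_apply v
    simpa [h3] using h2
  · intro x
    exact hlineAux x atBot (by rw [cocompact_eq_atBot_atTop]; exact le_sup_left)
  · intro x
    exact hlineAux x atTop (by rw [cocompact_eq_atBot_atTop]; exact le_sup_right)

variable {n : ℕ}

/-- The `i`-th standard basis vector of `EuclideanSpace ℝ (Fin n)`. -/
noncomputable def myE (i : Fin n) : EuclideanSpace ℝ (Fin n) :=
  EuclideanSpace.single i (1 : ℝ)

lemma my_norm_e (i : Fin n) : ‖myE i‖ = 1 := by
  rw [myE, EuclideanSpace.norm_single]; exact norm_one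

lemma my_apply1_le (f : EuclideanSpace ℝ (Fin n) → ℝ) (x : EuclideanSpace ℝ (Fin n)) (i : Fin n) :
    |fderiv ℝ f x (myE i)| ≤ ‖iteratedFDeriv ℝ 1 f x‖ := by
  have h1 : fderiv ℝ f x (myE i) = iteratedFDeriv ℝ 1 f x ![myE i] := by
    rw [iteratedFDeriv_one_apply]; simp
  rw [h1, ← Real.norm_eq_abs]
  calc ‖iteratedFDeriv ℝ 1 f x ![myE i]‖
      ≤ ‖iteratedFDeriv ℝ 1 f x‖ * ∏ j : Fin 1,
          ‖(![myE i] : Fin 1 → EuclideanSpace ℝ (Fin n)) j‖ :=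
        ContinuousMultilinearMap.le_opNorm _ _
    _ = ‖iteratedFDeriv ℝ 1 f x‖ := by simp [my_norm_e]

lemma my_apply2_le (f : EuclideanSpace ℝ (Fin n) → ℝ) (x : EuclideanSpace ℝ (Fin n)) (i : Fin n) :
    |iteratedFDeriv ℝ 2 f x ![myE i, myE i]| ≤ ‖iteratedFDeriv ℝ 2 f x‖ := by
  rw [← Real.norm_eq_abs]
  calc ‖iteratedFDeriv ℝ 2 f x ![myE i, myE i]‖
      ≤ ‖iteratedFDeriv ℝ 2 f x‖ * ∏ j : Fin 2,
          ‖(![myE i, myE i] : Fin 2 → EuclideanSpace ℝ (Fin n)) j‖ :=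
        ContinuousMultilinearMap.le_opNorm _ _
    _ = ‖iteratedFDeriv ℝ 2 f x‖ := by simp [Fin.prod_univ_two, my_norm_e]

lemma my_int_of_bound {C δ : ℝ} (hδ : δ < -(n : ℝ)) {f : EuclideanSpace ℝ (Fin n) → ℝ}
    (hmeas : AEStronglyMeasurable f (volume : Measure (EuclideanSpace ℝ (Fin n))))
    (hb : ∀ x : EuclideanSpace ℝ (Fin n), |f x| ≤ C * (1 + ‖x‖) ^ δ) :
    Integrable f (volume : Measure (EuclideanSpace ℝ (Fin n))) := by
  have hfin : (finrank ℝ (EuclideanSpace ℝ (Fin n)) : ℝ) < -δ := by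
    rw [finrank_euclideanSpace_fin]; linarith
  have hint : Integrable (fun x : EuclideanSpace ℝ (Fin n) => C * (1 + ‖x‖) ^ (-(-δ)))
      (volume : Measure (EuclideanSpace ℝ (Fin n))) :=
    (integrable_one_add_norm hfin).const_mul C
  simp only [neg_neg] at hint
  exact hint.mono' hmeas (Filter.Eventually.of_forall fun x => by
    rw [Real.norm_eq_abs]; exact hb x)

end myHelpers

/-- Symmetry of the Laplacian for functions with weighted decay: if `u`, `v` are `C²` with
`‖∇ʲu(x)‖ ≤ K(1+‖x‖)^{β-j}` and `‖∇ʲv(x)‖ ≤ K(1+‖x‖)^{γ-j}` for `j = 0,1,2` and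
`β + γ < 2 - n`, then `uΔv` and `vΔu` are integrable and `∫ uΔv = ∫ vΔu`. -/


theorem stmt9 (n : ℕ) (hn : 1 ≤ n) (β γ K : ℝ) (hβγ : β + γ < 2 - n) (hK : 0 < K)
    (u v : EuclideanSpace ℝ (Fin n) → ℝ)
    (hu : ContDiff ℝ 2 u) (hv : ContDiff ℝ 2 v)
    (hub : ∀ x : EuclideanSpace ℝ (Fin n), ∀ j : ℕ, j ≤ 2 →
      ‖iteratedFDeriv ℝ j u x‖ ≤ K * (1 + ‖x‖) ^ (β - j))
    (hvb : ∀ x : EuclideanSpace ℝ (Fin n), ∀ j : ℕ, j ≤ 2 →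
      ‖iteratedFDeriv ℝ j v x‖ ≤ K * (1 + ‖x‖) ^ (γ - j)) :
    Integrable (fun x => u x * eucLap v x) ∧
    Integrable (fun x => v x * eucLap u x) ∧
    ∫ x, u x * eucLap v x = ∫ x, v x * eucLap u x := by
  have hr : ∀ x : EuclideanSpace ℝ (Fin n), (0:ℝ) < 1 + ‖x‖ := fun x => by positivity
  have hn' : (1:ℝ) ≤ n := by exact_mod_cast hn
  have h12 : (1:WithTop ℕ∞) ≤ 2 := by norm_num
  -- pointwise bounds
  have bu0 : ∀ x, |u x| ≤ K * (1 + ‖x‖) ^ β := by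
    intro x
    have h := hub x 0 (by norm_num)
    rw [norm_iteratedFDeriv_zero, Real.norm_eq_abs] at h
    simpa using h
  have bv0 : ∀ x, |v x| ≤ K * (1 + ‖x‖) ^ γ := by
    intro x
    have h := hvb x 0 (by norm_num)
    rw [norm_iteratedFDeriv_zero, Real.norm_eq_abs] at h
    simpa using h
  have bu1 : ∀ x, ∀ i, |fderiv ℝ u x (myE i)| ≤ K * (1 + ‖x‖) ^ (β - 1) := by
    intro x i
    refine (my_apply1_le u x i).trans ?_
    simpa using hub x 1 (by norm_num)
  have bv1 : ∀ x, ∀ i, |fderiv ℝ v x (myE i)| ≤ K * (1 + ‖x‖) ^ (γ - 1) := by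
    intro x i
    refine (my_apply1_le v x i).trans ?_
    simpa using hvb x 1 (by norm_num)
  have bu2 : ∀ x, ∀ i, |iteratedFDeriv ℝ 2 u x ![myE i, myE i]| ≤ K * (1 + ‖x‖) ^ (β - 2) := by
    intro x i
    refine (my_apply2_le u x i).trans ?_
    simpa using hub x 2 (by norm_num)
  have bv2 : ∀ x, ∀ i, |iteratedFDeriv ℝ 2 v x ![myE i, myE i]| ≤ K * (1 + ‖x‖) ^ (γ - 2) := by
    intro x i
    refine (my_apply2_le v x i).trans ?_
    simpa using hvb x 2 (by norm_num)
  -- rpow multiplication helper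
  have hpow : ∀ (x : EuclideanSpace ℝ (Fin n)) (a b : ℝ),
      (1 + ‖x‖) ^ (a + b) = (1 + ‖x‖) ^ a * (1 + ‖x‖) ^ b :=
    fun x a b => Real.rpow_add (hr x) a b
  -- continuity of second derivative applications
  have hcont2 : ∀ (f : EuclideanSpace ℝ (Fin n) → ℝ), ContDiff ℝ 2 f → ∀ i,
      Continuous (fun x => iteratedFDeriv ℝ 2 f x ![myE i, myE i]) := by
    intro f hf i
    exact (continuous_eval_const _).comp (hf.continuous_iteratedFDeriv (by norm_num))
  -- integrability of u * ∂²ᵢv and v * ∂²ᵢu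
  have int1 : ∀ i, Integrable (fun x => u x * iteratedFDeriv ℝ 2 v x ![myE i, myE i]) := by
    intro i
    refine my_int_of_bound (C := K * K) (δ := β + γ - 2) (by linarith) ?_ ?_
    · exact (hu.continuous.mul (hcont2 v hv i)).aestronglyMeasurable
    · intro x
      rw [abs_mul]
      calc |u x| * |iteratedFDeriv ℝ 2 v x ![myE i, myE i]|
          ≤ (K * (1 + ‖x‖) ^ β) * (K * (1 + ‖x‖) ^ (γ - 2)) :=
            mul_le_mul (bu0 x) (bv2 x i) (abs_nonneg _) (by positivity)
        _ = K * K * (1 + ‖x‖) ^ (β + γ - 2) := by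
            rw [show β + γ - 2 = β + (γ - 2) by ring, hpow]; ring
  have int2 : ∀ i, Integrable (fun x => v x * iteratedFDeriv ℝ 2 u x ![myE i, myE i]) := by
    intro i
    refine my_int_of_bound (C := K * K) (δ := β + γ - 2) (by linarith) ?_ ?_
    · exact (hv.continuous.mul (hcont2 u hu i)).aestronglyMeasurable
    · intro x
      rw [abs_mul]
      calc |v x| * |iteratedFDeriv ℝ 2 u x ![myE i, myE i]|
          ≤ (K * (1 + ‖x‖) ^ γ) * (K * (1 + ‖x‖) ^ (β - 2)) :=
            mul_le_mul (bv0 x) (bu2 x i) (abs_nonneg _) (by positivity)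
        _ = K * K * (1 + ‖x‖) ^ (β + γ - 2) := by
            rw [show β + γ - 2 = γ + (β - 2) by ring, hpow]; ring
  -- differentiability of the first derivatives
  have hDu : Differentiable ℝ (fderiv ℝ u) :=
    (hu.fderiv_right (by norm_num : (1:WithTop ℕ∞) + 1 ≤ 2)).differentiable one_ne_zero
  have hDv : Differentiable ℝ (fderiv ℝ v) :=
    (hv.fderiv_right (by norm_num : (1:WithTop ℕ∞) + 1 ≤ 2)).differentiable one_ne_zero
  -- the key step: for each i, the integral of u ∂²ᵢ v - v ∂²ᵢ u vanishes
  have key : ∀ i, ∫ x, (u x * iteratedFDeriv ℝ 2 v x ![myE i, myE i]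
      - v x * iteratedFDeriv ℝ 2 u x ![myE i, myE i]) = 0 := by
    intro i
    set W : EuclideanSpace ℝ (Fin n) → EuclideanSpace ℝ (Fin n) →L[ℝ] ℝ := fun x =>
      (u x • ((ContinuousLinearMap.apply ℝ ℝ (myE i)).comp (fderiv ℝ (fderiv ℝ v) x)) +
        (fderiv ℝ v x (myE i)) • fderiv ℝ u x) -
      (v x • ((ContinuousLinearMap.apply ℝ ℝ (myE i)).comp (fderiv ℝ (fderiv ℝ u) x)) +
        (fderiv ℝ u x (myE i)) • fderiv ℝ v x) with hWdef
    have hAv : ∀ x, HasFDerivAt (fun y => fderiv ℝ v y (myE i))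
        ((ContinuousLinearMap.apply ℝ ℝ (myE i)).comp (fderiv ℝ (fderiv ℝ v) x)) x := by
      intro x
      exact (ContinuousLinearMap.apply ℝ ℝ (myE i)).hasFDerivAt.comp x (hDv x).hasFDerivAt
    have hAu : ∀ x, HasFDerivAt (fun y => fderiv ℝ u y (myE i))
        ((ContinuousLinearMap.apply ℝ ℝ (myE i)).comp (fderiv ℝ (fderiv ℝ u) x)) x := by
      intro x
      exact (ContinuousLinearMap.apply ℝ ℝ (myE i)).hasFDerivAt.comp x (hDu x).hasFDerivAt
    have hw : ∀ x, HasFDerivAt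
        (fun y => u y * fderiv ℝ v y (myE i) - v y * fderiv ℝ u y (myE i)) (W x) x := by
      intro x
      exact ((hu.differentiable two_ne_zero x).hasFDerivAt.mul (hAv x)).sub
        ((hv.differentiable two_ne_zero x).hasFDerivAt.mul (hAu x))
    have hval : ∀ x, W x (myE i) = u x * iteratedFDeriv ℝ 2 v x ![myE i, myE i]
        - v x * iteratedFDeriv ℝ 2 u x ![myE i, myE i] := by
      intro x
      have h2v : iteratedFDeriv ℝ 2 v x ![myE i, myE i]
          = fderiv ℝ (fderiv ℝ v) x (myE i) (myE i) := by
        rw [iteratedFDeriv_two_apply]; simp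
      have h2u : iteratedFDeriv ℝ 2 u x ![myE i, myE i]
          = fderiv ℝ (fderiv ℝ u) x (myE i) (myE i) := by
        rw [iteratedFDeriv_two_apply]; simp
      rw [hWdef]
      simp only [ContinuousLinearMap.coe_sub', Pi.sub_apply, ContinuousLinearMap.add_apply,
        ContinuousLinearMap.coe_smul', Pi.smul_apply, ContinuousLinearMap.coe_comp',
        Function.comp_apply, ContinuousLinearMap.apply_apply, smul_eq_mul, h2v, h2u]
      ring
    have hfun : (fun x => W x (myE i)) = fun x =>
        u x * iteratedFDeriv ℝ 2 v x ![myE i, myE i]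
        - v x * iteratedFDeriv ℝ 2 u x ![myE i, myE i] := funext hval
    have hint : Integrable (fun x => W x (myE i)) := by
      rw [hfun]; exact (int1 i).sub (int2 i)
    have h0 : Tendsto (fun y => u y * fderiv ℝ v y (myE i) - v y * fderiv ℝ u y (myE i))
        (cocompact (EuclideanSpace ℝ (Fin n))) (𝓝 0) := by
      have hb : ∀ y, ‖u y * fderiv ℝ v y (myE i) - v y * fderiv ℝ u y (myE i)‖ ≤
          (2 * (K * K)) * (1 + ‖y‖) ^ (β + γ - 1) := by
        intro y
        rw [Real.norm_eq_abs]
        calc |u y * fderiv ℝ v y (myE i) - v y * fderiv ℝ u y (myE i)|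
            ≤ |u y * fderiv ℝ v y (myE i)| + |v y * fderiv ℝ u y (myE i)| := abs_sub _ _
          _ ≤ (K * (1 + ‖y‖) ^ β) * (K * (1 + ‖y‖) ^ (γ - 1))
              + (K * (1 + ‖y‖) ^ γ) * (K * (1 + ‖y‖) ^ (β - 1)) := by
              rw [abs_mul, abs_mul]
              exact add_le_add
                (mul_le_mul (bu0 y) (bv1 y i) (abs_nonneg _) (by positivity))
                (mul_le_mul (bv0 y) (bu1 y i) (abs_nonneg _) (by positivity))
          _ = (2 * (K * K)) * (1 + ‖y‖) ^ (β + γ - 1) := by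
              have e1 : (1 + ‖y‖) ^ β * (1 + ‖y‖) ^ (γ - 1) = (1 + ‖y‖) ^ (β + γ - 1) := by
                rw [← Real.rpow_add (hr y)]; congr 1; ring
              have e2 : (1 + ‖y‖) ^ γ * (1 + ‖y‖) ^ (β - 1) = (1 + ‖y‖) ^ (β + γ - 1) := by
                rw [← Real.rpow_add (hr y)]; congr 1; ring
              calc K * (1 + ‖y‖) ^ β * (K * (1 + ‖y‖) ^ (γ - 1))
                  + K * (1 + ‖y‖) ^ γ * (K * (1 + ‖y‖) ^ (β - 1))
                  = K * K * ((1 + ‖y‖) ^ β * (1 + ‖y‖) ^ (γ - 1))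
                    + K * K * ((1 + ‖y‖) ^ γ * (1 + ‖y‖) ^ (β - 1)) := by ring
                _ = (2 * (K * K)) * (1 + ‖y‖) ^ (β + γ - 1) := by rw [e1, e2]; ring
      have l1 : Tendsto (fun R : ℝ => (2 * (K * K)) * (1 + R) ^ (β + γ - 1)) atTop (𝓝 0) := by
        have l2 : Tendsto (fun s : ℝ => s ^ (β + γ - 1)) atTop (𝓝 0) := by
          have := tendsto_rpow_neg_atTop (y := -(β + γ - 1)) (by linarith)
          simpa using this
        have l3 : Tendsto (fun R : ℝ => 1 + R) atTop atTop :=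
          tendsto_atTop_add_const_left _ 1 tendsto_id
        have := (l2.comp l3).const_mul (2 * (K * K))
        simpa [Function.comp_def, mul_comm] using this
      exact squeeze_zero_norm hb (l1.comp tendsto_norm_cocompact_atTop)
    have := myDivZero (myE i) hw hint h0
    rw [hfun] at this
    exact this
  -- assembling
  have eucLap_v : ∀ x, eucLap v x = ∑ i, iteratedFDeriv ℝ 2 v x ![myE i, myE i] := fun x => rfl
  have eucLap_u : ∀ x, eucLap u x = ∑ i, iteratedFDeriv ℝ 2 u x ![myE i, myE i] := fun x => rfl
  have IntUV : Integrable (fun x => u x * eucLap v x) := by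
    have : (fun x => u x * eucLap v x)
        = fun x => ∑ i, u x * iteratedFDeriv ℝ 2 v x ![myE i, myE i] := by
      funext x; rw [eucLap_v, Finset.mul_sum]
    rw [this]
    exact integrable_finset_sum _ (fun i _ => int1 i)
  have IntVU : Integrable (fun x => v x * eucLap u x) := by
    have : (fun x => v x * eucLap u x)
        = fun x => ∑ i, v x * iteratedFDeriv ℝ 2 u x ![myE i, myE i] := by
      funext x; rw [eucLap_u, Finset.mul_sum]
    rw [this]
    exact integrable_finset_sum _ (fun i _ => int2 i)
  refine ⟨IntUV, IntVU, ?_⟩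
  have hsub : ∫ x, (u x * eucLap v x - v x * eucLap u x) = 0 := by
    have hre : (fun x => u x * eucLap v x - v x * eucLap u x)
        = fun x => ∑ i, (u x * iteratedFDeriv ℝ 2 v x ![myE i, myE i]
          - v x * iteratedFDeriv ℝ 2 u x ![myE i, myE i]) := by
      funext x
      rw [eucLap_v, eucLap_u, Finset.mul_sum, Finset.mul_sum, ← Finset.sum_sub_distrib]
    rw [hre]
    rw [integral_finset_sum]
    · exact Finset.sum_eq_zero fun i _ => key i
    · exact fun i _ => (int1 i).sub (int2 i)
  rw [integral_sub IntUV IntVU] at hsub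
  linarith
end

section
/- Let n ≥ 3 be an integer and define u : ℝⁿ → ℝ by u(x) = (1 + ‖x‖²)^{(2−n)/2}. Then u is smooth, for every x ∈ ℝⁿ its Laplacian equals Δu(x) = −n(n−2)(1 + ‖x‖²)^{−(n+2)/2}, the function Δu is Lebesgue integrable on ℝⁿ, and ∫_{ℝⁿ} Δu dx = −(n−2) σ_{n−1}, where σ_{n−1} = n · vol(B₁ⁿ) is the surface measure of the unit sphere S^{n−1} ⊂ ℝⁿ (vol(B₁ⁿ) being the Lebesgue measure of the unit ball). -/
open MeasureTheory

section Aux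
open Set Filter Topology

variable {n : ℕ}


private lemma key1d (m : ℕ) :
    ∫ y in Ioi (0:ℝ), y ^ (m + 2) * (1 + y ^ 2) ^ (-((m:ℝ) + 3 + 2) / 2)
      = 1 / ((m : ℝ) + 3) := by
  have hnc : ((m:ℝ) + 3) = ((m + 3 : ℕ) : ℝ) := by push_cast; ring
  set q : ℝ := -((m:ℝ) + 3) / 2 with hq
  set F : ℝ → ℝ := fun y => y ^ (m + 3) * (1 + y ^ 2) ^ q / ((m:ℝ) + 3) with hF
  have hderiv : ∀ y ∈ Ici (0:ℝ), HasDerivAt F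
      (y ^ (m + 2) * (1 + y ^ 2) ^ (-((m:ℝ) + 3 + 2) / 2)) y := by
    intro y _
    have ht : (0:ℝ) < 1 + y ^ 2 := by positivity
    have h1 : HasDerivAt (fun y : ℝ => 1 + y ^ 2) (2 * y) y := by
      simpa using (hasDerivAt_pow 2 y).const_add 1
    have h2 : HasDerivAt (fun y : ℝ => (1 + y ^ 2) ^ q)
        (q * (1 + y ^ 2) ^ (q - 1) * (2 * y)) y :=
      by have := (Real.hasDerivAt_rpow_const (x := 1 + y ^ 2) (p := q) (Or.inl ht.ne')).comp y h1; exact this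
    have h3 := ((hasDerivAt_pow (m + 3) y).mul h2).div_const ((m:ℝ) + 3)
    refine h3.congr_deriv ?_
    symm
    have hA : (1 + y ^ 2) ^ (q - 1) * (1 + y ^ 2) = (1 + y ^ 2) ^ q := by
      rw [← Real.rpow_add_one ht.ne' (q - 1), sub_add_cancel]
    have hq1 : (-((m:ℝ) + 3 + 2) / 2) = q - 1 := by rw [hq]; ring
    have hm2 : m + 3 - 1 = m + 2 := by omega
    rw [hq1, ← hA, hm2, hq]
    push_cast
    have hne : ((m:ℝ) + 3) ≠ 0 := by positivity
    field_simp
    ring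
  have hint : IntegrableOn
      (fun y => y ^ (m + 2) * (1 + y ^ 2) ^ (-((m:ℝ) + 3 + 2) / 2)) (Ioi (0:ℝ)) := by
    have hc : Continuous (fun y : ℝ => y ^ (m + 2) * (1 + y ^ 2) ^ (-((m:ℝ) + 3 + 2) / 2)) :=
      (continuous_pow _).mul ((continuous_const.add (continuous_pow 2)).rpow_const
        (fun y => Or.inl (by exact (show (0:ℝ) < 1 + y ^ 2 by positivity).ne')))
    rw [← Ioc_union_Ioi_eq_Ioi (zero_le_one (α := ℝ))]
    refine ((hc.continuousOn.integrableOn_compact isCompact_Icc).mono_set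
      Ioc_subset_Icc_self).union ?_
    refine MeasureTheory.Integrable.mono
      (integrableOn_Ioi_rpow_of_lt (by norm_num : (-3:ℝ) < -1) one_pos)
      hc.aestronglyMeasurable.restrict (ae_restrict_of_forall_mem measurableSet_Ioi ?_)
    intro y hy
    have hy1 : (1:ℝ) < y := hy
    have hy0 : (0:ℝ) < y := lt_trans one_pos hy1
    have h1 : (1 + y ^ 2) ^ (-((m:ℝ) + 3 + 2) / 2) ≤ (y ^ 2) ^ (-((m:ℝ) + 3 + 2) / 2) := by
      apply Real.rpow_le_rpow_of_nonpos (by positivity) (by nlinarith)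
      have h0m : (0:ℝ) ≤ (m:ℝ) := Nat.cast_nonneg m
      nlinarith
    have h2 : (y:ℝ) ^ (m + 2) * (y ^ 2) ^ (-((m:ℝ) + 3 + 2) / 2) = y ^ (-3 : ℝ) := by
      rw [← Real.rpow_natCast y 2, ← Real.rpow_natCast y (m+2),
        ← Real.rpow_mul hy0.le, ← Real.rpow_add hy0]
      congr 1
      push_cast
      ring
    rw [Real.norm_eq_abs, abs_of_nonneg (by positivity), Real.norm_eq_abs,
      abs_of_nonneg (by positivity)]
    calc y ^ (m + 2) * (1 + y ^ 2) ^ (-((m:ℝ) + 3 + 2) / 2)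
        ≤ y ^ (m + 2) * (y ^ 2) ^ (-((m:ℝ) + 3 + 2) / 2) :=
          mul_le_mul_of_nonneg_left h1 (by positivity)
      _ = y ^ (-3:ℝ) := h2
  have htop : Tendsto F atTop (𝓝 (1 / ((m:ℝ) + 3))) := by
    have h0 : Tendsto (fun y : ℝ => 1 + y ^ 2) atTop atTop :=
      tendsto_atTop_add_const_left _ 1 (tendsto_pow_atTop (two_ne_zero))
    have h1 : Tendsto (fun y : ℝ => 1 - (1 + y ^ 2)⁻¹) atTop (𝓝 1) := by
      simpa using tendsto_const_nhds.sub (tendsto_inv_atTop_zero.comp h0)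
    have h2 : Tendsto (fun y : ℝ => (1 - (1 + y ^ 2)⁻¹) ^ (((m:ℝ) + 3)/2) / ((m:ℝ) + 3))
        atTop (𝓝 (1 / ((m:ℝ) + 3))) := by
      have := ((Real.continuousAt_rpow_const 1 (((m:ℝ) + 3)/2)
        (Or.inl one_ne_zero)).tendsto.comp h1).div_const ((m:ℝ) + 3)
      simpa using this
    refine h2.congr' ?_
    filter_upwards [eventually_gt_atTop (0:ℝ)] with y hy
    have ht : (0:ℝ) < 1 + y ^ 2 := by positivity
    have e1 : 1 - (1 + y ^ 2)⁻¹ = y ^ 2 / (1 + y ^ 2) := by field_simp; ring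
    have e2 : ((y ^ 2 : ℝ)) ^ (((m:ℝ) + 3)/2) = y ^ (m + 3) := by
      rw [← Real.rpow_natCast y 2, ← Real.rpow_mul hy.le,
        show ((2:ℕ):ℝ) * (((m:ℝ) + 3)/2) = ((m + 3 : ℕ):ℝ) by push_cast; ring,
        Real.rpow_natCast]
    have e3 : ((1 + y ^ 2 : ℝ)) ^ (-((m:ℝ) + 3)/2) = ((1 + y ^ 2) ^ (((m:ℝ) + 3)/2))⁻¹ := by
      rw [neg_div, ← Real.rpow_neg ht.le]
    rw [e1, Real.div_rpow (by positivity) ht.le, e2]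
    simp only [hF, hq]
    rw [e3]
    ring
  have h0 : F 0 = 0 := by
    simp [hF, zero_pow]
  have := integral_Ioi_of_hasDerivAt_of_tendsto'
    (f := F) (a := 0) (fun y hy => hderiv y hy) hint htop
  rw [this, h0, sub_zero]

private lemma key1d' (n : ℕ) (hn : 3 ≤ n) :
    ∫ y in Ioi (0:ℝ), y ^ (n - 1) * (1 + y ^ 2) ^ (-((n:ℝ) + 2) / 2) = 1 / (n:ℝ) := by
  obtain ⟨m, rfl⟩ : ∃ m, n = m + 3 := ⟨n - 3, by omega⟩
  have h1 : m + 3 - 1 = m + 2 := by omega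
  have h2 : -(((m + 3 : ℕ) : ℝ) + 2) / 2 = -((m:ℝ) + 3 + 2) / 2 := by push_cast; ring
  rw [h1, h2, key1d m]
  push_cast
  ring

private lemma aux_deriv (p : ℝ) (x : EuclideanSpace ℝ (Fin n)) :
    HasFDerivAt (fun y : EuclideanSpace ℝ (Fin n) => (1 + ‖y‖ ^ 2) ^ p)
      ((p * (1 + ‖x‖ ^ 2) ^ (p - 1) * 2) • innerSL ℝ x) x := by
  have h1 : HasFDerivAt (fun y : EuclideanSpace ℝ (Fin n) => 1 + ‖y‖ ^ 2)
      ((2:ℝ) • innerSL ℝ x) x := by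
    have := (hasFDerivAt_const (1:ℝ) x).add (hasFDerivAt_id x).norm_sq
    refine this.congr_fderiv ?_
    ext v
    simp [two_smul]
  have ht : (0:ℝ) < 1 + ‖x‖ ^ 2 := by positivity
  have h2 : HasDerivAt (fun t : ℝ => t ^ p) (p * (1 + ‖x‖ ^ 2) ^ (p - 1)) (1 + ‖x‖ ^ 2) :=
    Real.hasDerivAt_rpow_const (Or.inl ht.ne')
  have h3 := h2.comp_hasFDerivAt x h1
  refine h3.congr_fderiv ?_
  rw [smul_smul]

private lemma aux_smooth (p : ℝ) :
    ContDiff ℝ (⊤ : ℕ∞) (fun y : EuclideanSpace ℝ (Fin n) => (1 + ‖y‖ ^ 2) ^ p) := by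
  rw [contDiff_iff_contDiffAt]
  intro x
  have ht : (0:ℝ) < 1 + ‖x‖ ^ 2 := by positivity
  exact (Real.contDiffAt_rpow_const_of_ne ht.ne').comp x
    ((contDiffAt_const).add (contDiff_norm_sq ℝ).contDiffAt)

private lemma aux_fderiv (p : ℝ) :
    fderiv ℝ (fun y : EuclideanSpace ℝ (Fin n) => (1 + ‖y‖ ^ 2) ^ p)
      = fun x => (p * (1 + ‖x‖ ^ 2) ^ (p - 1) * 2) • innerSL ℝ x :=
  funext fun x => (aux_deriv p x).fderiv


end Aux

section Aux2
open Set Filter Topology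

private lemma aux_lap (n : ℕ) (p : ℝ) (x : EuclideanSpace ℝ (Fin n)) :
    eucLap (fun y => (1 + ‖y‖ ^ 2) ^ p) x
      = (n : ℝ) * (p * (1 + ‖x‖ ^ 2) ^ (p - 1) * 2)
        + (2 * (p * ((p - 1) * (1 + ‖x‖ ^ 2) ^ (p - 1 - 1) * 2))) * ‖x‖ ^ 2 := by
  set u : EuclideanSpace ℝ (Fin n) → ℝ := fun y => (1 + ‖y‖ ^ 2) ^ p with hu
  set c : EuclideanSpace ℝ (Fin n) → ℝ := fun y => p * (1 + ‖y‖ ^ 2) ^ (p - 1) * 2 with hc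
  have hd : DifferentiableAt ℝ (fderiv ℝ u) x :=
    (((aux_smooth p).fderiv_right (m := 1) (WithTop.coe_le_coe.mpr le_top)).differentiable one_ne_zero).differentiableAt
  have hswap : ∀ v, fderiv ℝ (fun y => fderiv ℝ u y v) x = (fderiv ℝ (fderiv ℝ u) x).flip v := by
    intro v
    rw [fderiv_clm_apply hd (differentiableAt_const v)]
    simp
  have hterm : ∀ i : Fin n,
      iteratedFDeriv ℝ 2 u x ![EuclideanSpace.single i 1, EuclideanSpace.single i 1]
        = c x + (2 * (p * ((p - 1) * (1 + ‖x‖ ^ 2) ^ (p - 1 - 1) * 2))) * (x i) ^ 2 := by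
    intro i
    set e : EuclideanSpace ℝ (Fin n) := EuclideanSpace.single i 1 with he
    rw [iteratedFDeriv_two_apply]
    simp only [Matrix.cons_val_zero, Matrix.cons_val_one, Matrix.head_cons]
    rw [show fderiv ℝ (fderiv ℝ u) x e e = (fderiv ℝ (fderiv ℝ u) x).flip e e from rfl,
      ← hswap e]
    have hfun : (fun y => fderiv ℝ u y e) = fun y => c y * (innerSL ℝ e) y := by
      funext y
      rw [hu, aux_fderiv]
      simp only [ContinuousLinearMap.smul_apply, smul_eq_mul, innerSL_apply_apply]
      rw [real_inner_comm]
    have hcder : HasFDerivAt c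
        (((2:ℝ)) • ((p : ℝ) • (((p - 1) * (1 + ‖x‖ ^ 2) ^ (p - 1 - 1) * 2) • innerSL ℝ x))) x := by
      exact ((aux_deriv (p - 1) x).const_mul p).mul_const 2
    have hmul := hcder.mul ((innerSL ℝ e).hasFDerivAt (x := x))
    rw [hfun, HasFDerivAt.fderiv (f := fun y => c y * (innerSL ℝ e) y) hmul]
    simp only [ContinuousLinearMap.add_apply, ContinuousLinearMap.smul_apply, smul_eq_mul,
      innerSL_apply_apply]
    rw [he]
    rw [EuclideanSpace.inner_single_left, EuclideanSpace.inner_single_right]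
    simp [EuclideanSpace.single_apply, hc, EuclideanSpace.inner_single_left]
    ring
  rw [eucLap]
  rw [Finset.sum_congr rfl (fun i _ => hterm i)]
  rw [Finset.sum_add_distrib, Finset.sum_const, Finset.card_univ, Fintype.card_fin,
    ← Finset.mul_sum]
  have hns : ∑ i : Fin n, (x i) ^ 2 = ‖x‖ ^ 2 := by
    rw [EuclideanSpace.norm_eq, Real.sq_sqrt (by positivity)]
    simp [Real.norm_eq_abs, sq_abs]
  rw [hns, nsmul_eq_mul]

/-- For `n ≥ 3` and `u(x) = (1+‖x‖²)^{(2-n)/2}`: `u` is smooth,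
`Δu(x) = -n(n-2)(1+‖x‖²)^{-(n+2)/2}`, `Δu` is integrable and
`∫ Δu = -(n-2)σ_{n-1}` with `σ_{n-1} = n·vol(B₁ⁿ)`. -/
theorem stmt10 (n : ℕ) (hn : 3 ≤ n)
    (u : EuclideanSpace ℝ (Fin n) → ℝ)
    (hu : u = fun x => (1 + ‖x‖ ^ 2) ^ ((2 - (n : ℝ)) / 2)) :
    ContDiff ℝ (⊤ : ℕ∞) u ∧
    (∀ x : EuclideanSpace ℝ (Fin n),
      eucLap u x = -((n : ℝ) * ((n : ℝ) - 2)) * (1 + ‖x‖ ^ 2) ^ (-((n : ℝ) + 2) / 2)) ∧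
    Integrable (fun x => eucLap u x) ∧
    ∫ x, eucLap u x
      = -((n : ℝ) - 2) *
          ((n : ℝ) * (volume (Metric.ball (0 : EuclideanSpace ℝ (Fin n)) 1)).toReal) := by
  subst hu
  have hlap : ∀ x : EuclideanSpace ℝ (Fin n),
      eucLap (fun y : EuclideanSpace ℝ (Fin n) => (1 + ‖y‖ ^ 2) ^ ((2 - (n : ℝ)) / 2)) x
        = -((n : ℝ) * ((n : ℝ) - 2)) * (1 + ‖x‖ ^ 2) ^ (-((n : ℝ) + 2) / 2) := by
    intro x
    rw [aux_lap]
    have ht : (0:ℝ) < 1 + ‖x‖ ^ 2 := by positivity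
    have e1 : (2 - (n : ℝ)) / 2 - 1 - 1 = -((n:ℝ) + 2) / 2 := by ring
    have e2 : (1 + ‖x‖ ^ 2) ^ ((2 - (n : ℝ)) / 2 - 1)
        = (1 + ‖x‖ ^ 2) ^ ((2 - (n : ℝ)) / 2 - 1 - 1) * (1 + ‖x‖ ^ 2) := by
      rw [← Real.rpow_add_one ht.ne', sub_add_cancel]
    rw [e2, e1]
    ring
  have hint : Integrable (fun x : EuclideanSpace ℝ (Fin n) =>
      -((n : ℝ) * ((n : ℝ) - 2)) * (1 + ‖x‖ ^ 2) ^ (-((n : ℝ) + 2) / 2)) := by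
    refine (integrable_rpow_neg_one_add_norm_sq (μ := volume) (r := (n:ℝ) + 2) ?_).const_mul _
    rw [finrank_euclideanSpace_fin]
    linarith
  refine ⟨aux_smooth _, hlap, by simp only [hlap]; exact hint, ?_⟩
  haveI : Nonempty (Fin n) := ⟨⟨0, by omega⟩⟩
  haveI : Nontrivial (EuclideanSpace ℝ (Fin n)) :=
    ⟨⟨EuclideanSpace.single ⟨0, by omega⟩ 1, 0, by
      intro h
      simpa using congrArg norm h⟩⟩
  simp only [hlap]
  have hmain := integral_fun_norm_addHaar (volume : Measure (EuclideanSpace ℝ (Fin n)))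
    (fun r : ℝ => -((n : ℝ) * ((n : ℝ) - 2)) * (1 + r ^ 2) ^ (-((n : ℝ) + 2) / 2))
  rw [finrank_euclideanSpace_fin] at hmain
  rw [hmain]
  have hinner : (∫ y in Ioi (0:ℝ), y ^ (n - 1) •
      (-((n : ℝ) * ((n : ℝ) - 2)) * (1 + y ^ 2) ^ (-((n : ℝ) + 2) / 2)))
      = -((n : ℝ) * ((n : ℝ) - 2)) * (1 / (n:ℝ)) := by
    rw [show (fun y : ℝ => y ^ (n - 1) •
        (-((n : ℝ) * ((n : ℝ) - 2)) * (1 + y ^ 2) ^ (-((n : ℝ) + 2) / 2)))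
        = fun y : ℝ => -((n : ℝ) * ((n : ℝ) - 2)) *
          (y ^ (n - 1) * (1 + y ^ 2) ^ (-((n : ℝ) + 2) / 2)) from
      funext fun y => by simp only [smul_eq_mul]; ring]
    rw [integral_const_mul, key1d' n hn]
  rw [hinner, nsmul_eq_mul, smul_eq_mul]
  rw [measureReal_def]
  have hnne : (n:ℝ) ≠ 0 := by positivity
  field_simp
end Aux2
end

section
/- Let n ≥ 3 be an integer and let β ∈ ℝ with −n < β < −2. Then there exists a constant C > 0 such that for every y ∈ ℝⁿ, ∫_{ℝⁿ} ‖x − y‖^{2−n} (1 + ‖x‖²)^{β/2} dx ≤ C (1 + ‖y‖²)^{(β+2)/2}. -/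
open MeasureTheory Metric ENNReal

lemma dyadic {t : ℝ} (h1 : 1 ≤ t) : ∃ k : ℕ, (2:ℝ)^k ≤ t ∧ t < 2^(k+1) := by
  classical
  have hP : ∃ k : ℕ, t < (2:ℝ)^(k+1) := by
    obtain ⟨m, hm⟩ := pow_unbounded_of_one_lt t (one_lt_two (α := ℝ))
    exact ⟨m, lt_of_lt_of_le hm (by apply pow_le_pow_right₀ one_le_two; omega)⟩
  refine ⟨Nat.find hP, ?_, Nat.find_spec hP⟩
  rcases Nat.eq_zero_or_pos (Nat.find hP) with h0 | hpos
  · rw [h0]; simpa using h1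
  · have h := Nat.find_min hP (Nat.sub_lt hpos one_pos)
    push_neg at h
    have : Nat.find hP - 1 + 1 = Nat.find hP := by omega
    rwa [this] at h

variable {n : ℕ}

local notation "E" => EuclideanSpace ℝ (Fin n)

lemma norm_single_one (hn : 0 < n) :
    ‖(EuclideanSpace.single (⟨0, hn⟩ : Fin n) (1:ℝ))‖ = 1 := by
  simp [EuclideanSpace.norm_single]

lemma euclid_nontrivial (hn : 0 < n) : Nontrivial E := by
  refine ⟨⟨EuclideanSpace.single (⟨0, hn⟩ : Fin n) (1:ℝ), 0, ?_⟩⟩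
  intro h
  have := norm_single_one hn
  rw [h] at this
  simp at this

lemma volume_singleton_zero (hn : 0 < n) : (volume : Measure E) ({0} : Set E) = 0 := by
  have h1 : ({0} : Set E) = closedBall 0 0 := by simp
  rw [h1, Measure.addHaar_closedBall _ _ le_rfl, finrank_euclideanSpace_fin,
    zero_pow (by omega : n ≠ 0), ENNReal.ofReal_zero, zero_mul]

lemma ball_lemma (hn : 0 < n) {p : ℝ} (hp1 : -(n:ℝ) < p) (hp2 : p < 0) :
    ∃ K : ℝ≥0∞, K ≠ ⊤ ∧ ∀ R : ℝ, 0 < R →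
      ∫⁻ z in ball (0 : E) R, ENNReal.ofReal (‖z‖ ^ p) ≤ K * ENNReal.ofReal (R ^ (p + n)) := by
  haveI := euclid_nontrivial hn
  set μB : ℝ≥0∞ := volume (ball (0 : E) 1) with hμB
  have hμBfin : μB ≠ ⊤ := measure_ball_lt_top.ne
  set a : ℝ≥0∞ := ENNReal.ofReal ((2:ℝ) ^ (-(p + n))) with ha
  have ha1 : a < 1 := by
    rw [ha, ← ENNReal.ofReal_one]
    exact ENNReal.ofReal_lt_ofReal_iff_of_nonneg (by positivity) |>.mpr
      (Real.rpow_lt_one_of_one_lt_of_neg one_lt_two (by linarith))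
  have hK : ENNReal.ofReal ((2:ℝ) ^ (-p)) * μB * (1 - a)⁻¹ ≠ ⊤ := by
    apply ENNReal.mul_ne_top (ENNReal.mul_ne_top ENNReal.ofReal_ne_top hμBfin)
    simp only [ne_eq, ENNReal.inv_eq_top, tsub_eq_zero_iff_le, not_le]
    exact ha1
  refine ⟨_, hK, fun R hR => ?_⟩
  set B : ℕ → Set E := fun k => closedBall (0:E) (R / 2^k) \ closedBall (0:E) (R / 2^(k+1)) with hB
  have hcover : ball (0:E) R \ {0} ⊆ ⋃ k, B k := by
    rintro z ⟨hz, hz0⟩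
    rw [Set.mem_singleton_iff] at hz0
    rw [mem_ball_zero_iff] at hz
    have hzpos : 0 < ‖z‖ := norm_pos_iff.mpr hz0
    obtain ⟨k, hk1, hk2⟩ := dyadic (t := R / ‖z‖) ((one_le_div hzpos).mpr hz.le)
    refine Set.mem_iUnion.mpr ⟨k, ?_, ?_⟩
    · rw [mem_closedBall_zero_iff]
      rw [le_div_iff₀ hzpos] at hk1
      rw [le_div_iff₀ (by positivity)]
      linarith
    · rw [mem_closedBall_zero_iff]
      rw [div_lt_iff₀ hzpos] at hk2
      intro hle
      rw [le_div_iff₀ (by positivity)] at hle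
      linarith [mul_comm ‖z‖ ((2:ℝ)^(k+1))]
  have hae : ∫⁻ z in ball (0:E) R, ENNReal.ofReal (‖z‖ ^ p)
      = ∫⁻ z in ball (0:E) R \ {0}, ENNReal.ofReal (‖z‖ ^ p) := by
    refine (setLIntegral_congr ?_).symm
    refine MeasureTheory.ae_eq_set.mpr ⟨?_, ?_⟩
    · refine measure_mono_null ?_ (volume_singleton_zero hn)
      intro x hx
      exact (hx.2 hx.1.1).elim
    · refine measure_mono_null ?_ (volume_singleton_zero hn)
      intro x hx
      by_contra hx0
      exact hx.2 ⟨hx.1, hx0⟩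
  -- term bound
  have hterm : ∀ k : ℕ, ∫⁻ z in B k, ENNReal.ofReal (‖z‖ ^ p)
      ≤ ENNReal.ofReal ((R / 2^(k+1)) ^ p * (R / 2^k) ^ (n:ℕ)) * μB := by
    intro k
    have hstep : ∫⁻ z in B k, ENNReal.ofReal (‖z‖ ^ p)
        ≤ ∫⁻ _ in B k, ENNReal.ofReal ((R / 2^(k+1)) ^ p) := by
      refine setLIntegral_mono measurable_const (fun z hz => ?_)
      refine ENNReal.ofReal_le_ofReal ?_
      have h2 : R / 2^(k+1) < ‖z‖ := by
        have := hz.2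
        rw [mem_closedBall_zero_iff] at this
        push_neg at this
        exact this
      exact Real.rpow_le_rpow_of_nonpos (by positivity) h2.le hp2.le
    refine hstep.trans ?_
    rw [setLIntegral_const]
    have hmeas : volume (B k) ≤ ENNReal.ofReal ((R / 2^k) ^ (n:ℕ)) * μB := by
      refine le_trans (measure_mono Set.diff_subset) ?_
      rw [Measure.addHaar_closedBall _ _ (by positivity), finrank_euclideanSpace_fin]
    calc ENNReal.ofReal ((R / 2^(k+1)) ^ p) * volume (B k)
        ≤ ENNReal.ofReal ((R / 2^(k+1)) ^ p) * (ENNReal.ofReal ((R / 2^k) ^ (n:ℕ)) * μB) :=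
          mul_le_mul_right hmeas _
      _ = ENNReal.ofReal ((R / 2^(k+1)) ^ p * (R / 2^k) ^ (n:ℕ)) * μB := by
          rw [ENNReal.ofReal_mul (by positivity), mul_assoc]
  -- real identity
  have hreal : ∀ k : ℕ, (R / 2^(k+1)) ^ p * ((R / 2^k) ^ (n:ℕ) : ℝ)
      = R ^ (p + n) * (2:ℝ) ^ (-p) * ((2:ℝ) ^ (-(p + (n:ℝ)))) ^ (k:ℕ) := by
    intro k
    have h2 : (0:ℝ) < 2 := two_pos
    have c1 : ((2:ℝ)^(k+1)) ^ p = (2:ℝ) ^ (((k:ℝ)+1) * p) := by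
      rw [← Real.rpow_natCast 2 (k+1), ← Real.rpow_mul h2.le]
      push_cast
      ring_nf
    have c2 : (((2:ℝ)^k) ^ n : ℝ) = (2:ℝ) ^ ((k:ℝ)*(n:ℝ)) := by
      rw [← pow_mul, ← Real.rpow_natCast 2 (k*n)]
      push_cast
      ring_nf
    have c4 : ((2:ℝ) ^ (-(p+(n:ℝ))))^(k:ℕ) = (2:ℝ) ^ (-(p+(n:ℝ)) * k) := by
      rw [← Real.rpow_natCast ((2:ℝ) ^ (-(p+(n:ℝ)))) k, ← Real.rpow_mul h2.le]
    rw [Real.div_rpow hR.le (by positivity), div_pow, c1, c2, c4,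
      ← Real.rpow_natCast R n, div_mul_div_comm, ← Real.rpow_add hR,
      ← Real.rpow_add h2, div_eq_mul_inv, ← Real.rpow_neg h2.le, mul_assoc,
      ← Real.rpow_add h2]
    congr 1
    · congr 1
      ring
  calc ∫⁻ z in ball (0:E) R, ENNReal.ofReal (‖z‖ ^ p)
      = ∫⁻ z in ball (0:E) R \ {0}, ENNReal.ofReal (‖z‖ ^ p) := hae
    _ ≤ ∫⁻ z in ⋃ k, B k, ENNReal.ofReal (‖z‖ ^ p) := lintegral_mono_set hcover
    _ ≤ ∑' k, ∫⁻ z in B k, ENNReal.ofReal (‖z‖ ^ p) := lintegral_iUnion_le _ _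
    _ ≤ ∑' k, ENNReal.ofReal ((R / 2^(k+1)) ^ p * (R / 2^k) ^ (n:ℕ)) * μB :=
        ENNReal.tsum_le_tsum (fun k => hterm k)
    _ = ∑' k, (ENNReal.ofReal (R^(p+(n:ℝ))) * ENNReal.ofReal ((2:ℝ)^(-p)) * μB) * a^k := by
        refine tsum_congr (fun k => ?_)
        rw [hreal k, ENNReal.ofReal_mul (by positivity), ENNReal.ofReal_mul (by positivity),
          ENNReal.ofReal_pow (by positivity)]
        ring
    _ = (ENNReal.ofReal (R^(p+(n:ℝ))) * ENNReal.ofReal ((2:ℝ)^(-p)) * μB) * (1-a)⁻¹ := by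
        rw [ENNReal.tsum_mul_left, ENNReal.tsum_geometric]
    _ = (ENNReal.ofReal ((2:ℝ)^(-p)) * μB * (1-a)⁻¹) * ENNReal.ofReal (R^(p+(n:ℝ))) := by
        ring


lemma compl_lemma (hn : 0 < n) {q : ℝ} (hq : q + (n:ℝ) < 0) :
    ∃ K : ℝ≥0∞, K ≠ ⊤ ∧ ∀ R : ℝ, 0 < R →
      ∫⁻ z in (ball (0 : E) R)ᶜ, ENNReal.ofReal (‖z‖ ^ q) ≤ K * ENNReal.ofReal (R ^ (q + n)) := by
  have hq0 : q < 0 := by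
    have : (0:ℝ) < n := by exact_mod_cast hn
    linarith
  set μB : ℝ≥0∞ := volume (ball (0 : E) 1) with hμB
  have hμBfin : μB ≠ ⊤ := measure_ball_lt_top.ne
  set a : ℝ≥0∞ := ENNReal.ofReal ((2:ℝ) ^ (q + (n:ℝ))) with ha
  have ha1 : a < 1 := by
    rw [ha, ← ENNReal.ofReal_one]
    exact ENNReal.ofReal_lt_ofReal_iff_of_nonneg (by positivity) |>.mpr
      (Real.rpow_lt_one_of_one_lt_of_neg one_lt_two hq)
  have hK : ENNReal.ofReal ((2:ℝ) ^ (n:ℝ)) * μB * (1 - a)⁻¹ ≠ ⊤ := by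
    apply ENNReal.mul_ne_top (ENNReal.mul_ne_top ENNReal.ofReal_ne_top hμBfin)
    simp only [ne_eq, ENNReal.inv_eq_top, tsub_eq_zero_iff_le, not_le]
    exact ha1
  refine ⟨_, hK, fun R hR => ?_⟩
  set C : ℕ → Set E := fun k => closedBall (0:E) (R * 2^(k+1)) \ ball (0:E) (R * 2^k) with hC
  have hcover : (ball (0:E) R)ᶜ ⊆ ⋃ k, C k := by
    intro z hz
    rw [Set.mem_compl_iff, mem_ball_zero_iff, not_lt] at hz
    have hzpos : 0 < ‖z‖ := lt_of_lt_of_le hR hz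
    obtain ⟨k, hk1, hk2⟩ := dyadic (t := ‖z‖ / R) ((one_le_div hR).mpr hz)
    refine Set.mem_iUnion.mpr ⟨k, ?_, ?_⟩
    · rw [mem_closedBall_zero_iff]
      rw [div_lt_iff₀ hR] at hk2
      nlinarith
    · rw [mem_ball_zero_iff, not_lt]
      rw [le_div_iff₀ hR] at hk1
      nlinarith
  have hterm : ∀ k : ℕ, ∫⁻ z in C k, ENNReal.ofReal (‖z‖ ^ q)
      ≤ ENNReal.ofReal ((R * 2^k) ^ q * (R * 2^(k+1)) ^ (n:ℕ)) * μB := by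
    intro k
    have hstep : ∫⁻ z in C k, ENNReal.ofReal (‖z‖ ^ q)
        ≤ ∫⁻ _ in C k, ENNReal.ofReal ((R * 2^k) ^ q) := by
      refine setLIntegral_mono measurable_const (fun z hz => ?_)
      refine ENNReal.ofReal_le_ofReal ?_
      have h2 : R * 2^k ≤ ‖z‖ := by
        have := hz.2
        rw [mem_ball_zero_iff, not_lt] at this
        exact this
      exact Real.rpow_le_rpow_of_nonpos (by positivity) h2 hq0.le
    refine hstep.trans ?_
    rw [setLIntegral_const]
    have hmeas : volume (C k) ≤ ENNReal.ofReal ((R * 2^(k+1)) ^ (n:ℕ)) * μB := by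
      refine le_trans (measure_mono Set.diff_subset) ?_
      rw [Measure.addHaar_closedBall _ _ (by positivity), finrank_euclideanSpace_fin]
    calc ENNReal.ofReal ((R * 2^k) ^ q) * volume (C k)
        ≤ ENNReal.ofReal ((R * 2^k) ^ q) * (ENNReal.ofReal ((R * 2^(k+1)) ^ (n:ℕ)) * μB) :=
          mul_le_mul_right hmeas _
      _ = ENNReal.ofReal ((R * 2^k) ^ q * (R * 2^(k+1)) ^ (n:ℕ)) * μB := by
          rw [ENNReal.ofReal_mul (by positivity), mul_assoc]
  have hreal : ∀ k : ℕ, (R * 2^k) ^ q * ((R * 2^(k+1)) ^ (n:ℕ) : ℝ)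
      = R ^ (q + (n:ℝ)) * (2:ℝ) ^ ((n:ℝ)) * ((2:ℝ) ^ (q + (n:ℝ))) ^ (k:ℕ) := by
    intro k
    have h2 : (0:ℝ) < 2 := two_pos
    have c1 : ((2:ℝ)^k) ^ q = (2:ℝ) ^ ((k:ℝ) * q) := by
      rw [← Real.rpow_natCast 2 k, ← Real.rpow_mul h2.le]
    have c2 : (((2:ℝ)^(k+1)) ^ n : ℝ) = (2:ℝ) ^ (((k:ℝ)+1)*(n:ℝ)) := by
      rw [← pow_mul, ← Real.rpow_natCast 2 ((k+1)*n)]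
      push_cast
      ring_nf
    have c4 : ((2:ℝ) ^ (q+(n:ℝ)))^(k:ℕ) = (2:ℝ) ^ ((q+(n:ℝ)) * k) := by
      rw [← Real.rpow_natCast ((2:ℝ) ^ (q+(n:ℝ))) k, ← Real.rpow_mul h2.le]
    rw [Real.mul_rpow hR.le (by positivity), mul_pow, c1, c2, c4,
      ← Real.rpow_natCast R n, mul_mul_mul_comm, ← Real.rpow_add hR,
      ← Real.rpow_add h2, mul_assoc, ← Real.rpow_add h2]
    congr 1
    · congr 1
      ring
  calc ∫⁻ z in (ball (0:E) R)ᶜ, ENNReal.ofReal (‖z‖ ^ q)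
      ≤ ∫⁻ z in ⋃ k, C k, ENNReal.ofReal (‖z‖ ^ q) := lintegral_mono_set hcover
    _ ≤ ∑' k, ∫⁻ z in C k, ENNReal.ofReal (‖z‖ ^ q) := lintegral_iUnion_le _ _
    _ ≤ ∑' k, ENNReal.ofReal ((R * 2^k) ^ q * (R * 2^(k+1)) ^ (n:ℕ)) * μB :=
        ENNReal.tsum_le_tsum (fun k => hterm k)
    _ = ∑' k, (ENNReal.ofReal (R^(q+(n:ℝ))) * ENNReal.ofReal ((2:ℝ)^((n:ℝ))) * μB) * a^k := by
        refine tsum_congr (fun k => ?_)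
        rw [hreal k, ENNReal.ofReal_mul (by positivity), ENNReal.ofReal_mul (by positivity),
          ENNReal.ofReal_pow (by positivity)]
        ring
    _ = (ENNReal.ofReal (R^(q+(n:ℝ))) * ENNReal.ofReal ((2:ℝ)^((n:ℝ))) * μB) * (1-a)⁻¹ := by
        rw [ENNReal.tsum_mul_left, ENNReal.tsum_geometric]
    _ = (ENNReal.ofReal ((2:ℝ)^((n:ℝ))) * μB * (1-a)⁻¹) * ENNReal.ofReal (R^(q+(n:ℝ))) := by
        ring


lemma trans_ball (y : E) (r : ℝ) (p : ℝ) :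
    ∫⁻ x in ball y r, ENNReal.ofReal (‖x - y‖ ^ p)
      = ∫⁻ z in ball (0:E) r, ENNReal.ofReal (‖z‖ ^ p) := by
  have h := (measurePreserving_add_right (volume : Measure E) y).setLIntegral_comp_preimage_emb
    (measurableEmbedding_addRight y) (fun x => ENNReal.ofReal (‖x - y‖ ^ p)) (ball y r)
  have hpre : (fun x => x + y) ⁻¹' (ball y r) = ball (0:E) r := by
    ext x
    simp [mem_ball, dist_eq_norm]
  rw [hpre] at h
  rw [← h]
  refine setLIntegral_congr_fun measurableSet_ball (fun z _ => ?_)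
  simp

open MeasureTheory
/-- Kernel estimate: for `n ≥ 3` and `-n < β < -2` there is `C > 0` with
`∫ ‖x-y‖^{2-n} (1+‖x‖²)^{β/2} dx ≤ C (1+‖y‖²)^{(β+2)/2}` for all `y ∈ ℝⁿ`. -/
theorem stmt11 (n : ℕ) (hn : 3 ≤ n) (β : ℝ) (hβ : -(n : ℝ) < β) (hβ' : β < -2) :
    ∃ C : ℝ, 0 < C ∧ ∀ y : EuclideanSpace ℝ (Fin n),
      (∫⁻ x : EuclideanSpace ℝ (Fin n),
          ENNReal.ofReal (‖x - y‖ ^ (2 - (n : ℝ)) * (1 + ‖x‖ ^ 2) ^ (β / 2)))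
        ≤ ENNReal.ofReal (C * (1 + ‖y‖ ^ 2) ^ ((β + 2) / 2)) := by
  have hn0 : 0 < n := by omega
  have hn3 : (3:ℝ) ≤ (n:ℝ) := by exact_mod_cast hn
  obtain ⟨K1, hK1, hball1⟩ := ball_lemma hn0 (p := 2 - (n:ℝ)) (by linarith) (by linarith)
  obtain ⟨K2, hK2, hball2⟩ := ball_lemma hn0 (p := β) (by linarith) (by linarith)
  obtain ⟨K3, hK3, hcompl⟩ := compl_lemma hn0 (q := 2 - (n:ℝ) + β) (by linarith)
  set Kt : ℝ≥0∞ := K1 * ENNReal.ofReal (((2:ℝ)^(β+2))⁻¹)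
    + (ENNReal.ofReal ((2:ℝ)^((n:ℝ)-2) * (2:ℝ)^(β+(n:ℝ))) * K2
    + ENNReal.ofReal ((2:ℝ)^((n:ℝ)-2) * (2:ℝ)^(β+2)) * K3) with hKt
  have hKtfin : Kt ≠ ⊤ := by
    rw [hKt]
    refine ENNReal.add_ne_top.mpr ⟨ENNReal.mul_ne_top hK1 ENNReal.ofReal_ne_top,
      ENNReal.add_ne_top.mpr ⟨ENNReal.mul_ne_top ENNReal.ofReal_ne_top hK2,
        ENNReal.mul_ne_top ENNReal.ofReal_ne_top hK3⟩⟩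
  have main : ∀ y : EuclideanSpace ℝ (Fin n),
      (∫⁻ x : EuclideanSpace ℝ (Fin n),
          ENNReal.ofReal (‖x - y‖ ^ (2 - (n : ℝ)) * (1 + ‖x‖ ^ 2) ^ (β / 2)))
        ≤ Kt * ENNReal.ofReal ((1 + ‖y‖ ^ 2) ^ ((β + 2) / 2)) := by
    intro y
    set f : EuclideanSpace ℝ (Fin n) → ℝ≥0∞ :=
      fun x => ENNReal.ofReal (‖x - y‖ ^ (2 - (n : ℝ)) * (1 + ‖x‖ ^ 2) ^ (β / 2)) with hf
    have hbase : (0:ℝ) < 1 + ‖y‖^2 := by positivity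
    set R : ℝ := (1 + ‖y‖^2) ^ ((1:ℝ)/2) with hRdef
    have hR1 : 1 ≤ R := Real.one_le_rpow (by nlinarith [sq_nonneg ‖y‖]) (by norm_num)
    have hR0 : (0:ℝ) < R := lt_of_lt_of_le one_pos hR1
    have hRsq : R^2 = 1 + ‖y‖^2 := by
      rw [hRdef, ← Real.rpow_natCast ((1 + ‖y‖^2) ^ ((1:ℝ)/2)) 2, ← Real.rpow_mul hbase.le]
      norm_num
    have hyR : ‖y‖ ≤ R := by nlinarith [norm_nonneg y]
    have hRtarget : ENNReal.ofReal (R ^ (β+2)) = ENNReal.ofReal ((1+‖y‖^2)^((β+2)/2)) := by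
      rw [hRdef, ← Real.rpow_mul hbase.le, show (1:ℝ)/2*(β+2) = (β+2)/2 from by ring]
    set S1 : Set (EuclideanSpace ℝ (Fin n)) := ball y (R/2) with hS1
    set S2 : Set (EuclideanSpace ℝ (Fin n)) := ball (0:EuclideanSpace ℝ (Fin n)) (2*R) \ S1 with hS2
    set S3 : Set (EuclideanSpace ℝ (Fin n)) := (ball (0:EuclideanSpace ℝ (Fin n)) (2*R))ᶜ with hS3
    have huniv : (Set.univ : Set (EuclideanSpace ℝ (Fin n))) ⊆ S1 ∪ (S2 ∪ S3) := by
      intro x _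
      by_cases h1 : x ∈ S1
      · exact Or.inl h1
      by_cases h2 : x ∈ ball (0:EuclideanSpace ℝ (Fin n)) (2*R)
      · exact Or.inr (Or.inl ⟨h2, h1⟩)
      · exact Or.inr (Or.inr h2)
    -- Piece 1
    have hT1 : ∫⁻ x in S1, f x ≤ (K1 * ENNReal.ofReal (((2:ℝ)^(β+2))⁻¹)) * ENNReal.ofReal (R^(β+2)) := by
      have hw1 : ∀ x ∈ S1, (1+‖x‖^2)^(β/2) ≤ (R/2)^β := by
        intro x hx
        rw [hS1, mem_ball, dist_eq_norm] at hx
        have h1 : ‖y‖ ≤ ‖x‖ + R/2 := by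
          have h := norm_sub_norm_le y x
          rw [norm_sub_rev y x] at h
          linarith
        have h2 : (R/2)^2 ≤ 1 + ‖x‖^2 := by nlinarith [norm_nonneg x, norm_nonneg y, sq_nonneg (R/2 - ‖x‖)]
        have h3 : (1+‖x‖^2)^(β/2) ≤ ((R/2)^2)^(β/2) :=
          Real.rpow_le_rpow_of_nonpos (by positivity) h2 (by linarith)
        refine h3.trans_eq ?_
        rw [← Real.rpow_natCast (R/2) 2, ← Real.rpow_mul (by positivity),
          show ((2:ℕ):ℝ)*(β/2) = β from by push_cast; ring]
      calc ∫⁻ x in S1, f x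
          ≤ ∫⁻ x in S1, ENNReal.ofReal (‖x-y‖^(2-(n:ℝ))) * ENNReal.ofReal ((R/2)^β) := by
            refine setLIntegral_mono ?_ (fun x hx => ?_)
            · exact (Measurable.ennreal_ofReal (by fun_prop)).mul_const _
            · simp only [hf]
              rw [ENNReal.ofReal_mul (by positivity)]
              exact mul_le_mul_right (ENNReal.ofReal_le_ofReal (hw1 x hx)) _
        _ = (∫⁻ x in S1, ENNReal.ofReal (‖x-y‖^(2-(n:ℝ)))) * ENNReal.ofReal ((R/2)^β) :=
            lintegral_mul_const' _ _ ENNReal.ofReal_ne_top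
        _ ≤ (K1 * ENNReal.ofReal ((R/2)^((2-(n:ℝ)) + n))) * ENNReal.ofReal ((R/2)^β) := by
            refine mul_le_mul' ?_ le_rfl
            rw [hS1, trans_ball y (R/2) (2-(n:ℝ))]
            exact hball1 (R/2) (by positivity)
        _ = (K1 * ENNReal.ofReal (((2:ℝ)^(β+2))⁻¹)) * ENNReal.ofReal (R^(β+2)) := by
            have hre1 : (R/2)^((2-(n:ℝ))+(n:ℝ)) * (R/2)^β = ((2:ℝ)^(β+2))⁻¹ * R^(β+2) := by
              rw [Real.div_rpow hR0.le (by norm_num), Real.div_rpow hR0.le (by norm_num)]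
              simp only [div_eq_mul_inv, Real.rpow_def_of_pos hR0,
                Real.rpow_def_of_pos (show (0:ℝ) < 2 by norm_num), ← Real.exp_neg, ← Real.exp_add]
              congr 1
              ring
            rw [mul_assoc, ← ENNReal.ofReal_mul (by positivity), hre1,
              ENNReal.ofReal_mul (by positivity), ← mul_assoc]
    -- Piece 2
    have hae0 : ∀ᵐ x : EuclideanSpace ℝ (Fin n) ∂volume, x ≠ 0 := by
      rw [MeasureTheory.ae_iff]
      convert volume_singleton_zero hn0 using 2
      ext x
      simp
    have hwt : ∀ x : EuclideanSpace ℝ (Fin n), x ≠ 0 → (1+‖x‖^2)^(β/2) ≤ ‖x‖^β := by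
      intro x hx0
      have hx0' : (0:ℝ) < ‖x‖ := norm_pos_iff.mpr hx0
      have h : (1+‖x‖^2)^(β/2) ≤ (‖x‖^2)^(β/2) :=
        Real.rpow_le_rpow_of_nonpos (by positivity) (by nlinarith) (by linarith)
      refine h.trans_eq ?_
      rw [← Real.rpow_natCast ‖x‖ 2, ← Real.rpow_mul (norm_nonneg x),
        show ((2:ℕ):ℝ)*(β/2) = β from by push_cast; ring]
    have hT2 : ∫⁻ x in S2, f x
        ≤ (ENNReal.ofReal ((2:ℝ)^((n:ℝ)-2) * (2:ℝ)^(β+(n:ℝ))) * K2) * ENNReal.ofReal (R^(β+2)) := by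
      calc ∫⁻ x in S2, f x
          ≤ ∫⁻ x in S2, ENNReal.ofReal ((R/2)^(2-(n:ℝ))) * ENNReal.ofReal (‖x‖^β) := by
            refine setLIntegral_mono_ae
              ((Measurable.ennreal_ofReal (by fun_prop)).const_mul _).aemeasurable ?_
            filter_upwards [hae0] with x hx0 hxS
            have hker : ‖x - y‖^(2-(n:ℝ)) ≤ (R/2)^(2-(n:ℝ)) := by
              refine Real.rpow_le_rpow_of_nonpos (by positivity) ?_ (by linarith)
              have h := hxS.2
              rw [hS1, mem_ball, dist_eq_norm] at h
              push_neg at h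
              exact h
            simp only [hf]
            rw [← ENNReal.ofReal_mul (by positivity)]
            exact ENNReal.ofReal_le_ofReal
              (mul_le_mul hker (hwt x hx0) (by positivity) (by positivity))
        _ = ENNReal.ofReal ((R/2)^(2-(n:ℝ))) * ∫⁻ x in S2, ENNReal.ofReal (‖x‖^β) :=
            lintegral_const_mul' _ _ ENNReal.ofReal_ne_top
        _ ≤ ENNReal.ofReal ((R/2)^(2-(n:ℝ))) * (K2 * ENNReal.ofReal ((2*R)^(β + n))) := by
            refine mul_le_mul' le_rfl ?_
            refine le_trans (lintegral_mono_set (hS2 ▸ Set.diff_subset)) ?_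
            exact hball2 (2*R) (by positivity)
        _ = (ENNReal.ofReal ((2:ℝ)^((n:ℝ)-2) * (2:ℝ)^(β+(n:ℝ))) * K2) * ENNReal.ofReal (R^(β+2)) := by
            have hre2 : (R/2)^(2-(n:ℝ)) * (2*R)^(β+(n:ℝ))
                = ((2:ℝ)^((n:ℝ)-2) * (2:ℝ)^(β+(n:ℝ))) * R^(β+2) := by
              rw [Real.div_rpow hR0.le (by norm_num), Real.mul_rpow (by norm_num) hR0.le]
              simp only [div_eq_mul_inv, Real.rpow_def_of_pos hR0,
                Real.rpow_def_of_pos (show (0:ℝ) < 2 by norm_num), ← Real.exp_neg, ← Real.exp_add]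
              congr 1
              ring
            have step : ENNReal.ofReal ((R/2)^(2-(n:ℝ))) * (K2 * ENNReal.ofReal ((2*R)^(β+(n:ℝ))))
                = ENNReal.ofReal ((R/2)^(2-(n:ℝ)) * (2*R)^(β+(n:ℝ))) * K2 := by
              rw [ENNReal.ofReal_mul (by positivity)]
              ring
            rw [step, hre2, ENNReal.ofReal_mul (by positivity)]
            ring
    -- Piece 3
    have hT3 : ∫⁻ x in S3, f x
        ≤ (ENNReal.ofReal ((2:ℝ)^((n:ℝ)-2) * (2:ℝ)^(β+2)) * K3) * ENNReal.ofReal (R^(β+2)) := by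
      calc ∫⁻ x in S3, f x
          ≤ ∫⁻ x in S3, ENNReal.ofReal ((2:ℝ)^((n:ℝ)-2)) * ENNReal.ofReal (‖x‖^(2-(n:ℝ)+β)) := by
            refine setLIntegral_mono
              ((Measurable.ennreal_ofReal (by fun_prop)).const_mul _) (fun x hx => ?_)
            rw [hS3, Set.mem_compl_iff, mem_ball_zero_iff, not_lt] at hx
            have hxpos : (0:ℝ) < ‖x‖ := lt_of_lt_of_le (by positivity) hx
            have hx0 : x ≠ 0 := by
              intro h
              rw [h] at hxpos
              simp at hxpos
            have hker : ‖x-y‖^(2-(n:ℝ)) ≤ (‖x‖/2)^(2-(n:ℝ)) := by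
              refine Real.rpow_le_rpow_of_nonpos (by positivity) ?_ (by linarith)
              have h1 : ‖x‖ - ‖y‖ ≤ ‖x - y‖ := norm_sub_norm_le x y
              linarith
            simp only [hf]
            rw [← ENNReal.ofReal_mul (by positivity)]
            refine ENNReal.ofReal_le_ofReal ?_
            calc ‖x-y‖^(2-(n:ℝ)) * (1+‖x‖^2)^(β/2)
                ≤ (‖x‖/2)^(2-(n:ℝ)) * ‖x‖^β :=
                  mul_le_mul hker (hwt x hx0) (by positivity) (by positivity)
              _ = (2:ℝ)^((n:ℝ)-2) * ‖x‖^(2-(n:ℝ)+β) := by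
                  rw [Real.div_rpow (norm_nonneg x) (by norm_num), div_eq_mul_inv,
                    ← Real.rpow_neg (by norm_num : (0:ℝ) ≤ 2)]
                  simp only [Real.rpow_def_of_pos hxpos,
                    Real.rpow_def_of_pos (by norm_num : (0:ℝ) < 2), ← Real.exp_neg, ← Real.exp_add]
                  congr 1
                  ring
        _ = ENNReal.ofReal ((2:ℝ)^((n:ℝ)-2)) * ∫⁻ x in S3, ENNReal.ofReal (‖x‖^(2-(n:ℝ)+β)) :=
            lintegral_const_mul' _ _ ENNReal.ofReal_ne_top
        _ ≤ ENNReal.ofReal ((2:ℝ)^((n:ℝ)-2)) * (K3 * ENNReal.ofReal ((2*R)^((2-(n:ℝ)+β) + n))) :=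
            mul_le_mul' le_rfl (hcompl (2*R) (by positivity))
        _ = (ENNReal.ofReal ((2:ℝ)^((n:ℝ)-2) * (2:ℝ)^(β+2)) * K3) * ENNReal.ofReal (R^(β+2)) := by
            have hre3 : (2:ℝ)^((n:ℝ)-2) * (2*R)^(2-(n:ℝ)+β+(n:ℝ))
                = ((2:ℝ)^((n:ℝ)-2) * (2:ℝ)^(β+2)) * R^(β+2) := by
              rw [Real.mul_rpow (by norm_num) hR0.le]
              simp only [Real.rpow_def_of_pos hR0,
                Real.rpow_def_of_pos (show (0:ℝ) < 2 by norm_num), ← Real.exp_add]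
              congr 1
              ring
            have step : ENNReal.ofReal ((2:ℝ)^((n:ℝ)-2)) * (K3 * ENNReal.ofReal ((2*R)^(2-(n:ℝ)+β+(n:ℝ))))
                = ENNReal.ofReal ((2:ℝ)^((n:ℝ)-2) * (2*R)^(2-(n:ℝ)+β+(n:ℝ))) * K3 := by
              rw [ENNReal.ofReal_mul (by positivity)]
              ring
            rw [step, hre3, ENNReal.ofReal_mul (by positivity)]
            ring
    calc ∫⁻ x, f x = ∫⁻ x in Set.univ, f x := (setLIntegral_univ _).symm
      _ ≤ ∫⁻ x in S1 ∪ (S2 ∪ S3), f x := lintegral_mono_set huniv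
      _ ≤ (∫⁻ x in S1, f x) + (∫⁻ x in S2 ∪ S3, f x) := lintegral_union_le _ _ _
      _ ≤ (∫⁻ x in S1, f x) + ((∫⁻ x in S2, f x) + (∫⁻ x in S3, f x)) :=
          add_le_add le_rfl (lintegral_union_le _ _ _)
      _ ≤ (K1 * ENNReal.ofReal (((2:ℝ)^(β+2))⁻¹)) * ENNReal.ofReal (R^(β+2))
          + ((ENNReal.ofReal ((2:ℝ)^((n:ℝ)-2) * (2:ℝ)^(β+(n:ℝ))) * K2) * ENNReal.ofReal (R^(β+2))
          + (ENNReal.ofReal ((2:ℝ)^((n:ℝ)-2) * (2:ℝ)^(β+2)) * K3) * ENNReal.ofReal (R^(β+2))) :=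
          add_le_add hT1 (add_le_add hT2 hT3)
      _ = Kt * ENNReal.ofReal (R^(β+2)) := by rw [hKt]; ring
      _ = Kt * ENNReal.ofReal ((1+‖y‖^2)^((β+2)/2)) := by rw [hRtarget]
  refine ⟨Kt.toReal + 1, by positivity, fun y => ?_⟩
  refine (main y).trans ?_
  rw [ENNReal.ofReal_mul (by positivity)]
  refine mul_le_mul' ?_ le_rfl
  calc Kt = ENNReal.ofReal Kt.toReal := (ENNReal.ofReal_toReal hKtfin).symm
    _ ≤ ENNReal.ofReal (Kt.toReal + 1) := ENNReal.ofReal_le_ofReal (by linarith)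
end

section
/- Let n ≥ 3 be an integer and let β ∈ ℝ with β < −n. Then there exists a constant C > 0 such that for every y ∈ ℝⁿ, ∫_{ℝⁿ} ‖x − y‖^{2−n} (1 + ‖x‖²)^{β/2} dx ≤ C (1 + ‖y‖²)^{(2−n)/2}. -/
open MeasureTheory Metric Set Real Module
open scoped ENNReal NNReal

section aux

variable {n : ℕ}

local notation "E" n => EuclideanSpace ℝ (Fin n)

-- finiteness of the unit ball integral of ‖x‖^(2-n)
lemma aux_ball_finite (n : ℕ) (hn : 3 ≤ n) :
    (∫⁻ x in ball (0 : EuclideanSpace ℝ (Fin n)) 1,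
      ENNReal.ofReal (‖x‖ ^ (2 - (n : ℝ)))) < ∞ := by
  set s : ℝ := 2 - (n : ℝ) with hs
  have hsneg : s < 0 := by
    have : (3 : ℝ) ≤ (n : ℝ) := by exact_mod_cast hn
    simp only [hs]; linarith
  set μ := (volume : Measure (EuclideanSpace ℝ (Fin n))).restrict (ball 0 1) with hμ
  have h_meas : Measurable fun x : EuclideanSpace ℝ (Fin n) => ‖x‖ ^ s := by fun_prop
  have h_pos : ∀ x : EuclideanSpace ℝ (Fin n), 0 ≤ ‖x‖ ^ s := fun x => by positivity
  rw [show (∫⁻ x in ball (0 : EuclideanSpace ℝ (Fin n)) 1,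
      ENNReal.ofReal (‖x‖ ^ s)) = ∫⁻ x, ENNReal.ofReal (‖x‖ ^ s) ∂μ from rfl]
  rw [lintegral_eq_lintegral_meas_le μ (Filter.Eventually.of_forall h_pos) h_meas.aemeasurable]
  have hsub : ∀ t : ℝ, 0 < t →
      {a : EuclideanSpace ℝ (Fin n) | t ≤ ‖a‖ ^ s} ⊆ closedBall 0 (t ^ s⁻¹) := by
    intro t ht a ha
    simp only [mem_setOf_eq] at ha
    have hna : 0 < ‖a‖ := by
      by_contra h
      push_neg at h
      have : ‖a‖ = 0 := le_antisymm h (norm_nonneg a)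
      rw [this, Real.zero_rpow hsneg.ne] at ha
      linarith
    rw [mem_closedBall_zero_iff]
    exact (Real.le_rpow_inv_iff_of_neg hna ht hsneg).mpr ha
  calc
    ∫⁻ t in Ioi (0:ℝ), μ {a | t ≤ ‖a‖ ^ s}
        ≤ ∫⁻ t in Ioc (0:ℝ) 1 ∪ Ioi 1, μ {a | t ≤ ‖a‖ ^ s} :=
      lintegral_mono_set Ioi_subset_Ioc_union_Ioi
    _ ≤ (∫⁻ t in Ioc (0:ℝ) 1, μ {a | t ≤ ‖a‖ ^ s})
        + ∫⁻ t in Ioi (1:ℝ), μ {a | t ≤ ‖a‖ ^ s} := lintegral_union_le _ _ _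
    _ < ∞ := by
      refine ENNReal.add_lt_top.2 ⟨?_, ?_⟩
      · calc
          (∫⁻ t in Ioc (0:ℝ) 1, μ {a | t ≤ ‖a‖ ^ s})
              ≤ ∫⁻ _ in Ioc (0:ℝ) 1, μ univ := by
            refine setLIntegral_mono' measurableSet_Ioc fun t _ => measure_mono (subset_univ _)
          _ < ∞ := by
            rw [setLIntegral_const]
            have h1 : μ univ < ∞ := by
              rw [hμ, Measure.restrict_apply_univ]
              exact measure_ball_lt_top
            have h2 : volume (Ioc (0:ℝ) 1) < ∞ := by simp
            exact ENNReal.mul_lt_top h1 h2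
      · have hbound : ∀ t ∈ Ioi (1:ℝ), μ {a | t ≤ ‖a‖ ^ s}
            ≤ ENNReal.ofReal (t ^ (s⁻¹ * n)) * volume (ball (0 : EuclideanSpace ℝ (Fin n)) 1) := by
          intro t ht
          have ht0 : (0:ℝ) < t := lt_trans one_pos ht
          calc
            μ {a | t ≤ ‖a‖ ^ s} ≤ volume (closedBall (0 : EuclideanSpace ℝ (Fin n)) (t ^ s⁻¹)) :=
              le_trans (Measure.restrict_le_self _) (measure_mono (hsub t ht0))
            _ = ENNReal.ofReal ((t ^ s⁻¹) ^ finrank ℝ (EuclideanSpace ℝ (Fin n)))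
                  * volume (ball (0 : EuclideanSpace ℝ (Fin n)) 1) :=
              Measure.addHaar_closedBall _ _ (by positivity)
            _ = ENNReal.ofReal (t ^ (s⁻¹ * n)) * volume (ball (0 : EuclideanSpace ℝ (Fin n)) 1) := by
              rw [finrank_euclideanSpace_fin, ← Real.rpow_natCast (t ^ s⁻¹) n,
                ← Real.rpow_mul ht0.le]
        calc
          (∫⁻ t in Ioi (1:ℝ), μ {a | t ≤ ‖a‖ ^ s})
              ≤ ∫⁻ t in Ioi (1:ℝ), ENNReal.ofReal (t ^ (s⁻¹ * n))
                  * volume (ball (0 : EuclideanSpace ℝ (Fin n)) 1) :=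
            setLIntegral_mono' measurableSet_Ioi hbound
          _ = (∫⁻ t in Ioi (1:ℝ), ENNReal.ofReal (t ^ (s⁻¹ * n)))
                * volume (ball (0 : EuclideanSpace ℝ (Fin n)) 1) := by
            rw [lintegral_mul_const' _ _ measure_ball_lt_top.ne]
          _ < ∞ := by
            refine ENNReal.mul_lt_top ?_ measure_ball_lt_top
            refine IntegrableOn.setLIntegral_lt_top ?_
            apply integrableOn_Ioi_rpow_of_lt _ one_pos
            -- s⁻¹ * n < -1
            have hn3 : (3:ℝ) ≤ (n:ℝ) := by exact_mod_cast hn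
            have hne : (2 - (n:ℝ)) < 0 := by linarith
            rw [hs, ← div_eq_inv_mul, div_lt_iff_of_neg hne]
            linarith

-- scaling for the ball integral
lemma aux_ball_scale (n : ℕ) (s : ℝ) {R : ℝ} (hR : 0 < R) :
    (∫⁻ x in ball (0 : EuclideanSpace ℝ (Fin n)) R, ENNReal.ofReal (‖x‖ ^ s))
      = ENNReal.ofReal (R ^ (n : ℝ) * R ^ s) *
        ∫⁻ x in ball (0 : EuclideanSpace ℝ (Fin n)) 1, ENNReal.ofReal (‖x‖ ^ s) := by
  set g : EuclideanSpace ℝ (Fin n) → ℝ≥0∞ := fun x => ENNReal.ofReal (‖x‖ ^ s) with hg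
  have hgm : Measurable g := by fun_prop
  set φ : EuclideanSpace ℝ (Fin n) → ℝ≥0∞ := (ball (0 : EuclideanSpace ℝ (Fin n)) R).indicator g
    with hφ
  have hφm : Measurable φ := hgm.indicator measurableSet_ball
  have hmap := Measure.map_addHaar_smul (volume : Measure (EuclideanSpace ℝ (Fin n))) hR.ne'
  have key : (∫⁻ x, φ (R • x)) = ENNReal.ofReal (|((R ^ finrank ℝ (EuclideanSpace ℝ (Fin n)))⁻¹)|)
      * ∫⁻ x, φ x := by
    rw [← lintegral_map hφm (measurable_const_smul R), hmap, lintegral_smul_measure, smul_eq_mul]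
  have hφR : ∀ x : EuclideanSpace ℝ (Fin n),
      φ (R • x) = ENNReal.ofReal (R ^ s) *
        (ball (0 : EuclideanSpace ℝ (Fin n)) 1).indicator g x := by
    intro x
    have hmem : R • x ∈ ball (0 : EuclideanSpace ℝ (Fin n)) R ↔
        x ∈ ball (0 : EuclideanSpace ℝ (Fin n)) 1 := by
      simp only [mem_ball_zero_iff, norm_smul, Real.norm_eq_abs, abs_of_pos hR]
      constructor
      · intro h; nlinarith [norm_nonneg x]
      · intro h; nlinarith [norm_nonneg x]
    by_cases hx : x ∈ ball (0 : EuclideanSpace ℝ (Fin n)) 1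
    · rw [hφ, indicator_of_mem (hmem.mpr hx), indicator_of_mem hx, hg]
      have : ‖R • x‖ = R * ‖x‖ := by
        rw [norm_smul, Real.norm_eq_abs, abs_of_pos hR]
      simp only
      rw [this, Real.mul_rpow hR.le (norm_nonneg x), ENNReal.ofReal_mul (by positivity)]
    · rw [hφ, indicator_of_notMem (fun h => hx (hmem.mp h)), indicator_of_notMem hx, mul_zero]
  have key2 : (∫⁻ x, φ (R • x)) = ENNReal.ofReal (R ^ s) *
      ∫⁻ x in ball (0 : EuclideanSpace ℝ (Fin n)) 1, g x := by
    simp_rw [hφR]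
    rw [lintegral_const_mul _ (hgm.indicator measurableSet_ball),
      lintegral_indicator measurableSet_ball]
  have hRn : (0:ℝ) < R ^ finrank ℝ (EuclideanSpace ℝ (Fin n)) := by positivity
  have hfin : ∫⁻ x in ball (0 : EuclideanSpace ℝ (Fin n)) R, ENNReal.ofReal (‖x‖ ^ s)
      = ∫⁻ x, φ x := (lintegral_indicator measurableSet_ball _).symm
  rw [hfin]
  have := key.symm.trans key2
  -- this : ofReal |(R^d)⁻¹| * ∫⁻ φ = ofReal (R^s) * ∫ ball1
  have hcancel : ENNReal.ofReal ((R ^ finrank ℝ (EuclideanSpace ℝ (Fin n))) : ℝ)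
      * ENNReal.ofReal (|((R ^ finrank ℝ (EuclideanSpace ℝ (Fin n)))⁻¹)|) = 1 := by
    rw [abs_of_pos (by positivity), ← ENNReal.ofReal_mul hRn.le, mul_inv_cancel₀ hRn.ne']
    simp
  calc
    (∫⁻ x, φ x)
        = (ENNReal.ofReal ((R ^ finrank ℝ (EuclideanSpace ℝ (Fin n))) : ℝ)
            * ENNReal.ofReal (|((R ^ finrank ℝ (EuclideanSpace ℝ (Fin n)))⁻¹)|)) * ∫⁻ x, φ x := by
      rw [hcancel, one_mul]
    _ = ENNReal.ofReal ((R ^ finrank ℝ (EuclideanSpace ℝ (Fin n))) : ℝ)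
          * (ENNReal.ofReal (R ^ s) * ∫⁻ x in ball (0 : EuclideanSpace ℝ (Fin n)) 1, g x) := by
      rw [mul_assoc, this]
    _ = ENNReal.ofReal (R ^ (n : ℝ) * R ^ s) *
          ∫⁻ x in ball (0 : EuclideanSpace ℝ (Fin n)) 1, ENNReal.ofReal (‖x‖ ^ s) := by
      rw [← mul_assoc, ← ENNReal.ofReal_mul (by positivity), finrank_euclideanSpace_fin,
        ← Real.rpow_natCast R n]

-- translation invariance
lemma aux_translate (n : ℕ) (s : ℝ) (y : EuclideanSpace ℝ (Fin n)) {R : ℝ} :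
    (∫⁻ x in ball y R, ENNReal.ofReal (‖x - y‖ ^ s))
      = ∫⁻ x in ball (0 : EuclideanSpace ℝ (Fin n)) R, ENNReal.ofReal (‖x‖ ^ s) := by
  set g : EuclideanSpace ℝ (Fin n) → ℝ≥0∞ := fun x => ENNReal.ofReal (‖x‖ ^ s) with hg
  set F : EuclideanSpace ℝ (Fin n) → ℝ≥0∞ := (ball (0 : EuclideanSpace ℝ (Fin n)) R).indicator g
    with hF
  have h1 : (∫⁻ x in ball y R, ENNReal.ofReal (‖x - y‖ ^ s)) = ∫⁻ x, F (x + -y) := by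
    rw [← lintegral_indicator measurableSet_ball]
    congr 1
    funext x
    by_cases hx : x ∈ ball y R
    · have hx' : x + -y ∈ ball (0 : EuclideanSpace ℝ (Fin n)) R := by
        rw [mem_ball_zero_iff]
        rw [mem_ball_iff_norm] at hx
        simpa [sub_eq_add_neg] using hx
      rw [indicator_of_mem hx, hF, indicator_of_mem hx', hg]
      simp [sub_eq_add_neg]
    · have hx' : x + -y ∉ ball (0 : EuclideanSpace ℝ (Fin n)) R := by
        rw [mem_ball_zero_iff]
        rw [mem_ball_iff_norm] at hx
        simpa [sub_eq_add_neg] using hx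
      rw [indicator_of_notMem hx, hF, indicator_of_notMem hx']
  rw [h1, lintegral_add_right_eq_self F (-y), hF, lintegral_indicator measurableSet_ball]

-- finiteness of the global weight integral
lemma aux_weight_finite (n : ℕ) (β : ℝ) (hβ : β < -(n : ℝ)) :
    (∫⁻ x : EuclideanSpace ℝ (Fin n), ENNReal.ofReal ((1 + ‖x‖ ^ 2) ^ (β / 2))) < ∞ := by
  have hr : (0:ℝ) < -β := by
    have : (0:ℝ) ≤ (n:ℝ) := Nat.cast_nonneg n
    linarith
  have hfin : (finrank ℝ (EuclideanSpace ℝ (Fin n)) : ℝ) < -β := by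
    rw [finrank_euclideanSpace_fin]; linarith
  have hW := finite_integral_one_add_norm
    (μ := (volume : Measure (EuclideanSpace ℝ (Fin n)))) hfin
  have hbd : ∀ x : EuclideanSpace ℝ (Fin n),
      ENNReal.ofReal ((1 + ‖x‖ ^ 2) ^ (β / 2))
        ≤ ENNReal.ofReal ((2:ℝ) ^ (-β / 2)) * ENNReal.ofReal ((1 + ‖x‖) ^ (-(-β))) := by
    intro x
    rw [← ENNReal.ofReal_mul (by positivity)]
    apply ENNReal.ofReal_le_ofReal
    have := rpow_neg_one_add_norm_sq_le x hr
    simpa [neg_neg, neg_div] using this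
  calc
    (∫⁻ x : EuclideanSpace ℝ (Fin n), ENNReal.ofReal ((1 + ‖x‖ ^ 2) ^ (β / 2)))
        ≤ ∫⁻ x : EuclideanSpace ℝ (Fin n), ENNReal.ofReal ((2:ℝ) ^ (-β / 2))
            * ENNReal.ofReal ((1 + ‖x‖) ^ (-(-β))) := lintegral_mono hbd
    _ = ENNReal.ofReal ((2:ℝ) ^ (-β / 2)) *
          ∫⁻ x : EuclideanSpace ℝ (Fin n), ENNReal.ofReal ((1 + ‖x‖) ^ (-(-β))) := by
      rw [lintegral_const_mul]
      fun_prop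
    _ < ∞ := ENNReal.mul_lt_top ENNReal.ofReal_lt_top hW

end aux

open Metric Set Real Module in
/-- Kernel estimate for rapidly decaying weights: for `n ≥ 3` and `β < -n` there is `C > 0`
with `∫ ‖x-y‖^{2-n} (1+‖x‖²)^{β/2} dx ≤ C (1+‖y‖²)^{(2-n)/2}` for all `y ∈ ℝⁿ`. -/
theorem stmt12 (n : ℕ) (hn : 3 ≤ n) (β : ℝ) (hβ : β < -(n : ℝ)) :
    ∃ C : ℝ, 0 < C ∧ ∀ y : EuclideanSpace ℝ (Fin n),
      (∫⁻ x : EuclideanSpace ℝ (Fin n),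
          ENNReal.ofReal (‖x - y‖ ^ (2 - (n : ℝ)) * (1 + ‖x‖ ^ 2) ^ (β / 2)))
        ≤ ENNReal.ofReal (C * (1 + ‖y‖ ^ 2) ^ ((2 - (n : ℝ)) / 2)) := by
  have hn3 : (3:ℝ) ≤ (n:ℝ) := by exact_mod_cast hn
  set s : ℝ := 2 - (n : ℝ) with hs
  have hsneg : s < 0 := by simp only [hs]; linarith
  have hβ2 : β + 2 ≤ s := by simp only [hs]; linarith
  have hβneg : β < 0 := by linarith
  set K := ∫⁻ x in ball (0 : EuclideanSpace ℝ (Fin n)) 1, ENNReal.ofReal (‖x‖ ^ s) with hKdef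
  have hK : K < ∞ := aux_ball_finite n hn
  set W := ∫⁻ x : EuclideanSpace ℝ (Fin n), ENNReal.ofReal ((1 + ‖x‖ ^ 2) ^ (β / 2)) with hWdef
  have hW : W < ∞ := aux_weight_finite n β hβ
  set c1 : ℝ := (2:ℝ) ^ (-(β + 2)) with hc1
  set c2 : ℝ := (2:ℝ) ^ ((n:ℝ) - 2) with hc2
  have hc1pos : 0 < c1 := Real.rpow_pos_of_pos two_pos _
  have hc2pos : 0 < c2 := Real.rpow_pos_of_pos two_pos _
  refine ⟨c1 * K.toReal + c2 * W.toReal + 1, ?_, ?_⟩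
  · have h1 : 0 ≤ c1 * K.toReal := mul_nonneg hc1pos.le ENNReal.toReal_nonneg
    have h2 : 0 ≤ c2 * W.toReal := mul_nonneg hc2pos.le ENNReal.toReal_nonneg
    linarith
  intro y
  set ρ : ℝ := Real.sqrt (1 + ‖y‖ ^ 2) with hρdef
  have hρsq : ρ ^ 2 = 1 + ‖y‖ ^ 2 := Real.sq_sqrt (by positivity)
  have hρnn : 0 ≤ ρ := Real.sqrt_nonneg _
  have hρ1 : 1 ≤ ρ := by nlinarith [norm_nonneg y, sq_nonneg ‖y‖, sq_nonneg (ρ - 1)]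
  have hρ0 : 0 < ρ := lt_of_lt_of_le one_pos hρ1
  set R : ℝ := ρ / 2 with hRdef
  have hR : 0 < R := by positivity
  set f : EuclideanSpace ℝ (Fin n) → ℝ≥0∞ :=
    fun x => ENNReal.ofReal (‖x - y‖ ^ s * (1 + ‖x‖ ^ 2) ^ (β / 2)) with hf
  have hfm : Measurable f := by fun_prop
  have hsplit : (∫⁻ x, f x) = (∫⁻ x in ball y R, f x) + ∫⁻ x in (ball y R)ᶜ, f x :=
    (lintegral_add_compl f measurableSet_ball).symm
  -- near region
  have hnear : (∫⁻ x in ball y R, f x) ≤ ENNReal.ofReal (c1 * ρ ^ s) * K := by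
    have hpt : ∀ x ∈ ball y R, f x
        ≤ ENNReal.ofReal (R ^ β) * ENNReal.ofReal (‖x - y‖ ^ s) := by
      intro x hx
      rw [mem_ball_iff_norm] at hx
      have hnx : ‖y‖ ≤ ‖x‖ + R := by
        have : ‖y‖ - ‖x‖ ≤ ‖y - x‖ := norm_sub_norm_le _ _
        rw [norm_sub_rev] at this
        linarith [le_of_lt hx]
      have hb : R ^ 2 ≤ 1 + ‖x‖ ^ 2 := by
        have h1 : ρ ^ 2 = 1 + ‖y‖ ^ 2 := hρsq
        have h2 : ‖y‖ ^ 2 ≤ (‖x‖ + R) ^ 2 := by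
          apply sq_le_sq'
          · nlinarith [norm_nonneg y, norm_nonneg x, hR.le]
          · exact hnx
        rw [hRdef] at *
        nlinarith [norm_nonneg x, sq_nonneg (ρ - 2 * ‖x‖)]
      have hw : (1 + ‖x‖ ^ 2) ^ (β / 2) ≤ R ^ β := by
        have h3 : (1 + ‖x‖ ^ 2) ^ (β / 2) ≤ (R ^ 2) ^ (β / 2) :=
          Real.rpow_le_rpow_of_nonpos (by positivity) hb (by linarith)
        have h4 : ((R:ℝ) ^ 2) ^ (β / 2) = R ^ β := by
          rw [← Real.rpow_natCast R 2, ← Real.rpow_mul hR.le]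
          congr 1
          push_cast
          ring
        linarith [h3, h4.le, h4.ge]
      rw [hf]
      simp only
      rw [← ENNReal.ofReal_mul (by positivity)]
      apply ENNReal.ofReal_le_ofReal
      rw [mul_comm (R ^ β)]
      exact mul_le_mul_of_nonneg_left hw (Real.rpow_nonneg (norm_nonneg _) _)
    calc
      (∫⁻ x in ball y R, f x)
          ≤ ∫⁻ x in ball y R, ENNReal.ofReal (R ^ β) * ENNReal.ofReal (‖x - y‖ ^ s) :=
        setLIntegral_mono' measurableSet_ball hpt
      _ = ENNReal.ofReal (R ^ β) * ∫⁻ x in ball y R, ENNReal.ofReal (‖x - y‖ ^ s) := by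
        rw [lintegral_const_mul]
        fun_prop
      _ = ENNReal.ofReal (R ^ β) * (ENNReal.ofReal (R ^ (n:ℝ) * R ^ s) * K) := by
        rw [aux_translate n s y, aux_ball_scale n s hR, hKdef]
      _ = ENNReal.ofReal (R ^ β * (R ^ (n:ℝ) * R ^ s)) * K := by
        rw [← mul_assoc, ← ENNReal.ofReal_mul (by positivity)]
      _ ≤ ENNReal.ofReal (c1 * ρ ^ s) * K := by
        apply mul_le_mul_left
        apply ENNReal.ofReal_le_ofReal
        have he : R ^ β * (R ^ (n:ℝ) * R ^ s) = R ^ (β + 2) := by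
          rw [← Real.rpow_add hR, ← Real.rpow_add hR]
          congr 1
          simp only [hs]; ring
        rw [he]
        have h5 : R ^ (β + 2) = ρ ^ (β + 2) * (2:ℝ) ^ (-(β + 2)) := by
          rw [hRdef, Real.div_rpow hρ0.le (by norm_num), Real.rpow_neg (by norm_num), div_eq_mul_inv]
        have h6 : ρ ^ (β + 2) ≤ ρ ^ s := Real.rpow_le_rpow_of_exponent_le hρ1 hβ2
        rw [h5, hc1]
        calc ρ ^ (β + 2) * (2:ℝ) ^ (-(β + 2))
            ≤ ρ ^ s * (2:ℝ) ^ (-(β + 2)) := by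
              apply mul_le_mul_of_nonneg_right h6 (by positivity)
          _ = (2:ℝ) ^ (-(β + 2)) * ρ ^ s := by ring
  -- far region
  have hfar : (∫⁻ x in (ball y R)ᶜ, f x) ≤ ENNReal.ofReal (c2 * ρ ^ s) * W := by
    have hpt : ∀ x ∈ (ball y R)ᶜ, f x
        ≤ ENNReal.ofReal (R ^ s) * ENNReal.ofReal ((1 + ‖x‖ ^ 2) ^ (β / 2)) := by
      intro x hx
      have hd : R ≤ ‖x - y‖ := by
        rw [mem_compl_iff, mem_ball_iff_norm, not_lt] at hx
        exact hx
      have hks : ‖x - y‖ ^ s ≤ R ^ s := Real.rpow_le_rpow_of_nonpos hR hd hsneg.le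
      rw [hf]
      simp only
      rw [← ENNReal.ofReal_mul (Real.rpow_nonneg hR.le _)]
      apply ENNReal.ofReal_le_ofReal
      exact mul_le_mul_of_nonneg_right hks (by positivity)
    calc
      (∫⁻ x in (ball y R)ᶜ, f x)
          ≤ ∫⁻ x in (ball y R)ᶜ, ENNReal.ofReal (R ^ s)
              * ENNReal.ofReal ((1 + ‖x‖ ^ 2) ^ (β / 2)) :=
        setLIntegral_mono' measurableSet_ball.compl hpt
      _ = ENNReal.ofReal (R ^ s) * ∫⁻ x in (ball y R)ᶜ,
            ENNReal.ofReal ((1 + ‖x‖ ^ 2) ^ (β / 2)) := by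
        rw [lintegral_const_mul]
        fun_prop
      _ ≤ ENNReal.ofReal (R ^ s) * W := by
        apply mul_le_mul_right
        rw [hWdef]
        exact setLIntegral_le_lintegral _ _
      _ ≤ ENNReal.ofReal (c2 * ρ ^ s) * W := by
        apply mul_le_mul_left
        apply ENNReal.ofReal_le_ofReal
        rw [hRdef, Real.div_rpow hρ0.le (by norm_num), hc2, div_eq_mul_inv,
          ← Real.rpow_neg (by norm_num : (0:ℝ) ≤ 2)]
        have : -s = (n:ℝ) - 2 := by simp only [hs]; ring
        rw [this]
        exact le_of_eq (mul_comm _ _)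
  -- assemble
  have hKr : K = ENNReal.ofReal K.toReal := (ENNReal.ofReal_toReal hK.ne).symm
  have hWr : W = ENNReal.ofReal W.toReal := (ENNReal.ofReal_toReal hW.ne).symm
  have hρs : ρ ^ s = (1 + ‖y‖ ^ 2) ^ ((2 - (n : ℝ)) / 2) := by
    rw [hρdef, Real.sqrt_eq_rpow, ← Real.rpow_mul (by positivity)]
    congr 1
    rw [hs]; ring
  have hρspos : 0 < ρ ^ s := Real.rpow_pos_of_pos hρ0 _
  calc
    (∫⁻ x : EuclideanSpace ℝ (Fin n),
        ENNReal.ofReal (‖x - y‖ ^ (2 - (n : ℝ)) * (1 + ‖x‖ ^ 2) ^ (β / 2)))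
        = (∫⁻ x in ball y R, f x) + ∫⁻ x in (ball y R)ᶜ, f x := hsplit
    _ ≤ ENNReal.ofReal (c1 * ρ ^ s) * K + ENNReal.ofReal (c2 * ρ ^ s) * W :=
      add_le_add hnear hfar
    _ = ENNReal.ofReal (c1 * ρ ^ s) * ENNReal.ofReal K.toReal
          + ENNReal.ofReal (c2 * ρ ^ s) * ENNReal.ofReal W.toReal := by
      rw [← hKr, ← hWr]
    _ = ENNReal.ofReal (c1 * ρ ^ s * K.toReal) + ENNReal.ofReal (c2 * ρ ^ s * W.toReal) := by
      rw [← ENNReal.ofReal_mul (by positivity), ← ENNReal.ofReal_mul (by positivity)]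
    _ = ENNReal.ofReal (c1 * ρ ^ s * K.toReal + c2 * ρ ^ s * W.toReal) :=
      (ENNReal.ofReal_add
        (mul_nonneg (by positivity) ENNReal.toReal_nonneg)
        (mul_nonneg (by positivity) ENNReal.toReal_nonneg)).symm
    _ ≤ ENNReal.ofReal ((c1 * K.toReal + c2 * W.toReal + 1) * ((1 + ‖y‖ ^ 2) ^ ((2 - (n : ℝ)) / 2))) := by
      apply ENNReal.ofReal_le_ofReal
      rw [← hρs]
      nlinarith [hρspos, ENNReal.toReal_nonneg (a := K), ENNReal.toReal_nonneg (a := W),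
        mul_nonneg hc1pos.le (ENNReal.toReal_nonneg (a := K)),
        mul_nonneg hc2pos.le (ENNReal.toReal_nonneg (a := W))]
end

section
/- Let (𝒢,m) be a finite connected weighted graph with at least two vertices. Then inf{ (∑_{{i,j}∈ℰ} |f(i)−f(j)| m(i,j)) / (inf_{c∈ℝ} ∑_{i∈𝒱} |f(i)−c| m(i)) : f : 𝒱 → ℝ nonconstant } = inf{ m(∂U)/m(U) : ∅ ≠ U ⊆ 𝒱, m(U) ≤ (1/2) m(𝒱) }. -/
open Finset
open scoped Classical
set_option linter.unusedSectionVars false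
set_option linter.unusedVariables false
set_option maxHeartbeats 1000000

section Aux
variable {V : Type*} [Fintype V] [DecidableEq V]

noncomputable def eSum (G : SimpleGraph V) (w : Sym2 V → ℝ) (f : V → ℝ) : ℝ :=
  ∑ e ∈ G.edgeFinset,
    (Sym2.lift ⟨fun i j => |f i - f j|, fun i j => by
        simp only []; rw [abs_sub_comm]⟩ e) * w e

lemma abs_split (a b t : ℝ) :
    |a - b| = |max a t - max b t| + |min a t - min b t| := by
  rcases le_total a b with h | h
  · have hx : max a t ≤ max b t := max_le_max h le_rfl
    have hy : min a t ≤ min b t := min_le_min h le_rfl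
    rw [abs_of_nonpos (sub_nonpos.2 h), abs_of_nonpos (sub_nonpos.2 hx),
      abs_of_nonpos (sub_nonpos.2 hy)]
    have h1 := max_add_min a t
    have h2 := max_add_min b t
    linarith
  · have hx : max b t ≤ max a t := max_le_max h le_rfl
    have hy : min b t ≤ min a t := min_le_min h le_rfl
    rw [abs_of_nonneg (sub_nonneg.2 h), abs_of_nonneg (sub_nonneg.2 hx),
      abs_of_nonneg (sub_nonneg.2 hy)]
    have h1 := max_add_min a t
    have h2 := max_add_min b t
    linarith

lemma abs_eq_max_add (x : ℝ) : |x| = max x 0 + max (-x) 0 := by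
  rcases le_total x 0 with h | h
  · rw [abs_of_nonpos h, max_eq_right h, max_eq_left (neg_nonneg.2 h)]; ring
  · rw [abs_of_nonneg h, max_eq_left h, max_eq_right (neg_nonpos.2 h)]; ring

lemma max_neg_zero' (y : ℝ) : max (-y) 0 = -(min y 0) := by
  rw [← neg_zero, max_neg_neg, neg_zero]

lemma eSum_nonneg (G : SimpleGraph V) (w : Sym2 V → ℝ)
    (hw : ∀ e ∈ G.edgeFinset, 0 ≤ w e) (f : V → ℝ) : 0 ≤ eSum G w f := by
  refine Finset.sum_nonneg fun e he => ?_
  induction e using Sym2.ind with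
  | _ i j => exact mul_nonneg (by simp [abs_nonneg]) (hw _ he)

lemma eSum_add (G : SimpleGraph V) (w : Sym2 V → ℝ) (f g h : V → ℝ)
    (H : ∀ i j, |f i - f j| = |g i - g j| + |h i - h j|) :
    eSum G w f = eSum G w g + eSum G w h := by
  unfold eSum
  rw [← Finset.sum_add_distrib]
  refine Finset.sum_congr rfl fun e _ => ?_
  induction e using Sym2.ind with
  | _ i j => simp only [Sym2.lift_mk]; rw [H i j, add_mul]

lemma eSum_ge_boundary (G : SimpleGraph V) (w : Sym2 V → ℝ)
    (hw : ∀ e ∈ G.edgeFinset, 0 ≤ w e) (f : V → ℝ) (U : Finset V) (c : ℝ) (hc : 0 ≤ c)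
    (H : ∀ i j, i ∈ U → j ∉ U → c ≤ |f i - f j|) :
    c * ∑ e ∈ G.edgeFinset.filter
        (fun e => (∃ i ∈ e, i ∈ U) ∧ ∃ j ∈ e, j ∉ U), w e ≤ eSum G w f := by
  rw [Finset.mul_sum]
  calc ∑ e ∈ G.edgeFinset.filter (fun e => (∃ i ∈ e, i ∈ U) ∧ ∃ j ∈ e, j ∉ U), c * w e
      ≤ ∑ e ∈ G.edgeFinset.filter (fun e => (∃ i ∈ e, i ∈ U) ∧ ∃ j ∈ e, j ∉ U),
          (Sym2.lift ⟨fun i j => |f i - f j|, fun i j => by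
            simp only []; rw [abs_sub_comm]⟩ e) * w e := by
        refine Finset.sum_le_sum fun e he => ?_
        rw [Finset.mem_filter] at he
        obtain ⟨heE, hcond⟩ := he
        revert hcond
        induction e using Sym2.ind with
        | _ i j =>
          intro hcond
          simp only [Sym2.mem_iff] at hcond
          obtain ⟨⟨a, ha, haU⟩, ⟨b, hb, hbU⟩⟩ := hcond
          have hwle : 0 ≤ w s(i, j) := hw _ heE
          refine mul_le_mul_of_nonneg_right ?_ hwle
          rw [Sym2.lift_mk]
          rcases ha with rfl | rfl <;> rcases hb with rfl | rfl
          · exact absurd haU hbU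
          · exact H a b haU hbU
          · show c ≤ |f b - f a|
            rw [abs_sub_comm]; exact H a b haU hbU
          · exact absurd haU hbU
    _ ≤ eSum G w f := by
        refine Finset.sum_le_sum_of_subset_of_nonneg (Finset.filter_subset _ _)
          fun e he _ => ?_
        induction e using Sym2.ind with
        | _ i j => exact mul_nonneg (by simp [abs_nonneg]) (hw _ he)

lemma exists_median [Nonempty V] (m : V → ℝ) (hm : ∀ i, 0 < m i) (f : V → ℝ) :
    ∃ c : ℝ, (∑ i ∈ Finset.univ.filter (fun i => c < f i), m i) ≤ (1 / 2) * ∑ i : V, m i ∧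
      (∑ i ∈ Finset.univ.filter (fun i => f i < c), m i) ≤ (1 / 2) * ∑ i : V, m i := by
  set M : ℝ := ∑ i : V, m i with hM
  have hM0 : 0 < M := Finset.sum_pos (fun i _ => hm i) univ_nonempty
  set T : Finset ℝ := Finset.image f Finset.univ with hT
  have hTne : T.Nonempty := univ_nonempty.image f
  set P : Finset ℝ := T.filter
    (fun t => (1 / 2) * M ≤ ∑ i ∈ Finset.univ.filter (fun i => f i ≤ t), m i) with hP
  have hPne : P.Nonempty := by
    refine ⟨T.max' hTne, ?_⟩
    rw [hP, Finset.mem_filter]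
    refine ⟨T.max'_mem hTne, ?_⟩
    have : Finset.univ.filter (fun i => f i ≤ T.max' hTne) = Finset.univ := by
      ext i
      simp only [Finset.mem_filter, Finset.mem_univ, true_and, iff_true]
      exact Finset.le_max' _ _ (by rw [hT, Finset.mem_image]; exact ⟨i, Finset.mem_univ _, rfl⟩)
    rw [this]; linarith
  set c : ℝ := P.min' hPne with hc
  have hcP : c ∈ P := P.min'_mem hPne
  have hcT : c ∈ T := (Finset.mem_filter.1 hcP).1
  have hcle : (1 / 2) * M ≤ ∑ i ∈ Finset.univ.filter (fun i => f i ≤ c), m i :=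
    (Finset.mem_filter.1 hcP).2
  refine ⟨c, ?_, ?_⟩
  · have hsplit : (∑ i ∈ Finset.univ.filter (fun i => f i ≤ c), m i)
        + (∑ i ∈ Finset.univ.filter (fun i => c < f i), m i) = M := by
      rw [hM, ← Finset.sum_filter_add_sum_filter_not Finset.univ (fun i => f i ≤ c) m]
      congr 1
      refine Finset.sum_congr ?_ fun _ _ => rfl
      ext i; simp [not_le]
    linarith
  · by_cases hne : (T.filter (fun x => x < c)).Nonempty
    · set s : ℝ := (T.filter (fun x => x < c)).max' hne with hs
      have hsmem := (T.filter (fun x => x < c)).max'_mem hne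
      rw [Finset.mem_filter] at hsmem
      have hsc : s < c := hsmem.2
      have heq : Finset.univ.filter (fun i => f i < c)
          = Finset.univ.filter (fun i => f i ≤ s) := by
        ext i
        simp only [Finset.mem_filter, Finset.mem_univ, true_and]
        constructor
        · intro hi
          refine Finset.le_max' _ _ ?_
          rw [Finset.mem_filter]
          exact ⟨by rw [hT, Finset.mem_image]; exact ⟨i, Finset.mem_univ _, rfl⟩, hi⟩
        · intro hi; linarith
      by_contra hcon
      push_neg at hcon
      have hsP : s ∈ P := by
        rw [hP, Finset.mem_filter]
        refine ⟨hsmem.1, ?_⟩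
        rw [← heq]
        linarith
      exact absurd (Finset.min'_le _ _ hsP) (not_le.2 hsc)
    · have heq : Finset.univ.filter (fun i => f i < c) = ∅ := by
        rw [Finset.filter_eq_empty_iff]
        intro i _
        intro hi
        refine hne ⟨f i, ?_⟩
        rw [Finset.mem_filter]
        exact ⟨by rw [hT, Finset.mem_image]; exact ⟨i, Finset.mem_univ _, rfl⟩, hi⟩
      rw [heq, Finset.sum_empty]
      linarith

lemma coarea (G : SimpleGraph V) (w : Sym2 V → ℝ) (m : V → ℝ) (hm : ∀ i, 0 < m i)
    (hw : ∀ e ∈ G.edgeFinset, 0 ≤ w e) [Nonempty V] (h : ℝ) (hh : 0 ≤ h)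
    (hB : ∀ U : Finset V, U.Nonempty → (∑ i ∈ U, m i) ≤ (1 / 2) * ∑ i : V, m i →
      h * ∑ i ∈ U, m i ≤ ∑ e ∈ G.edgeFinset.filter
        (fun e => (∃ i ∈ e, i ∈ U) ∧ ∃ j ∈ e, j ∉ U), w e) :
    ∀ (n : ℕ) (u : V → ℝ), (Finset.image u Finset.univ).card ≤ n →
      (∀ i, 0 ≤ u i) →
      (∑ i ∈ Finset.univ.filter (fun i => u i ≠ 0), m i) ≤ (1 / 2) * ∑ i : V, m i →
      h * ∑ i, u i * m i ≤ eSum G w u := by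
  have hM : 0 < ∑ i : V, m i := Finset.sum_pos (fun i _ => hm i) univ_nonempty
  intro n
  induction n with
  | zero =>
    intro u hcard hu hhalf
    exfalso
    have h1 : 0 < (Finset.image u Finset.univ).card :=
      Finset.card_pos.2 ((univ_nonempty).image u)
    omega
  | succ n ih =>
    intro u hcard hu hhalf
    by_cases hzero : ∀ i, u i = 0
    · have h1 : (∑ i, u i * m i) = 0 := by
        simp [hzero]
      rw [h1, mul_zero]
      exact eSum_nonneg G w hw u
    · push_neg at hzero
      obtain ⟨i₀, hi₀⟩ := hzero
      -- there exists a zero of u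
      have hz : ∃ j, u j = 0 := by
        by_contra hc
        push_neg at hc
        have : Finset.univ.filter (fun i => u i ≠ 0) = Finset.univ := by
          ext i; simp [hc i]
        rw [this] at hhalf
        linarith
      set T : Finset ℝ := Finset.image u Finset.univ with hT
      have hTne : T.Nonempty := univ_nonempty.image u
      set t : ℝ := T.max' hTne with ht
      obtain ⟨j₀, hj₀⟩ := hz
      have h0T : (0 : ℝ) ∈ T := by
        rw [hT, Finset.mem_image]; exact ⟨j₀, Finset.mem_univ _, hj₀⟩
      have hi₀T : u i₀ ∈ T := by
        rw [hT, Finset.mem_image]; exact ⟨i₀, Finset.mem_univ _, rfl⟩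
      have ht0 : 0 < t := by
        have h1 : u i₀ ≤ t := Finset.le_max' _ _ hi₀T
        have h2 := (hu i₀).lt_of_ne (Ne.symm hi₀)
        linarith
      set S : Finset ℝ := T.filter (fun x => x < t) with hS
      have hSne : S.Nonempty := ⟨0, by rw [hS, Finset.mem_filter]; exact ⟨h0T, ht0⟩⟩
      set s : ℝ := S.max' hSne with hs
      have hsS : s ∈ S := S.max'_mem hSne
      have hs0 : 0 ≤ s := Finset.le_max' _ _ (by rw [hS, Finset.mem_filter]; exact ⟨h0T, ht0⟩)
      have hst : s < t := (Finset.mem_filter.1 hsS).2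
      have hsT : s ∈ T := (Finset.mem_filter.1 hsS).1
      -- values of u are ≤ t; values < t are ≤ s
      have hut : ∀ i, u i ≤ t := fun i =>
        Finset.le_max' _ _ (by rw [hT, Finset.mem_image]; exact ⟨i, Finset.mem_univ _, rfl⟩)
      have hus : ∀ i, u i < t → u i ≤ s := by
        intro i hi
        refine Finset.le_max' _ _ ?_
        rw [hS, Finset.mem_filter]
        exact ⟨by rw [hT, Finset.mem_image]; exact ⟨i, Finset.mem_univ _, rfl⟩, hi⟩
      set U : Finset V := Finset.univ.filter (fun i => s < u i) with hU
      have hmemU : ∀ i, i ∈ U ↔ u i = t := by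
        intro i
        rw [hU, Finset.mem_filter]
        constructor
        · rintro ⟨-, hi⟩
          by_contra hne
          exact absurd (hus i ((hut i).lt_of_ne hne)) (not_le.2 hi)
        · intro hi; exact ⟨Finset.mem_univ _, by rw [hi]; exact hst⟩
      have hUne : U.Nonempty := by
        have : t ∈ T := T.max'_mem hTne
        rw [hT, Finset.mem_image] at this
        obtain ⟨i, -, hi⟩ := this
        exact ⟨i, (hmemU i).2 hi⟩
      have hUsub : U ⊆ Finset.univ.filter (fun i => u i ≠ 0) := by
        intro i hi
        rw [hU, Finset.mem_filter] at hi
        rw [Finset.mem_filter]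
        exact ⟨Finset.mem_univ _, by intro h0; rw [h0] at hi; exact absurd hi.2 (not_lt.2 hs0)⟩
      have hUhalf : (∑ i ∈ U, m i) ≤ (1 / 2) * ∑ i : V, m i :=
        le_trans (Finset.sum_le_sum_of_subset_of_nonneg hUsub fun i _ _ => (hm i).le) hhalf
      set u' : V → ℝ := fun i => min (u i) s with hu'
      -- sum decomposition
      have hsum : ∑ i, u i * m i = (∑ i, u' i * m i) + (t - s) * ∑ i ∈ U, m i := by
        have key : ∀ i, u i * m i = u' i * m i + (if s < u i then (t - s) * m i else 0) := by
          intro i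
          by_cases hi : s < u i
          · have hit : u i = t := (hmemU i).1
              (by rw [hU, Finset.mem_filter]; exact ⟨Finset.mem_univ _, hi⟩)
            rw [if_pos hi]
            have hmin : u' i = s := min_eq_right (le_of_lt (hit ▸ hst))
            rw [hmin, hit]; ring
          · rw [if_neg hi]
            have hmin : u' i = u i := min_eq_left (not_lt.1 hi)
            rw [hmin]; ring
        calc ∑ i, u i * m i
            = ∑ i, (u' i * m i + if s < u i then (t - s) * m i else 0) :=
              Finset.sum_congr rfl fun i _ => key i
          _ = (∑ i, u' i * m i) + ∑ i, (if s < u i then (t - s) * m i else 0) :=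
              Finset.sum_add_distrib
          _ = (∑ i, u' i * m i) + (t - s) * ∑ i ∈ U, m i := by
              rw [hU, ← Finset.sum_filter, Finset.mul_sum]
      -- edge decomposition
      have hedge : eSum G w u = eSum G w (fun i => max (u i) s) + eSum G w u' :=
        eSum_add G w u _ _ fun i j => abs_split (u i) (u j) s
      have hbd : (t - s) * ∑ e ∈ G.edgeFinset.filter
            (fun e => (∃ i ∈ e, i ∈ U) ∧ ∃ j ∈ e, j ∉ U), w e
          ≤ eSum G w (fun i => max (u i) s) := by
        refine eSum_ge_boundary G w hw _ U (t - s) (by linarith) fun i j hi hj => ?_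
        have hit : u i = t := (hmemU i).1 hi
        have hjs : u j ≤ s := by
          rw [hU, Finset.mem_filter] at hj
          push_neg at hj
          exact hj (Finset.mem_univ _)
        have h1 : max (u i) s = t := by rw [hit]; exact max_eq_left hst.le
        have h2 : max (u j) s = s := max_eq_right hjs
        rw [h1, h2, abs_of_nonneg (by linarith)]
      -- induction hypothesis for u'
      have himg : Finset.image u' Finset.univ ⊆ T.erase t := by
        intro x hx
        rw [Finset.mem_image] at hx
        obtain ⟨i, -, hi⟩ := hx
        rcases le_total (u i) s with hle | hle
        · have hx1 : x = u i := by rw [← hi, hu']; exact min_eq_left hle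
          rw [Finset.mem_erase]
          constructor
          · rw [hx1]; intro hc; exact absurd hst (by rw [← hc]; exact not_lt.2 hle)
          · rw [hx1, hT, Finset.mem_image]; exact ⟨i, Finset.mem_univ _, rfl⟩
        · have hx1 : x = s := by rw [← hi, hu']; exact min_eq_right hle
          rw [Finset.mem_erase, hx1]
          exact ⟨ne_of_lt hst, hsT⟩
      have hcard' : (Finset.image u' Finset.univ).card ≤ n := by
        have h1 := Finset.card_le_card himg
        have h2 : (T.erase t).card = T.card - 1 :=
          Finset.card_erase_of_mem (T.max'_mem hTne)
        have h3 : 1 ≤ T.card := Finset.card_pos.2 hTne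
        omega
      have hu'0 : ∀ i, 0 ≤ u' i := fun i => le_min (hu i) hs0
      have hhalf' : (∑ i ∈ Finset.univ.filter (fun i => u' i ≠ 0), m i)
          ≤ (1 / 2) * ∑ i : V, m i := by
        refine le_trans (Finset.sum_le_sum_of_subset_of_nonneg ?_
          fun i _ _ => (hm i).le) hhalf
        intro i hi
        rw [Finset.mem_filter] at hi ⊢
        refine ⟨Finset.mem_univ _, fun h0 => hi.2 ?_⟩
        rw [hu']
        simp only [h0]
        exact min_eq_left hs0
      have h1 : h * ∑ i, u' i * m i ≤ eSum G w u' := ih u' hcard' hu'0 hhalf'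
      have h2 : h * ((t - s) * ∑ i ∈ U, m i)
          ≤ eSum G w (fun i => max (u i) s) := by
        calc h * ((t - s) * ∑ i ∈ U, m i) = (t - s) * (h * ∑ i ∈ U, m i) := by ring
          _ ≤ (t - s) * ∑ e ∈ G.edgeFinset.filter
                (fun e => (∃ i ∈ e, i ∈ U) ∧ ∃ j ∈ e, j ∉ U), w e :=
              mul_le_mul_of_nonneg_left (hB U hUne hUhalf) (by linarith)
          _ ≤ _ := hbd
      rw [hsum, hedge, mul_add]
      linarith

lemma indicator_iInf [Nonempty V] (m : V → ℝ) (hm : ∀ i, 0 < m i) (U : Finset V)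
    (hUne : U.Nonempty) (hUhalf : (∑ i ∈ U, m i) ≤ (1 / 2) * ∑ i : V, m i) :
    (⨅ c : ℝ, ∑ i : V, |(if i ∈ U then (1:ℝ) else 0) - c| * m i) = ∑ i ∈ U, m i := by
  set M : ℝ := ∑ i : V, m i with hM
  set mU : ℝ := ∑ i ∈ U, m i with hmU
  have hcompl : (∑ i ∈ Uᶜ, m i) = M - mU := by
    have := Finset.sum_add_sum_compl U m
    rw [← hmU, ← hM] at this
    linarith
  have hsplit : ∀ c : ℝ, (∑ i : V, |(if i ∈ U then (1:ℝ) else 0) - c| * m i)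
      = |1 - c| * mU + |c| * (M - mU) := by
    intro c
    rw [← Finset.sum_add_sum_compl U (fun i => |(if i ∈ U then (1:ℝ) else 0) - c| * m i)]
    congr 1
    · rw [hmU, Finset.mul_sum]
      refine Finset.sum_congr rfl fun i hi => ?_
      rw [if_pos hi]
    · rw [← hcompl, Finset.mul_sum]
      refine Finset.sum_congr rfl fun i hi => ?_
      rw [if_neg (Finset.mem_compl.1 hi), zero_sub, abs_neg]
  have hmU0 : 0 < mU := Finset.sum_pos (fun i _ => hm i) hUne
  have hbdd : BddBelow (Set.range fun c : ℝ =>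
      ∑ i : V, |(if i ∈ U then (1:ℝ) else 0) - c| * m i) := by
    refine ⟨0, ?_⟩
    rintro y ⟨c, rfl⟩
    exact Finset.sum_nonneg fun i _ => mul_nonneg (abs_nonneg _) (hm i).le
  apply le_antisymm
  · refine le_trans (ciInf_le hbdd 0) ?_
    rw [hsplit 0]
    norm_num
  · refine le_ciInf fun c => ?_
    rw [hsplit c]
    have h0 : (1:ℝ) ≤ |1 - c| + |c| := by
      have := abs_add_le (1 - c) c
      simpa using this
    have h2 : mU ≤ M - mU := by
      rw [hM]; rw [hmU] at hUhalf ⊢; linarith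
    calc mU = 1 * mU := (one_mul _).symm
      _ ≤ (|1 - c| + |c|) * mU := mul_le_mul_of_nonneg_right h0 hmU0.le
      _ = |1 - c| * mU + |c| * mU := add_mul _ _ _
      _ ≤ |1 - c| * mU + |c| * (M - mU) :=
          add_le_add_right (mul_le_mul_of_nonneg_left h2 (abs_nonneg c)) _

end Aux

/-- The functional (`L¹`) form of the Cheeger constant of a finite connected weighted
graph equals the isoperimetric infimum over subsets of at most half the total weight. -/
theorem stmt15 {V : Type*} [Fintype V] [DecidableEq V]
    (G : SimpleGraph V) (hG : G.Connected) (hV : 1 < Fintype.card V)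
    (m : V → ℝ) (hm : ∀ i, 0 < m i)
    (w : Sym2 V → ℝ) (hw : ∀ e ∈ G.edgeSet, 0 < w e) :
    sInf {x : ℝ | ∃ f : V → ℝ, (∃ i j, f i ≠ f j) ∧
        x = (∑ e ∈ G.edgeFinset,
              (Sym2.lift ⟨fun i j => |f i - f j|, fun i j => by
                  simp only []; rw [abs_sub_comm]⟩ e) * w e) /
            (⨅ c : ℝ, ∑ i : V, |f i - c| * m i)}
      = sInf {x : ℝ | ∃ U : Finset V, U.Nonempty ∧
          (∑ i ∈ U, m i) ≤ (1 / 2) * ∑ i : V, m i ∧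
          x = (∑ e ∈ G.edgeFinset.filter
                  (fun e => (∃ i ∈ e, i ∈ U) ∧ ∃ j ∈ e, j ∉ U), w e) /
              (∑ i ∈ U, m i)} := by
  have hNe : Nonempty V := Fintype.card_pos_iff.mp (by omega)
  have hM0 : (0:ℝ) < ∑ i : V, m i := Finset.sum_pos (fun i _ => hm i) univ_nonempty
  have hw' : ∀ e ∈ G.edgeFinset, 0 ≤ w e :=
    fun e he => (hw e (SimpleGraph.mem_edgeFinset.1 he)).le
  set A := {x : ℝ | ∃ f : V → ℝ, (∃ i j, f i ≠ f j) ∧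
      x = (∑ e ∈ G.edgeFinset,
            (Sym2.lift ⟨fun i j => |f i - f j|, fun i j => by
                simp only []; rw [abs_sub_comm]⟩ e) * w e) /
          (⨅ c : ℝ, ∑ i : V, |f i - c| * m i)} with hA
  set B := {x : ℝ | ∃ U : Finset V, U.Nonempty ∧
      (∑ i ∈ U, m i) ≤ (1 / 2) * ∑ i : V, m i ∧
      x = (∑ e ∈ G.edgeFinset.filter
              (fun e => (∃ i ∈ e, i ∈ U) ∧ ∃ j ∈ e, j ∉ U), w e) /
          (∑ i ∈ U, m i)} with hB
  -- B ⊆ A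
  have hsub : B ⊆ A := by
    rintro x ⟨U, hUne, hUhalf, rfl⟩
    have hUc : ∃ j, j ∉ U := by
      by_contra hc
      push_neg at hc
      have : U = Finset.univ := Finset.eq_univ_iff_forall.2 hc
      rw [this] at hUhalf
      linarith
    have hUne' := hUne
    obtain ⟨i₀, hi₀⟩ := hUne'
    obtain ⟨j₀, hj₀⟩ := hUc
    have hnum : eSum G w (fun i => if i ∈ U then (1:ℝ) else 0)
        = ∑ e ∈ G.edgeFinset.filter
        (fun e => (∃ i ∈ e, i ∈ U) ∧ ∃ j ∈ e, j ∉ U), w e := by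
      rw [eSum, Finset.sum_filter]
      refine Finset.sum_congr rfl fun e he => ?_
      induction e using Sym2.ind with
      | _ i j =>
        rw [Sym2.lift_mk]
        by_cases hi : i ∈ U <;> by_cases hj : j ∈ U <;>
          simp [hi, hj, Sym2.mem_iff]
    have hdenom := indicator_iInf m hm U hUne hUhalf
    refine ⟨fun i => if i ∈ U then (1:ℝ) else 0, ⟨i₀, j₀, by simp [hi₀, hj₀]⟩, ?_⟩
    change _ = eSum G w (fun i => if i ∈ U then (1:ℝ) else 0)
        / (⨅ c : ℝ, ∑ i : V, |(if i ∈ U then (1:ℝ) else 0) - c| * m i)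
    rw [hnum, hdenom]
  -- B is nonempty
  have hBne : B.Nonempty := by
    obtain ⟨i₀, -, hi₀⟩ := Finset.exists_min_image Finset.univ m univ_nonempty
    obtain ⟨j₀, hj₀⟩ := Fintype.exists_ne_of_one_lt_card hV i₀
    have hpair : m i₀ + m j₀ ≤ ∑ i : V, m i := by
      have hsub2 : ({i₀, j₀} : Finset V) ⊆ Finset.univ := Finset.subset_univ _
      have := Finset.sum_le_sum_of_subset_of_nonneg hsub2
        (fun i _ _ => (hm i).le)
      rwa [Finset.sum_pair (Ne.symm hj₀)] at this
    have hhalf : (∑ i ∈ ({i₀} : Finset V), m i) ≤ (1 / 2) * ∑ i : V, m i := by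
      rw [Finset.sum_singleton]
      have := hi₀ j₀ (Finset.mem_univ _)
      linarith
    exact ⟨_, ⟨{i₀}, Finset.singleton_nonempty _, hhalf, rfl⟩⟩
  -- elements of B are nonneg
  have hB0 : ∀ y ∈ B, (0:ℝ) ≤ y := by
    rintro y ⟨U, hUne, hUhalf, rfl⟩
    refine div_nonneg (Finset.sum_nonneg fun e he => hw' e (Finset.mem_filter.1 he).1)
      (Finset.sum_nonneg fun i _ => (hm i).le)
  -- elements of A are nonneg
  have hA0 : ∀ y ∈ A, (0:ℝ) ≤ y := by
    rintro y ⟨f, -, rfl⟩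
    refine div_nonneg ?_ ?_
    · exact eSum_nonneg G w hw' f
    · refine le_ciInf fun c => ?_
      exact Finset.sum_nonneg fun i _ => mul_nonneg (abs_nonneg _) (hm i).le
  set h : ℝ := sInf B with hh
  have hh0 : 0 ≤ h := le_csInf hBne hB0
  have hBle : ∀ U : Finset V, U.Nonempty → (∑ i ∈ U, m i) ≤ (1 / 2) * ∑ i : V, m i →
      h * ∑ i ∈ U, m i ≤ ∑ e ∈ G.edgeFinset.filter
        (fun e => (∃ i ∈ e, i ∈ U) ∧ ∃ j ∈ e, j ∉ U), w e := by
    intro U hUne hUhalf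
    have hmU : (0:ℝ) < ∑ i ∈ U, m i := Finset.sum_pos (fun i _ => hm i) hUne
    have hmem : (∑ e ∈ G.edgeFinset.filter
        (fun e => (∃ i ∈ e, i ∈ U) ∧ ∃ j ∈ e, j ∉ U), w e) / (∑ i ∈ U, m i) ∈ B :=
      ⟨U, hUne, hUhalf, rfl⟩
    have := csInf_le ⟨0, hB0⟩ hmem
    rw [← hh] at this
    calc h * ∑ i ∈ U, m i ≤ ((∑ e ∈ G.edgeFinset.filter
          (fun e => (∃ i ∈ e, i ∈ U) ∧ ∃ j ∈ e, j ∉ U), w e) / (∑ i ∈ U, m i))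
            * ∑ i ∈ U, m i := mul_le_mul_of_nonneg_right this hmU.le
      _ = _ := div_mul_cancel₀ _ hmU.ne'
  -- every element of A is ≥ h
  have hAge : ∀ x ∈ A, h ≤ x := by
    rintro x ⟨f, ⟨i₁, j₁, hij⟩, rfl⟩
    obtain ⟨c, hc1, hc2⟩ := exists_median m hm f
    set u₁ : V → ℝ := fun i => max (f i - c) 0 with hu₁
    set u₂ : V → ℝ := fun i => max (c - f i) 0 with hu₂
    have hkey1 : eSum G w f = eSum G w u₁ + eSum G w u₂ := by
      refine eSum_add G w f u₁ u₂ fun i j => ?_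
      have h1 : f i - f j = (f i - c) - (f j - c) := by ring
      rw [h1, abs_split (f i - c) (f j - c) 0]
      congr 1
      have e1 : u₂ i = -(min (f i - c) 0) := by
        show max (c - f i) 0 = -(min (f i - c) 0)
        rw [show c - f i = -(f i - c) by ring, max_neg_zero']
      have e2 : u₂ j = -(min (f j - c) 0) := by
        show max (c - f j) 0 = -(min (f j - c) 0)
        rw [show c - f j = -(f j - c) by ring, max_neg_zero']
      rw [e1, e2]
      rw [show -(min (f i - c) 0) - -(min (f j - c) 0)
        = -((min (f i - c) 0) - (min (f j - c) 0)) by ring, abs_neg]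
    have hkey2 : (∑ i : V, |f i - c| * m i)
        = (∑ i, u₁ i * m i) + ∑ i, u₂ i * m i := by
      rw [← Finset.sum_add_distrib]
      refine Finset.sum_congr rfl fun i _ => ?_
      rw [abs_eq_max_add (f i - c)]
      have h2 : u₂ i = max (-(f i - c)) 0 := by
        show max (c - f i) 0 = max (-(f i - c)) 0
        rw [show -(f i - c) = c - f i by ring]
      rw [h2]
      ring
    have hhalf1 : (∑ i ∈ Finset.univ.filter (fun i => u₁ i ≠ 0), m i)
        ≤ (1 / 2) * ∑ i : V, m i := by
      refine le_trans (le_of_eq (Finset.sum_congr ?_ fun _ _ => rfl)) hc1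
      refine Finset.filter_congr fun i _ => ?_
      show max (f i - c) 0 ≠ 0 ↔ c < f i
      constructor
      · intro hne
        by_contra hle
        push_neg at hle
        exact hne (max_eq_right (by linarith))
      · intro hlt h0
        rw [max_eq_left (by linarith)] at h0
        linarith
    have hhalf2 : (∑ i ∈ Finset.univ.filter (fun i => u₂ i ≠ 0), m i)
        ≤ (1 / 2) * ∑ i : V, m i := by
      refine le_trans (le_of_eq (Finset.sum_congr ?_ fun _ _ => rfl)) hc2
      refine Finset.filter_congr fun i _ => ?_
      show max (c - f i) 0 ≠ 0 ↔ f i < c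
      constructor
      · intro hne
        by_contra hle
        push_neg at hle
        exact hne (max_eq_right (by linarith))
      · intro hlt h0
        rw [max_eq_left (by linarith)] at h0
        linarith
    have hco1 : h * ∑ i, u₁ i * m i ≤ eSum G w u₁ :=
      coarea G w m hm hw' h hh0 hBle _ u₁ le_rfl
        (fun i => le_max_right _ _) hhalf1
    have hco2 : h * ∑ i, u₂ i * m i ≤ eSum G w u₂ :=
      coarea G w m hm hw' h hh0 hBle _ u₂ le_rfl
        (fun i => le_max_right _ _) hhalf2
    have hnum : h * (∑ i : V, |f i - c| * m i) ≤ eSum G w f := by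
      rw [hkey2, hkey1, mul_add]
      exact add_le_add hco1 hco2
    -- denominator facts
    have hbdd : BddBelow (Set.range fun c : ℝ => ∑ i : V, |f i - c| * m i) := by
      refine ⟨0, ?_⟩
      rintro y ⟨c', rfl⟩
      exact Finset.sum_nonneg fun i _ => mul_nonneg (abs_nonneg _) (hm i).le
    have hDle : (⨅ c' : ℝ, ∑ i : V, |f i - c'| * m i) ≤ ∑ i : V, |f i - c| * m i :=
      ciInf_le hbdd c
    have hij' : i₁ ≠ j₁ := fun hcon => hij (by rw [hcon])
    set δ : ℝ := min (m i₁) (m j₁) * |f i₁ - f j₁| with hδ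
    have hδ0 : 0 < δ :=
      mul_pos (lt_min (hm i₁) (hm j₁)) (abs_pos.2 (sub_ne_zero.2 hij))
    have hDpos : 0 < ⨅ c' : ℝ, ∑ i : V, |f i - c'| * m i := by
      refine lt_of_lt_of_le hδ0 (le_ciInf fun c' => ?_)
      have htri : |f i₁ - f j₁| ≤ |f i₁ - c'| + |f j₁ - c'| := by
        have := abs_sub_le (f i₁) c' (f j₁)
        rwa [abs_sub_comm c' (f j₁)] at this
      have hpair : |f i₁ - c'| * m i₁ + |f j₁ - c'| * m j₁
          ≤ ∑ i : V, |f i - c'| * m i := by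
        have hs : ({i₁, j₁} : Finset V) ⊆ Finset.univ := Finset.subset_univ _
        have := Finset.sum_le_sum_of_subset_of_nonneg
          (f := fun i => |f i - c'| * m i) hs
          (fun i _ _ => mul_nonneg (abs_nonneg _) (hm i).le)
        rwa [Finset.sum_pair hij'] at this
      have hmin : min (m i₁) (m j₁) * |f i₁ - f j₁|
          ≤ |f i₁ - c'| * m i₁ + |f j₁ - c'| * m j₁ := by
        calc min (m i₁) (m j₁) * |f i₁ - f j₁|
            ≤ min (m i₁) (m j₁) * (|f i₁ - c'| + |f j₁ - c'|) :=
              mul_le_mul_of_nonneg_left htri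
                (le_min (hm i₁).le (hm j₁).le)
          _ = min (m i₁) (m j₁) * |f i₁ - c'| + min (m i₁) (m j₁) * |f j₁ - c'| := by
              ring
          _ ≤ |f i₁ - c'| * m i₁ + |f j₁ - c'| * m j₁ := by
              refine add_le_add ?_ ?_
              · rw [mul_comm]
                exact mul_le_mul_of_nonneg_left (min_le_left _ _) (abs_nonneg _)
              · rw [mul_comm]
                exact mul_le_mul_of_nonneg_left (min_le_right _ _) (abs_nonneg _)
      exact le_trans hmin hpair
    change h ≤ eSum G w f / (⨅ c' : ℝ, ∑ i : V, |f i - c'| * m i)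
    rw [le_div_iff₀ hDpos]
    calc h * (⨅ c' : ℝ, ∑ i : V, |f i - c'| * m i)
        ≤ h * ∑ i : V, |f i - c| * m i := mul_le_mul_of_nonneg_left hDle hh0
      _ ≤ eSum G w f := hnum
  have hAne : A.Nonempty := hBne.mono hsub
  refine le_antisymm (csInf_le_csInf ⟨0, hA0⟩ hBne hsub) (le_csInf hAne hAge)
end
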